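/- arXiv:1907.09969 — 10 statements merged into one kernel-verified Lean document; each statement's English description precedes it below -/
import Mathlib

section
/- Let K be a field, B a K-algebra generated by a set G, and C a K-algebra with a finite linearly independent subset δ_b ⊆ C chosen for each b ∈ G. Then there exists a K-algebra A and an algebra morphism h : B → C ⊗ A such that for every b ∈ G, h(b) lies in the span of elements c ⊗ a with c ∈ δ_b and a ∈ A, and (A, h) is universal: for any algebra A' and algebra morphism h' : B → C ⊗ A' with h'(b) in the span of {c ⊗ a' : c ∈ δ_b, a' ∈ A'} for all b ∈ G, there is a unique algebra morphism α : A → A' with h' = (id_C ⊗ α) ∘ h. -/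
open TensorProduct

noncomputable section StmtAux

universe u v w

variable {K : Type u} [Field K] {C : Type v} [AddCommGroup C] [Module K C]

/-- The equivalence `C ⊗ M ≃ (ι →₀ M)` coming from a basis of `C`. -/
noncomputable def tEquiv (K : Type u) (C : Type v) [Field K] [AddCommGroup C] [Module K C]
    (M : Type w) [AddCommGroup M] [Module K M] :
    C ⊗[K] M ≃ₗ[K] (Module.Basis.ofVectorSpaceIndex K C →₀ M) :=
  letI : DecidableEq (Module.Basis.ofVectorSpaceIndex K C) := Classical.decEq _
  (TensorProduct.congr (Module.Basis.ofVectorSpace K C).repr (LinearEquiv.refl K M)).trans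
    (TensorProduct.finsuppScalarLeft K M _)

/-- The `i`-th component of an element of `C ⊗ M` w.r.t. a basis of `C`. -/
noncomputable def tComp (K : Type u) (C : Type v) [Field K] [AddCommGroup C] [Module K C]
    (M : Type w) [AddCommGroup M] [Module K M] (i : Module.Basis.ofVectorSpaceIndex K C) :
    C ⊗[K] M →ₗ[K] M :=
  (Finsupp.lapply i) ∘ₗ (tEquiv K C M).toLinearMap

lemma tComp_tmul (M : Type w) [AddCommGroup M] [Module K M] (i : Module.Basis.ofVectorSpaceIndex K C)
    (c : C) (m : M) :
    tComp K C M i (c ⊗ₜ[K] m) = (Module.Basis.ofVectorSpace K C).repr c i • m := by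
  simp [tComp, tEquiv, TensorProduct.finsuppScalarLeft_apply_tmul_apply]

lemma eq_zero_of_tComp (M : Type w) [AddCommGroup M] [Module K M] (x : C ⊗[K] M)
    (h : ∀ i, tComp K C M i x = 0) : x = 0 := by
  have : tEquiv K C M x = 0 := by
    ext i
    simpa [tComp] using h i
  simpa using (tEquiv K C M).injective (by simpa using this)

lemma tComp_algMap {C : Type v} [Ring C] [Algebra K C] {M : Type w} {M' : Type*} [Ring M]
    [Algebra K M] [Ring M'] [Algebra K M'] (g : M →ₐ[K] M') (i : Module.Basis.ofVectorSpaceIndex K C)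
    (x : C ⊗[K] M) :
    tComp K C M' i (Algebra.TensorProduct.map (AlgHom.id K C) g x) = g (tComp K C M i x) := by
  induction x using TensorProduct.induction_on with
  | zero => simp
  | tmul c m => simp [tComp_tmul, Algebra.TensorProduct.map_tmul]
  | add x y hx hy => simp [map_add, hx, hy]

lemma tmul_sum_eq_zero {ι : Type*} [Fintype ι] {f : ι → C} (hf : LinearIndependent K f)
    {M : Type w} [AddCommGroup M] [Module K M] (m : ι → M)
    (h : ∑ j, f j ⊗ₜ[K] m j = (0 : C ⊗[K] M)) (i : ι) : m i = 0 := by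
  classical
  have hs : LinearIndepOn K id (Set.range f) := hf.linearIndepOn_id
  let b := Module.Basis.extend hs
  have hmem : ∀ j, f j ∈ hs.extend (Set.subset_univ _) :=
    fun j => hs.subset_extend _ (Set.mem_range_self j)
  let lam : C ⊗[K] M →ₗ[K] M :=
    (TensorProduct.lid K M).toLinearMap ∘ₗ
      (LinearMap.rTensor M (b.coord ⟨f i, hmem i⟩))
  have h0 := congrArg lam h
  simp only [map_sum, map_zero] at h0
  have hco : ∀ j, lam (f j ⊗ₜ[K] m j) = (if i = j then (1:K) else 0) • m j := by
    intro j
    have hb : b ⟨f j, hmem j⟩ = f j := Module.Basis.extend_apply_self hs ⟨f j, hmem j⟩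
    have : b.coord ⟨f i, hmem i⟩ (f j) = if i = j then 1 else 0 := by
      rw [← hb, Module.Basis.coord_apply, Module.Basis.repr_self, Finsupp.single_apply]
      congr 1
      simp only [eq_iff_iff]
      constructor
      · intro hh
        exact hf.injective (by simpa using (Subtype.ext_iff.mp hh).symm)
      · rintro rfl; rfl
    simp [lam, this]
  rw [Finset.sum_congr rfl (fun j _ => hco j)] at h0
  simpa using h0

/-- Lift an algebra morphism along a surjective algebra morphism whose kernel it kills. -/
noncomputable def liftAlgOfSurjective {K D B T : Type*} [CommSemiring K] [Ring D] [Ring B]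
    [Ring T] [Algebra K D] [Algebra K B] [Algebra K T] (q : D →ₐ[K] B)
    (hq : Function.Surjective q) (g : D →ₐ[K] T) (hker : ∀ x, q x = 0 → g x = 0) :
    B →ₐ[K] T :=
  have hgker : RingHom.ker q.toRingHom ≤ RingHom.ker g.toRingHom := fun x hx => by
    rw [RingHom.mem_ker] at hx ⊢
    exact hker x hx
  have hq' : Function.Surjective q.toRingHom := hq
  let h₀ : B →+* T := RingHom.liftOfRightInverse q.toRingHom (Function.surjInv hq')
    (Function.rightInverse_surjInv hq') ⟨g.toRingHom, hgker⟩
  have hh₀ : ∀ x, h₀ (q x) = g x :=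
    fun x => RingHom.liftOfRightInverse_comp_apply _ _ _ _ x
  { toRingHom := h₀
    commutes' := by
      intro k
      have h1 : algebraMap K B k = q (algebraMap K D k) := (q.commutes k).symm
      show h₀ (algebraMap K B k) = algebraMap K T k
      rw [h1, hh₀, g.commutes] }

lemma liftAlgOfSurjective_comp_apply {K D B T : Type*} [CommSemiring K] [Ring D] [Ring B]
    [Ring T] [Algebra K D] [Algebra K B] [Algebra K T] (q : D →ₐ[K] B)
    (hq : Function.Surjective q) (g : D →ₐ[K] T) (hker : ∀ x, q x = 0 → g x = 0) (x : D) :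
    liftAlgOfSurjective q hq g hker (q x) = g x :=
  RingHom.liftOfRightInverse_comp_apply _ _ _ _ x

set_option maxHeartbeats 1000000 in
/-- Universe-polymorphic version of `stmt_0`. -/
theorem stmt_0_aux.{r} {K : Type} [Field K] {B C : Type} [Ring B] [Algebra K B]
    [Ring C] [Algebra K C]
    (G : Set B) (hG : Algebra.adjoin K G = ⊤)
    (δ : G → Finset C)
    (hδ : ∀ b : G, LinearIndependent K (fun c : (δ b : Finset C) => (c : C))) :
    ∃ (A : AlgCat.{r} K) (h : B →ₐ[K] C ⊗[K] A),
      (∀ b : G, h b ∈ Submodule.span K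
        {x : C ⊗[K] A | ∃ c ∈ δ b, ∃ a : A, x = c ⊗ₜ[K] a}) ∧
      (∀ (A' : Type) [Ring A'] [Algebra K A'] (h' : B →ₐ[K] C ⊗[K] A'),
        (∀ b : G, h' b ∈ Submodule.span K
          {x : C ⊗[K] A' | ∃ c ∈ δ b, ∃ a : A', x = c ⊗ₜ[K] a}) →
        ∃! α : A →ₐ[K] A',
          h' = (Algebra.TensorProduct.map (AlgHom.id K C) α).comp h) := by
  classical
  -- the index type of generator coefficients
  let ιt : Type r := ULift.{r} ((b : G) × {c : C // c ∈ δ b})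
  let F := FreeAlgebra K ιt
  -- presentation of `B`
  let q : FreeAlgebra K ↥G →ₐ[K] B := FreeAlgebra.lift K (fun b => (b : B))
  have hquι : ∀ b : G, q (FreeAlgebra.ι K b) = (b : B) := fun b => FreeAlgebra.lift_ι_apply _ _
  have hq : Function.Surjective q := by
    rw [← AlgHom.range_eq_top, eq_top_iff, ← hG]
    apply Algebra.adjoin_le
    rintro x hx
    exact ⟨FreeAlgebra.ι K ⟨x, hx⟩, hquι ⟨x, hx⟩⟩
  -- the tautological map into `C ⊗ F`
  let φ : FreeAlgebra K ↥G →ₐ[K] C ⊗[K] F :=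
    FreeAlgebra.lift K
      (fun b => ∑ c ∈ (δ b).attach, (c : C) ⊗ₜ[K] FreeAlgebra.ι K (ULift.up ⟨b, c⟩ : ιt))
  have hφι : ∀ b : G, φ (FreeAlgebra.ι K b)
      = ∑ c ∈ (δ b).attach, (c : C) ⊗ₜ[K] FreeAlgebra.ι K (ULift.up ⟨b, c⟩ : ιt) :=
    fun b => FreeAlgebra.lift_ι_apply _ _
  -- quotient by the relations forced by the kernel of `q`
  let rel : F → F → Prop := fun x y => y = 0 ∧ ∃ r, q r = 0 ∧ ∃ i, x = tComp K C F i (φ r)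
  let A₀ := RingQuot rel
  let mk : F →ₐ[K] A₀ := RingQuot.mkAlgHom K rel
  let φ' : FreeAlgebra K ↥G →ₐ[K] C ⊗[K] A₀ :=
    (Algebra.TensorProduct.map (AlgHom.id K C) mk).comp φ
  have hker : ∀ r, q r = 0 → φ' r = 0 := by
    intro r hr
    apply eq_zero_of_tComp
    intro i
    have h1 : φ' r = Algebra.TensorProduct.map (AlgHom.id K C) mk (φ r) := rfl
    rw [h1, tComp_algMap]
    have h2 : rel (tComp K C F i (φ r)) 0 := ⟨rfl, r, hr, i, rfl⟩
    calc mk (tComp K C F i (φ r)) = mk 0 := RingQuot.mkAlgHom_rel K h2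
    _ = 0 := map_zero _
  let h : B →ₐ[K] C ⊗[K] A₀ := liftAlgOfSurjective (T := C ⊗[K] A₀) q hq φ' hker
  have hh : ∀ x, h (q x) = φ' x :=
    fun x => liftAlgOfSurjective_comp_apply (T := C ⊗[K] A₀) q hq φ' hker x
  have hhb : ∀ b : G, h (b : B)
      = ∑ c ∈ (δ b).attach, (c : C) ⊗ₜ[K] mk (FreeAlgebra.ι K (ULift.up ⟨b, c⟩ : ιt)) := by
    intro b
    rw [← hquι b, hh]
    show Algebra.TensorProduct.map (AlgHom.id K C) mk (φ (FreeAlgebra.ι K b)) = _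
    rw [hφι, map_sum]
    simp [Algebra.TensorProduct.map_tmul]
  refine ⟨AlgCat.of K A₀, h, ?_, ?_⟩
  · intro b
    rw [hhb b]
    apply Submodule.sum_mem
    intro c _
    exact Submodule.subset_span
      ⟨(c : C), c.2, mk (FreeAlgebra.ι K (ULift.up ⟨b, c⟩ : ιt)), rfl⟩
  · intro A' _ _ h' hspan
    -- choose coefficients of `h' b`
    have hrep : ∀ b : G, ∃ m : {c : C // c ∈ δ b} → A',
        h' b = ∑ c ∈ (δ b).attach, (c : C) ⊗ₜ[K] m c := by
      intro b
      refine Submodule.span_induction ?_ ?_ ?_ ?_ (hspan b)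
      · rintro x ⟨c, hc, a, rfl⟩
        refine ⟨fun c' => if c' = ⟨c, hc⟩ then a else 0, ?_⟩
        rw [Finset.sum_eq_single_of_mem (⟨c, hc⟩ : {c : C // c ∈ δ b})
          (Finset.mem_attach _ _)]
        · simp
        · intro c' _ hne
          simp [hne]
      · exact ⟨0, by simp⟩
      · rintro x y _ _ ⟨mx, hx⟩ ⟨my, hy⟩
        refine ⟨mx + my, ?_⟩
        rw [hx, hy, ← Finset.sum_add_distrib]
        simp [TensorProduct.tmul_add]
      · rintro k x _ ⟨mx, hx⟩
        refine ⟨k • mx, ?_⟩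
        rw [hx, Finset.smul_sum]
        simp [TensorProduct.tmul_smul]
    choose m hm using hrep
    let β : F →ₐ[K] A' := FreeAlgebra.lift K (fun i : ιt => m i.down.1 i.down.2)
    have hβι : ∀ i : ιt, β (FreeAlgebra.ι K i) = m i.down.1 i.down.2 :=
      fun i => FreeAlgebra.lift_ι_apply _ _
    let ψ : FreeAlgebra K ↥G →ₐ[K] C ⊗[K] A' :=
      (Algebra.TensorProduct.map (AlgHom.id K C) β).comp φ
    have hψ : ψ = h'.comp q := by
      apply FreeAlgebra.hom_ext
      funext b
      show Algebra.TensorProduct.map (AlgHom.id K C) β (φ (FreeAlgebra.ι K b))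
        = h' (q (FreeAlgebra.ι K b))
      rw [hφι, map_sum, hquι, hm b]
      apply Finset.sum_congr rfl
      intro c _
      rw [Algebra.TensorProduct.map_tmul, hβι]
      rfl
    have wrel : ∀ ⦃x y : F⦄, rel x y → β x = β y := by
      rintro x y ⟨rfl, r, hr, i, rfl⟩
      rw [map_zero]
      calc β (tComp K C F i (φ r))
          = tComp K C A' i (Algebra.TensorProduct.map (AlgHom.id K C) β (φ r)) :=
            (tComp_algMap β i (φ r)).symm
        _ = tComp K C A' i (h' (q r)) := by
            have h5 : Algebra.TensorProduct.map (AlgHom.id K C) β (φ r) = ψ r := rfl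
            rw [h5, hψ]; rfl
        _ = 0 := by rw [hr, map_zero, map_zero]
    let α : A₀ →ₐ[K] A' := RingQuot.liftAlgHom K ⟨β, wrel⟩
    have hαmk : ∀ x, α (mk x) = β x :=
      fun x => RingQuot.liftAlgHom_mkAlgHom_apply _ _ _ _
    refine ⟨α, ?_, ?_⟩
    · apply AlgHom.ext
      intro bb
      obtain ⟨x, rfl⟩ := hq bb
      rw [AlgHom.comp_apply, hh]
      have h1 : h' (q x) = ψ x := by rw [hψ]; rfl
      rw [h1]
      show Algebra.TensorProduct.map (AlgHom.id K C) β (φ x)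
        = Algebra.TensorProduct.map (AlgHom.id K C) α
            (Algebra.TensorProduct.map (AlgHom.id K C) mk (φ x))
      induction φ x using TensorProduct.induction_on with
      | zero => simp
      | tmul c f =>
        rw [Algebra.TensorProduct.map_tmul, Algebra.TensorProduct.map_tmul,
          Algebra.TensorProduct.map_tmul, hαmk]
        rfl
      | add u v hu hv => rw [map_add, map_add, map_add, hu, hv]
    · intro α' hα'
      have key : ∀ i : ιt, α' (mk (FreeAlgebra.ι K i)) = m i.down.1 i.down.2 := by
        rintro ⟨⟨b, c⟩⟩
        have h1 : h' (b : B)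
            = ∑ c' ∈ (δ b).attach,
                (c' : C) ⊗ₜ[K] α' (mk (FreeAlgebra.ι K (ULift.up ⟨b, c'⟩ : ιt))) := by
          rw [hα', AlgHom.comp_apply, hhb b, map_sum]
          apply Finset.sum_congr rfl
          intro c' _
          rw [Algebra.TensorProduct.map_tmul]
          rfl
        have h3 : ∑ c' ∈ (δ b).attach,
            (c' : C) ⊗ₜ[K] (α' (mk (FreeAlgebra.ι K (ULift.up ⟨b, c'⟩ : ιt))) - m b c') = 0 := by
          rw [Finset.sum_congr rfl (fun c' _ => TensorProduct.tmul_sub _ _ _),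
            Finset.sum_sub_distrib, ← h1, ← hm b, sub_self]
        have h4 : ∀ c' : {c : C // c ∈ δ b},
            α' (mk (FreeAlgebra.ι K (ULift.up ⟨b, c'⟩ : ιt))) - m b c' = 0 := by
          apply tmul_sum_eq_zero (hδ b)
          rw [Finset.univ_eq_attach]
          exact h3
        exact sub_eq_zero.mp (h4 c)
      have hcomp : α'.comp mk = α.comp mk := by
        apply FreeAlgebra.hom_ext
        funext i
        show α' (mk (FreeAlgebra.ι K i)) = α (mk (FreeAlgebra.ι K i))
        rw [key i, hαmk, hβι]
      apply AlgHom.ext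
      intro a
      obtain ⟨x, rfl⟩ := RingQuot.mkAlgHom_surjective K rel a
      exact AlgHom.congr_fun hcomp x

end StmtAux

/-- existence of the universal algebra `A` with morphism
`h : B → C ⊗ A` such that `h b` lies in the span of `δ_b ⊗ A` for every
generator `b ∈ G`, universal among such pairs. -/
theorem stmt_0 {K : Type} [Field K] {B C : Type} [Ring B] [Algebra K B]
    [Ring C] [Algebra K C]
    (G : Set B) (hG : Algebra.adjoin K G = ⊤)
    (δ : G → Finset C)
    (hδ : ∀ b : G, LinearIndependent K (fun c : (δ b : Finset C) => (c : C))) :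
    ∃ (A : AlgCat K) (h : B →ₐ[K] C ⊗[K] A),
      (∀ b : G, h b ∈ Submodule.span K
        {x : C ⊗[K] A | ∃ c ∈ δ b, ∃ a : A, x = c ⊗ₜ[K] a}) ∧
      (∀ (A' : Type) [Ring A'] [Algebra K A'] (h' : B →ₐ[K] C ⊗[K] A'),
        (∀ b : G, h' b ∈ Submodule.span K
          {x : C ⊗[K] A' | ∃ c ∈ δ b, ∃ a : A', x = c ⊗ₜ[K] a}) →
        ∃! α : A →ₐ[K] A',
          h' = (Algebra.TensorProduct.map (AlgHom.id K C) α).comp h) :=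
  stmt_0_aux G hG δ hδ
end

section
/- Let K be a field, B a K-algebra, and C a finite-dimensional K-algebra. Then there exists a K-algebra A(B,C) together with an algebra morphism h : B → C ⊗ A(B,C) such that for every K-algebra E and every algebra morphism e : B → C ⊗ E there is a unique algebra morphism ê : A(B,C) → E satisfying e = (id_C ⊗ ê) ∘ h. -/
open TensorProduct

section Stmt1Aux

variable (K : Type) [Field K] (B C : Type) [Ring B] [Algebra K B]
    [Ring C] [Algebra K C] [FiniteDimensional K C]

noncomputable def stmtBasis : Module.Basis (Fin (Module.finrank K C)) K C :=
  Module.finBasis K C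

/-- generators: one for each (basis index of C, element of B) -/
abbrev stmtF := FreeAlgebra K (Fin (Module.finrank K C) × B)

noncomputable def stmtX (i : Fin (Module.finrank K C)) (b : B) : stmtF K B C :=
  FreeAlgebra.ι K (i, b)

/-- The relations forcing `b ↦ ∑ i, c i ⊗ X i b` to be an algebra hom. -/
inductive stmtRel : stmtF K B C → stmtF K B C → Prop
  | add (i : Fin (Module.finrank K C)) (b b' : B) :
      stmtRel (stmtX K B C i (b + b')) (stmtX K B C i b + stmtX K B C i b')
  | smul (i : Fin (Module.finrank K C)) (k : K) (b : B) :
      stmtRel (stmtX K B C i (k • b)) (k • stmtX K B C i b)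
  | one (i : Fin (Module.finrank K C)) :
      stmtRel (stmtX K B C i 1)
        (algebraMap K (stmtF K B C) ((stmtBasis K C).repr 1 i))
  | mul (i : Fin (Module.finrank K C)) (b b' : B) :
      stmtRel (stmtX K B C i (b * b'))
        (∑ j, ∑ k, (stmtBasis K C).repr (stmtBasis K C j * stmtBasis K C k) i •
          (stmtX K B C j b * stmtX K B C k b'))

noncomputable abbrev stmtA := RingQuot (stmtRel K B C)

noncomputable def stmtMk : stmtF K B C →ₐ[K] stmtA K B C := RingQuot.mkAlgHom K (stmtRel K B C)

variable (E : Type) [Ring E] [Algebra K E]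

/-- the `i`-th coordinate map `C ⊗ E → E` w.r.t. the chosen basis of `C`. -/
noncomputable def stmtCoord (i : Fin (Module.finrank K C)) : C ⊗[K] E →ₗ[K] E :=
  (TensorProduct.lid K E).toLinearMap.comp
    (LinearMap.rTensor E ((stmtBasis K C).coord i))

lemma stmtCoord_tmul (i : Fin (Module.finrank K C)) (c : C) (x : E) :
    stmtCoord K C E i (c ⊗ₜ[K] x) = (stmtBasis K C).repr c i • x := by
  simp [stmtCoord, Module.Basis.coord_apply, TensorProduct.smul_tmul']

lemma stmt_sum_coord (z : C ⊗[K] E) :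
    ∑ i, stmtBasis K C i ⊗ₜ[K] stmtCoord K C E i z = z := by
  induction z with
  | zero => simp
  | tmul c x =>
      simp only [stmtCoord_tmul, TensorProduct.tmul_smul, TensorProduct.smul_tmul',
        ← TensorProduct.sum_tmul, Module.Basis.sum_repr]
  | add z w hz hw =>
      simp only [map_add, TensorProduct.tmul_add]
      rw [Finset.sum_add_distrib, hz, hw]

lemma stmtCoord_sum (i : Fin (Module.finrank K C)) (t : Fin (Module.finrank K C) → E) :
    stmtCoord K C E i (∑ j, stmtBasis K C j ⊗ₜ[K] t j) = t i := by
  rw [map_sum]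
  simp only [stmtCoord_tmul, Module.Basis.repr_self]
  rw [Finset.sum_eq_single i] <;> simp +contextual [Finsupp.single_apply]

lemma stmtCoord_mul (i : Fin (Module.finrank K C)) (z w : C ⊗[K] E) :
    stmtCoord K C E i (z * w) =
      ∑ j, ∑ k, (stmtBasis K C).repr (stmtBasis K C j * stmtBasis K C k) i •
        (stmtCoord K C E j z * stmtCoord K C E k w) := by
  conv_lhs => rw [← stmt_sum_coord K C E z, ← stmt_sum_coord K C E w]
  rw [Finset.sum_mul_sum, map_sum]
  refine Finset.sum_congr rfl fun j _ => ?_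
  rw [map_sum]
  refine Finset.sum_congr rfl fun k _ => ?_
  rw [Algebra.TensorProduct.tmul_mul_tmul, stmtCoord_tmul]

end Stmt1Aux


section Stmt1Aux2

variable (K : Type) [Field K] (B C : Type) [Ring B] [Algebra K B]
    [Ring C] [Algebra K C] [FiniteDimensional K C]

lemma stmt_coord_ext {E : Type} [Ring E] [Algebra K E] {z w : C ⊗[K] E}
    (h : ∀ i, stmtCoord K C E i z = stmtCoord K C E i w) : z = w := by
  rw [← stmt_sum_coord K C E z, ← stmt_sum_coord K C E w]
  exact Finset.sum_congr rfl fun i _ => by rw [h i]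

noncomputable def stmtY (i : Fin (Module.finrank K C)) (b : B) : stmtA K B C :=
  stmtMk K B C (stmtX K B C i b)

lemma stmtY_add (i : Fin (Module.finrank K C)) (b b' : B) :
    stmtY K B C i (b + b') = stmtY K B C i b + stmtY K B C i b' := by
  rw [stmtY, stmtMk, RingQuot.mkAlgHom_rel K (stmtRel.add i b b'), map_add]; rfl

lemma stmtY_smul (i : Fin (Module.finrank K C)) (k : K) (b : B) :
    stmtY K B C i (k • b) = k • stmtY K B C i b := by
  rw [stmtY, stmtMk, RingQuot.mkAlgHom_rel K (stmtRel.smul i k b), map_smul]; rfl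

lemma stmtY_one (i : Fin (Module.finrank K C)) :
    stmtY K B C i 1 = algebraMap K (stmtA K B C) ((stmtBasis K C).repr 1 i) := by
  rw [stmtY, stmtMk, RingQuot.mkAlgHom_rel K (stmtRel.one i), AlgHom.commutes]

lemma stmtY_mul (i : Fin (Module.finrank K C)) (b b' : B) :
    stmtY K B C i (b * b') =
      ∑ j, ∑ k, (stmtBasis K C).repr (stmtBasis K C j * stmtBasis K C k) i •
        (stmtY K B C j b * stmtY K B C k b') := by
  rw [stmtY, stmtMk, RingQuot.mkAlgHom_rel K (stmtRel.mul i b b'), map_sum]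
  refine Finset.sum_congr rfl fun j _ => ?_
  rw [map_sum]
  refine Finset.sum_congr rfl fun k _ => ?_
  rw [map_smul, map_mul (RingQuot.mkAlgHom K (stmtRel K B C))]; rfl

noncomputable def stmtHLin : B →ₗ[K] C ⊗[K] stmtA K B C where
  toFun b := ∑ i, stmtBasis K C i ⊗ₜ[K] stmtY K B C i b
  map_add' b b' := by
    simp only [stmtY_add, TensorProduct.tmul_add]
    rw [Finset.sum_add_distrib]
  map_smul' k b := by
    simp only [stmtY_smul, TensorProduct.tmul_smul, RingHom.id_apply, Finset.smul_sum]

lemma stmtCoord_stmtHLin (i : Fin (Module.finrank K C)) (b : B) :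
    stmtCoord K C (stmtA K B C) i (stmtHLin K B C b) = stmtY K B C i b :=
  stmtCoord_sum K C (stmtA K B C) i _

noncomputable def stmtH : B →ₐ[K] C ⊗[K] stmtA K B C :=
  AlgHom.ofLinearMap (stmtHLin K B C)
    (by
      refine stmt_coord_ext K C fun i => ?_
      rw [stmtCoord_stmtHLin, stmtY_one, Algebra.TensorProduct.one_def, stmtCoord_tmul,
        Algebra.algebraMap_eq_smul_one])
    (by
      intro x y
      refine stmt_coord_ext K C fun i => ?_
      rw [stmtCoord_stmtHLin, stmtY_mul, stmtCoord_mul]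
      exact Finset.sum_congr rfl fun j _ => Finset.sum_congr rfl fun k _ => by
        rw [stmtCoord_stmtHLin, stmtCoord_stmtHLin])

lemma stmtH_apply (b : B) :
    stmtH K B C b = ∑ i, stmtBasis K C i ⊗ₜ[K] stmtY K B C i b := rfl

end Stmt1Aux2


universe u

section Stmt1Aux3

variable (K : Type) [Field K] (B C : Type) [Ring B] [Algebra K B]
    [Ring C] [Algebra K C] [FiniteDimensional K C]

def stmtUlift (A : Type) [Ring A] [Algebra K A] : ULift.{u} A ≃ₐ[K] A :=
  { ULift.ringEquiv with commutes' := fun _ => rfl }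

lemma stmt_univ (E : Type) [Ring E] [Algebra K E] (e : B →ₐ[K] C ⊗[K] E) :
    ∃! eHat : stmtA K B C →ₐ[K] E,
      e = (Algebra.TensorProduct.map (AlgHom.id K C) eHat).comp (stmtH K B C) := by
  have resp : ∀ ⦃x y⦄, stmtRel K B C x y →
      (FreeAlgebra.lift K fun p : Fin (Module.finrank K C) × B =>
        stmtCoord K C E p.1 (e p.2)) x =
      (FreeAlgebra.lift K fun p : Fin (Module.finrank K C) × B =>
        stmtCoord K C E p.1 (e p.2)) y := by
    intro x y hxy
    induction hxy with
    | add i b b' => simp [stmtX, map_add]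
    | smul i k b => simp [stmtX, map_smul]
    | one i =>
        rw [stmtX, FreeAlgebra.lift_ι_apply, AlgHom.commutes, map_one e,
          Algebra.TensorProduct.one_def, stmtCoord_tmul, Algebra.algebraMap_eq_smul_one]
    | mul i b b' =>
        simp only [stmtX, FreeAlgebra.lift_ι_apply, map_mul, stmtCoord_mul, map_sum, map_smul]
  refine ⟨RingQuot.liftAlgHom K ⟨_, resp⟩, ?_, ?_⟩
  · ext b
    have hY : ∀ i, (RingQuot.liftAlgHom K ⟨_, resp⟩) (stmtY K B C i b) =
        stmtCoord K C E i (e b) := by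
      intro i
      rw [stmtY, stmtMk, RingQuot.liftAlgHom_mkAlgHom_apply, stmtX, FreeAlgebra.lift_ι_apply]
    simp only [AlgHom.coe_comp, Function.comp_apply, stmtH_apply, map_sum,
      Algebra.TensorProduct.map_tmul, AlgHom.coe_id, id_eq, hY]
    exact (stmt_sum_coord K C E (e b)).symm
  · intro g hg
    have key : ∀ i b, g (stmtY K B C i b) = stmtCoord K C E i (e b) := by
      intro i b
      have hb : e b = ∑ j, stmtBasis K C j ⊗ₜ[K] g (stmtY K B C j b) := by
        conv_lhs => rw [hg]
        simp [stmtH_apply, Algebra.TensorProduct.map_tmul]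
      rw [hb, stmtCoord_sum]
    refine RingQuot.ringQuot_ext' K _ _ (FreeAlgebra.hom_ext (funext fun p => ?_))
    simp only [AlgHom.coe_comp, Function.comp_apply, FreeAlgebra.lift_ι_apply]
    have hk := key p.1 p.2
    rw [stmtY, stmtMk] at hk
    rw [RingQuot.liftAlgHom_mkAlgHom_apply, FreeAlgebra.lift_ι_apply]
    exact hk

end Stmt1Aux3

/-- for any `K`-algebra `B` and finite-dimensional `K`-algebra `C`
there is a universal algebra `A(B,C)` with `h : B → C ⊗ A(B,C)` through which
every algebra morphism `B → C ⊗ E` factors uniquely. -/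
theorem stmt_1 {K : Type} [Field K] (B C : Type) [Ring B] [Algebra K B]
    [Ring C] [Algebra K C] [FiniteDimensional K C] :
    ∃ (A : AlgCat K) (h : B →ₐ[K] C ⊗[K] A),
      ∀ (E : Type) [Ring E] [Algebra K E] (e : B →ₐ[K] C ⊗[K] E),
        ∃! eHat : A →ₐ[K] E,
          e = (Algebra.TensorProduct.map (AlgHom.id K C) eHat).comp h := by
  classical
  refine ⟨AlgCat.of K (ULift (stmtA K B C)),
    (Algebra.TensorProduct.map (AlgHom.id K C)
      (stmtUlift K (stmtA K B C)).symm.toAlgHom).comp (stmtH K B C), ?_⟩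
  intro E _ _ e
  obtain ⟨f, hf, hu⟩ := stmt_univ K B C E e
  set φ := stmtUlift K (stmtA K B C)
  refine ⟨f.comp φ.toAlgHom, ?_, ?_⟩
  · show e = (Algebra.TensorProduct.map (AlgHom.id K C) (f.comp φ.toAlgHom)).comp
      ((Algebra.TensorProduct.map (AlgHom.id K C) φ.symm.toAlgHom).comp (stmtH K B C))
    rw [← AlgHom.comp_assoc, ← Algebra.TensorProduct.map_id_comp]
    have : (f.comp φ.toAlgHom).comp φ.symm.toAlgHom = f :=
      AlgHom.ext fun x => by simp
    rw [this]
    exact hf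
  · intro g hg
    rw [← AlgHom.comp_assoc, ← Algebra.TensorProduct.map_id_comp] at hg
    have h2 := hu (g.comp φ.symm.toAlgHom) hg
    refine AlgHom.ext fun x => ?_
    rw [AlgHom.comp_apply, ← h2]
    simp
end

section
/- Let B, C be K-algebras with B finitely generated by a finite set G, and let V be a K-vector space basis of C. For each finite subset L ⊆ V let A_L be the universal algebra with morphism φ_L : B → C ⊗ A_L such that φ_L(b) lies in span{c ⊗ a : c ∈ L} for all b ∈ G. For L₁ ⊆ L₂ let A^{L₂}_{L₁} : A_{L₂} → A_{L₁} be the induced morphism. Then the resulting pro-algebra A = {A_L} indexed by finite subsets of V, together with the pro-morphism h = [{φ_L}] : B → C ⊗ A, satisfies: for every pro-algebra E and pro-morphism e : B → C ⊗ E there is a unique pro-morphism ê : A → E with e = (id ⊗ ê) ∘ h. -/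
/-!
Every element of `C ⊗ E` lies in the span of the `V i ⊗ a` with `i` in some finite `L`, and `G` is
finite, so each `e j : B → C ⊗ E_j` satisfies the span condition defining `A_L` for some `L` and
hence factors through `φ_L`. Two factorisations through `φ_L` and `φ_L'` agree after pulling back to
`A_{L ∪ L'}`, by the uniqueness part of the universal property of `A_{L ∪ L'}`. So the set of all
factorisations is a represented pro-morphism, and it contains every other one.
-/

open TensorProduct

section

variable (K : Type) [Field K]

/-- The data of a pro-algebra: an indexed family of algebras with transition
morphisms (laws are not needed to state compatibility). -/
structure ProAlgData (J : Type) [Preorder J] where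
  obj : J → AlgCat K
  tr : ∀ {j j' : J}, j ≤ j' → ((obj j' : Type) →ₐ[K] (obj j : Type))

structure ProAlg (J : Type) [Preorder J] extends ProAlgData K J where
  tr_id : ∀ j : J, tr (le_refl j) = AlgHom.id K (obj j)
  tr_comp : ∀ {j j' j'' : J} (h : j ≤ j') (h' : j' ≤ j''),
    (tr h).comp (tr h') = tr (h.trans h')

variable {K}

def CompatibleA {I J : Type} [Preorder I] [Preorder J]
    (P : ProAlgData K I) (E : ProAlgData K J)
    (Φ : Set (Σ (i : I) (j : J), ((P.obj i : Type) →ₐ[K] (E.obj j : Type)))) :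
    Prop :=
  ∀ f ∈ Φ, ∀ f' ∈ Φ, ∀ hj : f.2.1 ≤ f'.2.1,
    ∃ (i'' : I) (hi : f.1 ≤ i'') (hi' : f'.1 ≤ i''),
      f.2.2.comp (P.tr hi) = (E.tr hj).comp (f'.2.2.comp (P.tr hi'))

/-- A set of representatives of an element of `lim_j colim_i Hom(P_i, E_j)`. -/
def RepresentedA {I J : Type} [Preorder I] [Preorder J]
    (P : ProAlgData K I) (E : ProAlgData K J)
    (Φ : Set (Σ (i : I) (j : J), ((P.obj i : Type) →ₐ[K] (E.obj j : Type)))) :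
    Prop :=
  (∀ j : J, ∃ (j' : J) (_ : j ≤ j') (i : I)
      (g : (P.obj i : Type) →ₐ[K] (E.obj j' : Type)),
    (⟨i, j', g⟩ : Σ (i : I) (j : J),
      ((P.obj i : Type) →ₐ[K] (E.obj j : Type))) ∈ Φ) ∧
  CompatibleA P E Φ

theorem CompatibleA.mono {I J : Type} [Preorder I] [Preorder J]
    {P : ProAlgData K I} {E : ProAlgData K J}
    {Φ Ψ : Set (Σ (i : I) (j : J), ((P.obj i : Type) →ₐ[K] (E.obj j : Type)))}
    (hΦΨ : Φ ⊆ Ψ) (hΨ : CompatibleA P E Ψ) : CompatibleA P E Φ :=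
  fun f hf f' hf' hj => hΨ f (hΦΨ hf) f' (hΦΨ hf') hj

section SpanTmul

variable {R M : Type*} [CommSemiring R] [AddCommMonoid M] [Module R M]
  {ι : Type*} (v : Module.Basis ι R M)
  {N P : Type*} [AddCommMonoid N] [Module R N] [AddCommMonoid P] [Module R P]

variable (N) in
def spanTmul (L : Finset ι) : Submodule R (M ⊗[R] N) :=
  Submodule.span R {x | ∃ i ∈ L, ∃ n : N, x = v i ⊗ₜ[R] n}

theorem spanTmul_mono {L L' : Finset ι} (h : L ⊆ L') : spanTmul v N L ≤ spanTmul v N L' :=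
  Submodule.span_mono fun _ ⟨i, hi, n, hx⟩ => ⟨i, h hi, n, hx⟩

theorem lTensor_mem_spanTmul (f : N →ₗ[R] P) {L : Finset ι} {x : M ⊗[R] N}
    (hx : x ∈ spanTmul v N L) : f.lTensor M x ∈ spanTmul v P L := by
  have hmap := Submodule.mem_map_of_mem (f := f.lTensor M) hx
  rw [spanTmul, Submodule.map_span] at hmap
  refine Submodule.span_mono ?_ hmap
  rintro _ ⟨_, ⟨i, hi, n, rfl⟩, rfl⟩
  exact ⟨i, hi, f n, rfl⟩

theorem tmul_mem_spanTmul_support (m : M) (n : N) :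
    m ⊗ₜ[R] n ∈ spanTmul v N (v.repr m).support := by
  have hmap := Submodule.mem_map_of_mem (f := (TensorProduct.mk R M N).flip n)
    (v.mem_span_repr_support m)
  rw [Submodule.map_span] at hmap
  refine Submodule.span_mono ?_ hmap
  rintro _ ⟨_, ⟨i, hi, rfl⟩, rfl⟩
  exact ⟨i, hi, n, rfl⟩

theorem exists_mem_spanTmul (x : M ⊗[R] N) : ∃ L : Finset ι, x ∈ spanTmul v N L := by
  classical
  induction x using TensorProduct.induction_on with
  | zero => exact ⟨∅, zero_mem _⟩
  | tmul m n => exact ⟨_, tmul_mem_spanTmul_support v m n⟩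
  | add x y hx hy =>
    obtain ⟨L, hL⟩ := hx
    obtain ⟨L', hL'⟩ := hy
    exact ⟨L ∪ L', add_mem (spanTmul_mono v Finset.subset_union_left hL)
      (spanTmul_mono v Finset.subset_union_right hL')⟩

theorem exists_forall_mem_spanTmul {α : Type*} (S : Finset α) (f : α → M ⊗[R] N) :
    ∃ L : Finset ι, ∀ a ∈ S, f a ∈ spanTmul v N L := by
  classical
  choose L hL using fun a => exists_mem_spanTmul v (f a)
  exact ⟨S.biUnion L, fun a ha => spanTmul_mono v (Finset.subset_biUnion_of_mem L ha) (hL a)⟩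

end SpanTmul

section UniversalFamily

variable {B C : Type} [Ring B] [Algebra K B] [Ring C] [Algebra K C] {G : Finset B}
  {ι : Type} {V : Module.Basis ι K C} {A : Finset ι → AlgCat K}
  {φ : ∀ L : Finset ι, B →ₐ[K] C ⊗[K] (A L)}
  {E : Type} [Ring E] [Algebra K E] {ψ : B →ₐ[K] C ⊗[K] E}

theorem mem_spanTmul_of_eq_comp {L : Finset ι}
    (hspan : ∀ b ∈ G, φ L b ∈ spanTmul V (A L) L) {α : (A L : Type) →ₐ[K] E}
    (hψ : ψ = (Algebra.TensorProduct.map (AlgHom.id K C) α).comp (φ L)) :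
    ∀ b ∈ G, ψ b ∈ spanTmul V E L := by
  rintro b hb
  rw [hψ]
  exact lTensor_mem_spanTmul V α.toLinearMap (hspan b hb)

theorem exists_eq_comp
    (huniv : ∀ L : Finset ι, (∀ b ∈ G, ψ b ∈ spanTmul V E L) →
      ∃! α : (A L : Type) →ₐ[K] E,
        ψ = (Algebra.TensorProduct.map (AlgHom.id K C) α).comp (φ L)) :
    ∃ (L : Finset ι) (α : (A L : Type) →ₐ[K] E),
      ψ = (Algebra.TensorProduct.map (AlgHom.id K C) α).comp (φ L) := by
  obtain ⟨L, hL⟩ := exists_forall_mem_spanTmul V G ψ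
  obtain ⟨α, hα, -⟩ := huniv L hL
  exact ⟨L, α, hα⟩

theorem comp_tr_union_eq [DecidableEq ι]
    (hspan : ∀ L : Finset ι, ∀ b ∈ G, φ L b ∈ spanTmul V (A L) L)
    (huniv : ∀ L : Finset ι, (∀ b ∈ G, ψ b ∈ spanTmul V E L) →
      ∃! α : (A L : Type) →ₐ[K] E,
        ψ = (Algebra.TensorProduct.map (AlgHom.id K C) α).comp (φ L))
    (tr : ∀ {L₁ L₂ : Finset ι}, L₁ ≤ L₂ → ((A L₂ : Type) →ₐ[K] (A L₁ : Type)))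
    (htr : ∀ {L₁ L₂ : Finset ι} (h : L₁ ≤ L₂),
      φ L₁ = (Algebra.TensorProduct.map (AlgHom.id K C) (tr h)).comp (φ L₂))
    {L L' : Finset ι} {α : (A L : Type) →ₐ[K] E} {α' : (A L' : Type) →ₐ[K] E}
    (hα : ψ = (Algebra.TensorProduct.map (AlgHom.id K C) α).comp (φ L))
    (hα' : ψ = (Algebra.TensorProduct.map (AlgHom.id K C) α').comp (φ L')) :
    α.comp (tr Finset.subset_union_left) = α'.comp (tr Finset.subset_union_right) := by
  have hunion {L₀ : Finset ι} (hL₀ : L₀ ⊆ L ∪ L') {α₀ : (A L₀ : Type) →ₐ[K] E}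
      (hα₀ : ψ = (Algebra.TensorProduct.map (AlgHom.id K C) α₀).comp (φ L₀)) :
      ψ = (Algebra.TensorProduct.map (AlgHom.id K C) (α₀.comp (tr hL₀))).comp (φ (L ∪ L')) := by
    rwa [Algebra.TensorProduct.map_id_comp, AlgHom.comp_assoc, ← htr]
  obtain ⟨β, -, hβ⟩ := huniv (L ∪ L') fun b hb =>
    spanTmul_mono V Finset.subset_union_left (mem_spanTmul_of_eq_comp (hspan L) hα b hb)
  exact (hβ _ (hunion Finset.subset_union_left hα)).trans
    (hβ _ (hunion Finset.subset_union_right hα')).symm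

end UniversalFamily

theorem stmt_3_general {B C : Type} [Ring B] [Algebra K B] [Ring C] [Algebra K C]
    (G : Finset B)
    {ι : Type} (V : Module.Basis ι K C)
    -- the universal algebras A_L with their morphisms φ_L:
    (A : Finset ι → AlgCat K)
    (φ : ∀ L : Finset ι, B →ₐ[K] C ⊗[K] (A L))
    (hspan : ∀ L : Finset ι, ∀ b ∈ G, φ L b ∈ Submodule.span K
      {x : C ⊗[K] (A L) | ∃ i ∈ L, ∃ a : A L, x = V i ⊗ₜ[K] a})
    (huniv : ∀ (L : Finset ι) (E : Type) [Ring E] [Algebra K E]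
        (ψ : B →ₐ[K] C ⊗[K] E),
      (∀ b ∈ G, ψ b ∈ Submodule.span K
        {x : C ⊗[K] E | ∃ i ∈ L, ∃ a : E, x = V i ⊗ₜ[K] a}) →
      ∃! α : (A L : Type) →ₐ[K] E,
        ψ = (Algebra.TensorProduct.map (AlgHom.id K C) α).comp (φ L))
    -- the induced transition morphisms A^{L₂}_{L₁}:
    (tr : ∀ {L₁ L₂ : Finset ι}, L₁ ≤ L₂ → ((A L₂ : Type) →ₐ[K] (A L₁ : Type)))
    (htr : ∀ {L₁ L₂ : Finset ι} (h : L₁ ≤ L₂),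
      φ L₁ = (Algebra.TensorProduct.map (AlgHom.id K C) (tr h)).comp (φ L₂)) :
    -- universal property of the pro-algebra (A, h):
    ∀ {J : Type} [Preorder J] [IsDirected J (· ≤ ·)] (E : ProAlg K J)
      -- a pro-morphism e : B → C ⊗ E, given as a compatible family:
      (e : ∀ j : J, B →ₐ[K] C ⊗[K] (E.obj j)),
      (∀ {j j' : J} (h : j ≤ j'),
        e j = (Algebra.TensorProduct.map (AlgHom.id K C) (E.tr h)).comp (e j')) →
      -- there is a pro-morphism ê : A → E, given by a represented set Ω, ...
      ∃ Ω : Set (Σ (L : Finset ι) (j : J),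
          ((A L : Type) →ₐ[K] (E.obj j : Type))),
        RepresentedA ⟨A, fun h => tr h⟩ E.toProAlgData Ω ∧
        -- ... with e = (id ⊗ ê) ∘ h, ...
        (∀ ω ∈ Ω, e ω.2.1 =
          (Algebra.TensorProduct.map (AlgHom.id K C) ω.2.2).comp (φ ω.1)) ∧
        -- ... unique in the sense that any other such represented
        -- pro-morphism is equivalent to Ω:
        (∀ Ω' : Set (Σ (L : Finset ι) (j : J),
            ((A L : Type) →ₐ[K] (E.obj j : Type))),
          RepresentedA ⟨A, fun h => tr h⟩ E.toProAlgData Ω' →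
          (∀ ω ∈ Ω', e ω.2.1 =
            (Algebra.TensorProduct.map (AlgHom.id K C) ω.2.2).comp (φ ω.1)) →
          CompatibleA ⟨A, fun h => tr h⟩ E.toProAlgData (Ω ∪ Ω')) := by
  classical
  intro J _ _ E e he
  let Ω : Set (Σ (L : Finset ι) (j : J), ((A L : Type) →ₐ[K] (E.obj j : Type))) :=
    {ω | e ω.2.1 = (Algebra.TensorProduct.map (AlgHom.id K C) ω.2.2).comp (φ ω.1)}
  have hcompat : CompatibleA ⟨A, fun h => tr h⟩ E.toProAlgData Ω := by
    rintro ⟨L, j, α⟩ hα ⟨L', j', α'⟩ hα' (hj : j ≤ j')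
    refine ⟨L ∪ L', Finset.subset_union_left, Finset.subset_union_right, ?_⟩
    refine comp_tr_union_eq hspan (huniv · _ (e j)) tr htr hα (α' := (E.tr hj).comp α') ?_
    rw [Algebra.TensorProduct.map_id_comp, AlgHom.comp_assoc]
    exact (he hj).trans (congrArg _ hα')
  refine ⟨Ω, ⟨fun j => ?_, hcompat⟩, fun ω hω => hω,
    fun Ω' _ hΩ' => hcompat.mono (Set.union_subset subset_rfl hΩ')⟩
  obtain ⟨L, α, hα⟩ := exists_eq_comp (huniv · _ (e j))
  exact ⟨j, le_rfl, L, α, hα⟩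

/-- the pro-algebra `A = {A_L}` (indexed by finite subsets `L` of
a basis `V` of `C`) with the pro-morphism `h = [{φ_L}] : B → C ⊗ A` is
universal: every pro-morphism `e : B → C ⊗ E` into a pro-algebra `E` factors
uniquely through `h` via a pro-morphism `ê : A → E`. -/
theorem stmt_3 {B C : Type} [Ring B] [Algebra K B] [Ring C] [Algebra K C]
    (G : Finset B) (hG : Algebra.adjoin K (G : Set B) = ⊤)
    {ι : Type} (V : Module.Basis ι K C)
    -- the universal algebras A_L with their morphisms φ_L:
    (A : Finset ι → AlgCat K)
    (φ : ∀ L : Finset ι, B →ₐ[K] C ⊗[K] (A L))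
    (hspan : ∀ L : Finset ι, ∀ b ∈ G, φ L b ∈ Submodule.span K
      {x : C ⊗[K] (A L) | ∃ i ∈ L, ∃ a : A L, x = V i ⊗ₜ[K] a})
    (huniv : ∀ (L : Finset ι) (E : Type) [Ring E] [Algebra K E]
        (ψ : B →ₐ[K] C ⊗[K] E),
      (∀ b ∈ G, ψ b ∈ Submodule.span K
        {x : C ⊗[K] E | ∃ i ∈ L, ∃ a : E, x = V i ⊗ₜ[K] a}) →
      ∃! α : (A L : Type) →ₐ[K] E,
        ψ = (Algebra.TensorProduct.map (AlgHom.id K C) α).comp (φ L))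
    -- the induced transition morphisms A^{L₂}_{L₁}:
    (tr : ∀ {L₁ L₂ : Finset ι}, L₁ ≤ L₂ → ((A L₂ : Type) →ₐ[K] (A L₁ : Type)))
    (htr : ∀ {L₁ L₂ : Finset ι} (h : L₁ ≤ L₂),
      φ L₁ = (Algebra.TensorProduct.map (AlgHom.id K C) (tr h)).comp (φ L₂)) :
    -- universal property of the pro-algebra (A, h):
    ∀ {J : Type} [Preorder J] [IsDirected J (· ≤ ·)] (E : ProAlg K J)
      -- a pro-morphism e : B → C ⊗ E, given as a compatible family:
      (e : ∀ j : J, B →ₐ[K] C ⊗[K] (E.obj j)),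
      (∀ {j j' : J} (h : j ≤ j'),
        e j = (Algebra.TensorProduct.map (AlgHom.id K C) (E.tr h)).comp (e j')) →
      -- there is a pro-morphism ê : A → E, given by a represented set Ω, ...
      ∃ Ω : Set (Σ (L : Finset ι) (j : J),
          ((A L : Type) →ₐ[K] (E.obj j : Type))),
        RepresentedA ⟨A, fun h => tr h⟩ E.toProAlgData Ω ∧
        -- ... with e = (id ⊗ ê) ∘ h, ...
        (∀ ω ∈ Ω, e ω.2.1 =
          (Algebra.TensorProduct.map (AlgHom.id K C) ω.2.2).comp (φ ω.1)) ∧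
        -- ... unique in the sense that any other such represented
        -- pro-morphism is equivalent to Ω:
        (∀ Ω' : Set (Σ (L : Finset ι) (j : J),
            ((A L : Type) →ₐ[K] (E.obj j : Type))),
          RepresentedA ⟨A, fun h => tr h⟩ E.toProAlgData Ω' →
          (∀ ω ∈ Ω', e ω.2.1 =
            (Algebra.TensorProduct.map (AlgHom.id K C) ω.2.2).comp (φ ω.1)) →
          CompatibleA ⟨A, fun h => tr h⟩ E.toProAlgData (Ω ∪ Ω')) :=
  stmt_3_general G V A φ hspan huniv tr htr

end
end

section
/- Let B be a K-algebra and C a finite-dimensional K-algebra. Suppose G, G' ⊆ B are two generating sets of B and V, V' are two vector space bases of C. Then the universal algebras A(B_G, C_V) and A(B_{G'}, C_{V'}) (each equipped with its universal morphism h : B → C ⊗ A satisfying that h(b) lies in span{c ⊗ a : c in the basis} for b in the generating set) are canonically isomorphic as K-algebras, via the isomorphisms induced by the universal properties. -/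
open TensorProduct

lemma span_tensor_basis {K : Type} [Field K] {C E : Type} [Ring C] [Algebra K C]
    [Ring E] [Algebra K E] {ι : Type} (V : Module.Basis ι K C) (x : C ⊗[K] E) :
    x ∈ Submodule.span K
      {x : C ⊗[K] E | ∃ c ∈ Set.range V, ∃ a : E, x = c ⊗ₜ[K] a} := by
  induction x with
  | zero => exact Submodule.zero_mem _
  | add y z hy hz => exact Submodule.add_mem _ hy hz
  | tmul c a =>
    rw [← V.linearCombination_repr c, Finsupp.linearCombination_apply, Finsupp.sum, TensorProduct.sum_tmul]
    refine Submodule.sum_mem _ fun i _ => ?_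
    rw [← TensorProduct.smul_tmul']
    exact Submodule.smul_mem _ _ (Submodule.subset_span ⟨V i, ⟨i, rfl⟩, a, rfl⟩)

/-- the universal algebras `A(B_G, C_V)` and `A(B_{G'}, C_{V'})`
for two generating sets `G, G'` of `B` and two bases `V, V'` of the
finite-dimensional algebra `C` are canonically isomorphic. -/
theorem stmt_6 {K : Type} [Field K] (B C : Type) [Ring B] [Algebra K B]
    [Ring C] [Algebra K C] [FiniteDimensional K C]
    (G G' : Set B) (hG : Algebra.adjoin K G = ⊤) (hG' : Algebra.adjoin K G' = ⊤)
    {ι ι' : Type} [Fintype ι] [Fintype ι'] (V : Module.Basis ι K C) (V' : Module.Basis ι' K C)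
    (A₁ : Type) [Ring A₁] [Algebra K A₁] (h₁ : B →ₐ[K] C ⊗[K] A₁)
    (A₂ : Type) [Ring A₂] [Algebra K A₂] (h₂ : B →ₐ[K] C ⊗[K] A₂)
    -- `(A₁, h₁)` is the universal pair for `(B_G, C_V)`:
    (hspan₁ : ∀ b ∈ G, h₁ b ∈ Submodule.span K
      {x : C ⊗[K] A₁ | ∃ c ∈ Set.range V, ∃ a : A₁, x = c ⊗ₜ[K] a})
    (huniv₁ : ∀ (E : Type) [Ring E] [Algebra K E] (e : B →ₐ[K] C ⊗[K] E),
      (∀ b ∈ G, e b ∈ Submodule.span K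
        {x : C ⊗[K] E | ∃ c ∈ Set.range V, ∃ a : E, x = c ⊗ₜ[K] a}) →
      ∃! α : A₁ →ₐ[K] E,
        e = (Algebra.TensorProduct.map (AlgHom.id K C) α).comp h₁)
    -- `(A₂, h₂)` is the universal pair for `(B_{G'}, C_{V'})`:
    (hspan₂ : ∀ b ∈ G', h₂ b ∈ Submodule.span K
      {x : C ⊗[K] A₂ | ∃ c ∈ Set.range V', ∃ a : A₂, x = c ⊗ₜ[K] a})
    (huniv₂ : ∀ (E : Type) [Ring E] [Algebra K E] (e : B →ₐ[K] C ⊗[K] E),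
      (∀ b ∈ G', e b ∈ Submodule.span K
        {x : C ⊗[K] E | ∃ c ∈ Set.range V', ∃ a : E, x = c ⊗ₜ[K] a}) →
      ∃! α : A₂ →ₐ[K] E,
        e = (Algebra.TensorProduct.map (AlgHom.id K C) α).comp h₂) :
    ∃! α : A₁ ≃ₐ[K] A₂,
      h₂ = (Algebra.TensorProduct.map (AlgHom.id K C) α.toAlgHom).comp h₁ := by
  have key : ∀ (E F : Type) [Ring E] [Algebra K E] [Ring F] [Algebra K F]
      (f : E →ₐ[K] F) (g : A₁ →ₐ[K] E),
      Algebra.TensorProduct.map (AlgHom.id K C) (f.comp g)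
        = (Algebra.TensorProduct.map (AlgHom.id K C) f).comp
            (Algebra.TensorProduct.map (AlgHom.id K C) g) := by
    intro E F _ _ _ _ f g
    rw [← Algebra.TensorProduct.map_comp, AlgHom.comp_id]
  have key₂ : ∀ (E F : Type) [Ring E] [Algebra K E] [Ring F] [Algebra K F]
      (f : E →ₐ[K] F) (g : A₂ →ₐ[K] E),
      Algebra.TensorProduct.map (AlgHom.id K C) (f.comp g)
        = (Algebra.TensorProduct.map (AlgHom.id K C) f).comp
            (Algebra.TensorProduct.map (AlgHom.id K C) g) := by
    intro E F _ _ _ _ f g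
    rw [← Algebra.TensorProduct.map_comp, AlgHom.comp_id]
  obtain ⟨φ, hφ, hφu⟩ := huniv₁ A₂ h₂ (fun b _ => span_tensor_basis V _)
  obtain ⟨ψ, hψ, hψu⟩ := huniv₂ A₁ h₁ (fun b _ => span_tensor_basis V' _)
  obtain ⟨τ, hτ, hτu⟩ := huniv₁ A₁ h₁ (fun b _ => span_tensor_basis V _)
  obtain ⟨σ, hσ, hσu⟩ := huniv₂ A₂ h₂ (fun b _ => span_tensor_basis V' _)
  have hid₁ : ψ.comp φ = AlgHom.id K A₁ := by
    have h1 : ψ.comp φ = τ := hτu _ (by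
      show h₁ = (Algebra.TensorProduct.map (AlgHom.id K C) (ψ.comp φ)).comp h₁
      rw [key, AlgHom.comp_assoc, ← hφ, ← hψ])
    have h2 : AlgHom.id K A₁ = τ := hτu _ (by
      show h₁ = (Algebra.TensorProduct.map (AlgHom.id K C) (AlgHom.id K A₁)).comp h₁
      rw [Algebra.TensorProduct.map_id, AlgHom.id_comp])
    rw [h1, h2]
  have hid₂ : φ.comp ψ = AlgHom.id K A₂ := by
    have h1 : φ.comp ψ = σ := hσu _ (by
      show h₂ = (Algebra.TensorProduct.map (AlgHom.id K C) (φ.comp ψ)).comp h₂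
      rw [key₂, AlgHom.comp_assoc, ← hψ, ← hφ])
    have h2 : AlgHom.id K A₂ = σ := hσu _ (by
      show h₂ = (Algebra.TensorProduct.map (AlgHom.id K C) (AlgHom.id K A₂)).comp h₂
      rw [Algebra.TensorProduct.map_id, AlgHom.id_comp])
    rw [h1, h2]
  refine ⟨AlgEquiv.ofAlgHom φ ψ hid₂ hid₁, hφ, ?_⟩
  intro β hβ
  have hb : β.toAlgHom = φ := by
    have h1 := hφu β.toAlgHom hβ
    have h2 := hφu φ hφ
    rw [h1, h2]
  ext x
  exact congrArg (fun f => f x) hb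
end

section
/- (Exponential law) Let B be a finitely generated K-algebra, C₁ a K-algebra, and C₂ a finite-dimensional K-algebra. Then there is a canonical isomorphism of pro-algebras A(B, C₁ ⊗ C₂) ≅ A(A(B, C₂), C₁), where A(-,-) denotes the universal (pro-)algebra solution of the mapping-scheme problem. -/
open TensorProduct

section

variable (K : Type) [Field K]

variable {K}

/-- The composition of two represented pro-morphisms. -/
def compSet {I J L : Type} [Preorder I] [Preorder J] [Preorder L]
    (P : ProAlgData K I) (Q : ProAlgData K J) (R : ProAlgData K L)
    (Ω : Set (Σ (i : I) (j : J), ((P.obj i : Type) →ₐ[K] (Q.obj j : Type))))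
    (Ψ : Set (Σ (j : J) (l : L), ((Q.obj j : Type) →ₐ[K] (R.obj l : Type)))) :
    Set (Σ (i : I) (l : L), ((P.obj i : Type) →ₐ[K] (R.obj l : Type))) :=
  {θ | ∃ (i : I) (j j' : J) (hj : j ≤ j') (l : L)
      (f : (P.obj i : Type) →ₐ[K] (Q.obj j' : Type))
      (g : (Q.obj j : Type) →ₐ[K] (R.obj l : Type)),
    (⟨i, j', f⟩ : Σ (i : I) (j : J),
      ((P.obj i : Type) →ₐ[K] (Q.obj j : Type))) ∈ Ω ∧
    (⟨j, l, g⟩ : Σ (j : J) (l : L),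
      ((Q.obj j : Type) →ₐ[K] (R.obj l : Type))) ∈ Ψ ∧
    θ = ⟨i, l, g.comp ((Q.tr hj).comp f)⟩}

/-- The identity pro-morphism of a pro-algebra, represented by its transition
morphisms. -/
def idSet {I : Type} [Preorder I] (P : ProAlgData K I) :
    Set (Σ (i : I) (i' : I), ((P.obj i : Type) →ₐ[K] (P.obj i' : Type))) :=
  {θ | ∃ (i i' : I) (h : i' ≤ i), θ = ⟨i, i', P.tr h⟩}


/-! ### Auxiliary lemmas -/

section AuxTensor

open Algebra.TensorProduct

variable {X Y Z W V B' : Type} [Ring X] [Algebra K X] [Ring Y] [Algebra K Y]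
  [Ring Z] [Algebra K Z] [Ring W] [Algebra K W] [Ring V] [Algebra K V]
  [Ring B'] [Algebra K B']

lemma mapid_comp (fh : Z →ₐ[K] W) (fh' : V →ₐ[K] Z) :
    (map (AlgHom.id K X) fh).comp (map (AlgHom.id K X) fh')
      = map (AlgHom.id K X) (fh.comp fh') := by
  rw [← Algebra.TensorProduct.map_comp, AlgHom.id_comp]

lemma mapid_comp' (fh : Z →ₐ[K] W) (fh' : V →ₐ[K] Z) (ρ : B' →ₐ[K] X ⊗[K] V) :
    (map (AlgHom.id K X) fh).comp ((map (AlgHom.id K X) fh').comp ρ)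
      = (map (AlgHom.id K X) (fh.comp fh')).comp ρ := by
  rw [← AlgHom.comp_assoc, mapid_comp]

lemma lam_nat_pt (g : Z →ₐ[K] W) (t : Y ⊗[K] (X ⊗[K] Z)) :
    (map (AlgHom.id K (X ⊗[K] Y)) g)
      ((map (Algebra.TensorProduct.comm K Y X).toAlgHom (AlgHom.id K Z))
        ((Algebra.TensorProduct.assoc K K K Y X Z).symm t))
    = (map (Algebra.TensorProduct.comm K Y X).toAlgHom (AlgHom.id K W))
        ((Algebra.TensorProduct.assoc K K K Y X W).symm
          ((map (AlgHom.id K Y) (map (AlgHom.id K X) g)) t)) := by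
  induction t using TensorProduct.induction_on with
  | zero => simp
  | add a b ha hb => simp only [map_add, ha, hb]
  | tmul y s =>
    induction s using TensorProduct.induction_on with
    | zero => simp [tmul_zero]
    | add a b ha hb => simp only [tmul_add, map_add, ha, hb]
    | tmul x z => simp [Algebra.TensorProduct.assoc_symm_tmul]

lemma lam_nat' (g : Z →ₐ[K] W) (ρ : B' →ₐ[K] Y ⊗[K] (X ⊗[K] Z)) :
    (map (AlgHom.id K (X ⊗[K] Y)) g).comp
        ((map (Algebra.TensorProduct.comm K Y X).toAlgHom (AlgHom.id K Z)).comp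
          ((Algebra.TensorProduct.assoc K K K Y X Z).symm.toAlgHom.comp ρ))
      = (map (Algebra.TensorProduct.comm K Y X).toAlgHom (AlgHom.id K W)).comp
        ((Algebra.TensorProduct.assoc K K K Y X W).symm.toAlgHom.comp
          ((map (AlgHom.id K Y) (map (AlgHom.id K X) g)).comp ρ)) := by
  apply AlgHom.ext
  intro v
  simp only [AlgHom.comp_apply, AlgEquiv.toAlgHom_eq_coe, AlgHom.coe_coe]
  exact lam_nat_pt g (ρ v)

lemma lam'_nat_pt (g : Z →ₐ[K] W) (t : (X ⊗[K] Y) ⊗[K] Z) :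
    (map (AlgHom.id K Y) (map (AlgHom.id K X) g))
      ((Algebra.TensorProduct.assoc K K K Y X Z)
        ((map (Algebra.TensorProduct.comm K X Y).toAlgHom (AlgHom.id K Z)) t))
    = (Algebra.TensorProduct.assoc K K K Y X W)
        ((map (Algebra.TensorProduct.comm K X Y).toAlgHom (AlgHom.id K W))
          ((map (AlgHom.id K (X ⊗[K] Y)) g) t)) := by
  induction t using TensorProduct.induction_on with
  | zero => simp
  | add a b ha hb => simp only [map_add, ha, hb]
  | tmul s z =>
    induction s using TensorProduct.induction_on with
    | zero => simp [zero_tmul]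
    | add a b ha hb => simp only [add_tmul, map_add, ha, hb]
    | tmul x y => simp [Algebra.TensorProduct.assoc_tmul]

lemma lam'_nat' (g : Z →ₐ[K] W) (ρ : B' →ₐ[K] (X ⊗[K] Y) ⊗[K] Z) :
    (map (AlgHom.id K Y) (map (AlgHom.id K X) g)).comp
        ((Algebra.TensorProduct.assoc K K K Y X Z).toAlgHom.comp
          ((map (Algebra.TensorProduct.comm K X Y).toAlgHom (AlgHom.id K Z)).comp ρ))
      = (Algebra.TensorProduct.assoc K K K Y X W).toAlgHom.comp
        ((map (Algebra.TensorProduct.comm K X Y).toAlgHom (AlgHom.id K W)).comp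
          ((map (AlgHom.id K (X ⊗[K] Y)) g).comp ρ)) := by
  apply AlgHom.ext
  intro v
  simp only [AlgHom.comp_apply, AlgEquiv.toAlgHom_eq_coe, AlgHom.coe_coe]
  exact lam'_nat_pt g (ρ v)

lemma lam_lam_pt (t : (X ⊗[K] Y) ⊗[K] Z) :
    (map (Algebra.TensorProduct.comm K Y X).toAlgHom (AlgHom.id K Z))
      ((Algebra.TensorProduct.assoc K K K Y X Z).symm
        ((Algebra.TensorProduct.assoc K K K Y X Z)
          ((map (Algebra.TensorProduct.comm K X Y).toAlgHom (AlgHom.id K Z)) t)))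
      = t := by
  induction t using TensorProduct.induction_on with
  | zero => simp
  | add a b ha hb => simp only [map_add, ha, hb]
  | tmul s z =>
    induction s using TensorProduct.induction_on with
    | zero => simp [zero_tmul]
    | add a b ha hb => simp only [add_tmul, map_add, ha, hb]
    | tmul x y => simp

lemma lam_lam' (ρ : B' →ₐ[K] (X ⊗[K] Y) ⊗[K] Z) :
    (map (Algebra.TensorProduct.comm K Y X).toAlgHom (AlgHom.id K Z)).comp
        ((Algebra.TensorProduct.assoc K K K Y X Z).symm.toAlgHom.comp
          ((Algebra.TensorProduct.assoc K K K Y X Z).toAlgHom.comp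
            ((map (Algebra.TensorProduct.comm K X Y).toAlgHom (AlgHom.id K Z)).comp
              ρ)))
      = ρ := by
  apply AlgHom.ext
  intro v
  simp only [AlgHom.comp_apply, AlgEquiv.toAlgHom_eq_coe, AlgHom.coe_coe]
  exact lam_lam_pt (ρ v)

lemma lam'_lam_pt (t : Y ⊗[K] (X ⊗[K] Z)) :
    (Algebra.TensorProduct.assoc K K K Y X Z)
      ((map (Algebra.TensorProduct.comm K X Y).toAlgHom (AlgHom.id K Z))
        ((map (Algebra.TensorProduct.comm K Y X).toAlgHom (AlgHom.id K Z))
          ((Algebra.TensorProduct.assoc K K K Y X Z).symm t)))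
      = t := by
  induction t using TensorProduct.induction_on with
  | zero => simp
  | add a b ha hb => simp only [map_add, ha, hb]
  | tmul y s =>
    induction s using TensorProduct.induction_on with
    | zero => simp [tmul_zero]
    | add a b ha hb => simp only [tmul_add, map_add, ha, hb]
    | tmul x z => simp [Algebra.TensorProduct.assoc_symm_tmul]

lemma lam'_lam (ρ : B' →ₐ[K] Y ⊗[K] (X ⊗[K] Z)) :
    (Algebra.TensorProduct.assoc K K K Y X Z).toAlgHom.comp
        ((map (Algebra.TensorProduct.comm K X Y).toAlgHom (AlgHom.id K Z)).comp
          ((map (Algebra.TensorProduct.comm K Y X).toAlgHom (AlgHom.id K Z)).comp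
            ((Algebra.TensorProduct.assoc K K K Y X Z).symm.toAlgHom.comp ρ)))
      = ρ := by
  apply AlgHom.ext
  intro v
  simp only [AlgHom.comp_apply, AlgEquiv.toAlgHom_eq_coe, AlgHom.coe_coe]
  exact lam'_lam_pt (ρ v)

end AuxTensor

/-! ### Combinatorial lemmas on pro-algebras -/

section AuxPro

lemma glue {I J : Type} [Preorder I] [Preorder J] [IsDirected I (· ≤ ·)]
    (P : ProAlg K I) (E : ProAlg K J)
    (Ω₀ Φ₁ Φ₂ : Set (Σ (i : I) (j : J), ((P.obj i : Type) →ₐ[K] (E.obj j : Type))))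
    (h₀ : ∀ j : J, ∃ (j' : J) (_ : j ≤ j') (i : I)
        (g : (P.obj i : Type) →ₐ[K] (E.obj j' : Type)),
      (⟨i, j', g⟩ : Σ (i : I) (j : J),
        ((P.obj i : Type) →ₐ[K] (E.obj j : Type))) ∈ Ω₀)
    (h1 : CompatibleA P.toProAlgData E.toProAlgData (Ω₀ ∪ Φ₁))
    (h2 : CompatibleA P.toProAlgData E.toProAlgData (Ω₀ ∪ Φ₂)) :
    CompatibleA P.toProAlgData E.toProAlgData (Φ₁ ∪ Φ₂) := by
  intro f hf f' hf' hj
  obtain ⟨j₃, hle, i₀, g₀, hg₀⟩ := h₀ f'.2.1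
  have key : ∀ f₁ ∈ Φ₁ ∪ Φ₂, ∀ (hj' : f₁.2.1 ≤ j₃),
      ∃ (a : I) (ha : f₁.1 ≤ a) (ha₀ : i₀ ≤ a),
        f₁.2.2.comp (P.tr ha)
          = (E.tr hj').comp (g₀.comp (P.tr ha₀)) := by
    intro f₁ hf₁ hj'
    rcases hf₁ with h | h
    · exact h1 f₁ (Or.inr h) ⟨i₀, j₃, g₀⟩ (Or.inl hg₀) hj'
    · exact h2 f₁ (Or.inr h) ⟨i₀, j₃, g₀⟩ (Or.inl hg₀) hj'
  obtain ⟨a, ha, ha₀, hEq⟩ := key f hf (hj.trans hle)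
  obtain ⟨b, hb, hb₀, hEq'⟩ := key f' hf' hle
  obtain ⟨c, hac, hbc⟩ := directed_of (· ≤ ·) a b
  refine ⟨c, ha.trans hac, hb.trans hbc, ?_⟩
  have e1 : f.2.2.comp (P.tr (ha.trans hac))
      = (E.tr (hj.trans hle)).comp (g₀.comp (P.tr (ha₀.trans hac))) := by
    rw [← P.tr_comp ha hac, ← AlgHom.comp_assoc, hEq, AlgHom.comp_assoc,
      AlgHom.comp_assoc, P.tr_comp]
  have e2 : f'.2.2.comp (P.tr (hb.trans hbc))
      = (E.tr hle).comp (g₀.comp (P.tr (hb₀.trans hbc))) := by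
    rw [← P.tr_comp hb hbc, ← AlgHom.comp_assoc, hEq', AlgHom.comp_assoc,
      AlgHom.comp_assoc, P.tr_comp]
  rw [e1, e2, ← AlgHom.comp_assoc (E.tr hj), E.tr_comp]

lemma idSet_rep {I : Type} [Preorder I] [IsDirected I (· ≤ ·)]
    (P : ProAlg K I) :
    RepresentedA P.toProAlgData P.toProAlgData (idSet P.toProAlgData) := by
  constructor
  · intro j
    exact ⟨j, le_refl j, j, P.tr (le_refl j), ⟨j, j, le_refl j, rfl⟩⟩
  · rintro f ⟨i, i', h, rfl⟩ f' ⟨k, k', h', rfl⟩ hj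
    obtain ⟨c, hic, hkc⟩ := directed_of (· ≤ ·) i k
    refine ⟨c, hic, hkc, ?_⟩
    rw [P.tr_comp, P.tr_comp, P.tr_comp]

lemma compSet_compat {I J L : Type} [Preorder I] [Preorder J] [Preorder L]
    [IsDirected I (· ≤ ·)] [IsDirected J (· ≤ ·)]
    (P : ProAlg K I) (Q : ProAlg K J) (R : ProAlg K L)
    (Ω : Set (Σ (i : I) (j : J), ((P.obj i : Type) →ₐ[K] (Q.obj j : Type))))
    (Ψ : Set (Σ (j : J) (l : L), ((Q.obj j : Type) →ₐ[K] (R.obj l : Type))))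
    (hΩ : RepresentedA P.toProAlgData Q.toProAlgData Ω)
    (hΨc : CompatibleA Q.toProAlgData R.toProAlgData Ψ) :
    CompatibleA P.toProAlgData R.toProAlgData
      (compSet P.toProAlgData Q.toProAlgData R.toProAlgData Ω Ψ) := by
  rintro θ ⟨i, j, j', hj, l, F, g, hF, hg, rfl⟩
    θ' ⟨i₂, j₂, j₂', hj₂, l₂, F₂, g₂, hF₂, hg₂, rfl⟩ hl
  obtain ⟨j₃, hjj₃, hj₂j₃, hgg⟩ := hΨc ⟨j, l, g⟩ hg ⟨j₂, l₂, g₂⟩ hg₂ hl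
  obtain ⟨j₄₀, h1, h2⟩ := directed_of (· ≤ ·) j' j₂'
  obtain ⟨j₄, h3, h4⟩ := directed_of (· ≤ ·) j₄₀ j₃
  obtain ⟨j₅, hj₄₅, i₀, F₃, hF₃⟩ := hΩ.1 j₄
  have hj'5 : j' ≤ j₅ := (h1.trans h3).trans hj₄₅
  have hj₂'5 : j₂' ≤ j₅ := (h2.trans h3).trans hj₄₅
  have hj₃5 : j₃ ≤ j₅ := h4.trans hj₄₅
  obtain ⟨a, hia, hi₀a, hFF⟩ := hΩ.2 ⟨i, j', F⟩ hF ⟨i₀, j₅, F₃⟩ hF₃ hj'5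
  obtain ⟨a₂, hia₂, hi₀a₂, hFF₂⟩ := hΩ.2 ⟨i₂, j₂', F₂⟩ hF₂ ⟨i₀, j₅, F₃⟩ hF₃ hj₂'5
  obtain ⟨c, hac, ha₂c⟩ := directed_of (· ≤ ·) a a₂
  refine ⟨c, hia.trans hac, hia₂.trans ha₂c, ?_⟩
  have eF : F.comp (P.tr (hia.trans hac))
      = (Q.tr hj'5).comp (F₃.comp (P.tr (hi₀a.trans hac))) := by
    rw [← P.tr_comp hia hac, ← AlgHom.comp_assoc, hFF, AlgHom.comp_assoc,
      AlgHom.comp_assoc, P.tr_comp]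
  have eF₂ : F₂.comp (P.tr (hia₂.trans ha₂c))
      = (Q.tr hj₂'5).comp (F₃.comp (P.tr (hi₀a₂.trans ha₂c))) := by
    rw [← P.tr_comp hia₂ ha₂c, ← AlgHom.comp_assoc, hFF₂, AlgHom.comp_assoc,
      AlgHom.comp_assoc, P.tr_comp]
  calc (g.comp ((Q.tr hj).comp F)).comp (P.tr (hia.trans hac))
      = g.comp ((Q.tr hj).comp (F.comp (P.tr (hia.trans hac)))) := by
        rw [AlgHom.comp_assoc, AlgHom.comp_assoc]
    _ = g.comp ((Q.tr hj).comp ((Q.tr hj'5).comp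
          (F₃.comp (P.tr (hi₀a.trans hac))))) := by rw [eF]
    _ = (g.comp (Q.tr hjj₃)).comp ((Q.tr hj₃5).comp
          (F₃.comp (P.tr (hi₀a.trans hac)))) := by
        rw [AlgHom.comp_assoc, ← AlgHom.comp_assoc (Q.tr hjj₃),
          Q.tr_comp hjj₃ hj₃5, ← AlgHom.comp_assoc (Q.tr hj),
          Q.tr_comp hj hj'5]
    _ = ((R.tr hl).comp (g₂.comp (Q.tr hj₂j₃))).comp ((Q.tr hj₃5).comp
          (F₃.comp (P.tr (hi₀a.trans hac)))) := by rw [hgg]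
    _ = (R.tr hl).comp (g₂.comp ((Q.tr hj₂).comp
          ((Q.tr hj₂'5).comp (F₃.comp (P.tr (hi₀a.trans hac)))))) := by
        rw [AlgHom.comp_assoc, AlgHom.comp_assoc,
          ← AlgHom.comp_assoc (Q.tr hj₂j₃), Q.tr_comp hj₂j₃ hj₃5,
          ← AlgHom.comp_assoc (Q.tr hj₂), Q.tr_comp hj₂ hj₂'5]
    _ = (R.tr hl).comp (g₂.comp ((Q.tr hj₂).comp
          (F₂.comp (P.tr (hia₂.trans ha₂c))))) := by rw [eF₂]
    _ = (R.tr hl).comp ((g₂.comp ((Q.tr hj₂).comp F₂)).comp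
          (P.tr (hia₂.trans ha₂c))) := by
        rw [AlgHom.comp_assoc, AlgHom.comp_assoc]

lemma compSet_rep {I J L : Type} [Preorder I] [Preorder J] [Preorder L]
    [IsDirected I (· ≤ ·)] [IsDirected J (· ≤ ·)]
    (P : ProAlg K I) (Q : ProAlg K J) (R : ProAlg K L)
    (Ω : Set (Σ (i : I) (j : J), ((P.obj i : Type) →ₐ[K] (Q.obj j : Type))))
    (Ψ : Set (Σ (j : J) (l : L), ((Q.obj j : Type) →ₐ[K] (R.obj l : Type))))
    (hΩ : RepresentedA P.toProAlgData Q.toProAlgData Ω)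
    (hΨ : RepresentedA Q.toProAlgData R.toProAlgData Ψ) :
    RepresentedA P.toProAlgData R.toProAlgData
      (compSet P.toProAlgData Q.toProAlgData R.toProAlgData Ω Ψ) := by
  constructor
  · intro l
    obtain ⟨l', hll', j, g, hg⟩ := hΨ.1 l
    obtain ⟨j', hjj', i, F, hF⟩ := hΩ.1 j
    exact ⟨l', hll', i, g.comp ((Q.tr hjj').comp F),
      ⟨i, j, j', hjj', l', F, g, hF, hg, rfl⟩⟩
  · exact compSet_compat P Q R Ω Ψ hΩ hΨ.2

end AuxPro

open Algebra.TensorProduct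

set_option maxHeartbeats 1600000 in
/-- Exponential law: `A(B, C₁ ⊗ C₂) ≅ A(A(B, C₂), C₁)` as
pro-algebras, for `B` finitely generated and `C₂` finite dimensional; the
canonical pro-morphism realizing the isomorphism is induced by the universal
properties. -/
theorem stmt_8 {B C₁ C₂ : Type} [Ring B] [Algebra K B] [Ring C₁] [Algebra K C₁]
    [Ring C₂] [Algebra K C₂] [FiniteDimensional K C₂]
    (G : Finset B) (hG : Algebra.adjoin K (G : Set B) = ⊤)
    -- D = A(B, C₂), an ordinary algebra with universal morphism h₂:
    (D : Type) [Ring D] [Algebra K D] (h₂ : B →ₐ[K] C₂ ⊗[K] D)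
    (huniv₂ : ∀ (E : Type) [Ring E] [Algebra K E] (e : B →ₐ[K] C₂ ⊗[K] E),
      ∃! eHat : D →ₐ[K] E,
        e = (Algebra.TensorProduct.map (AlgHom.id K C₂) eHat).comp h₂)
    -- P = A(B, C₁ ⊗ C₂), a pro-algebra with universal pro-family hP:
    {I : Type} [Preorder I] [IsDirected I (· ≤ ·)] (P : ProAlg K I)
    (hP : ∀ i : I, B →ₐ[K] (C₁ ⊗[K] C₂) ⊗[K] (P.obj i))
    (hhP : ∀ {i i' : I} (h : i ≤ i'), hP i =
      (Algebra.TensorProduct.map (AlgHom.id K (C₁ ⊗[K] C₂)) (P.tr h)).comp (hP i'))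
    (hPuniv : ∀ (J' : Type) [Preorder J'] [IsDirected J' (· ≤ ·)]
        (E : ProAlg K J') (e : ∀ j : J', B →ₐ[K] (C₁ ⊗[K] C₂) ⊗[K] (E.obj j)),
      (∀ {j j' : J'} (h : j ≤ j'), e j =
        (Algebra.TensorProduct.map (AlgHom.id K (C₁ ⊗[K] C₂)) (E.tr h)).comp
          (e j')) →
      ∃ Ω, RepresentedA P.toProAlgData E.toProAlgData Ω ∧
        (∀ ω ∈ Ω, e ω.2.1 =
          (Algebra.TensorProduct.map (AlgHom.id K (C₁ ⊗[K] C₂)) ω.2.2).comp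
            (hP ω.1)) ∧
        (∀ Ω', RepresentedA P.toProAlgData E.toProAlgData Ω' →
          (∀ ω ∈ Ω', e ω.2.1 =
            (Algebra.TensorProduct.map (AlgHom.id K (C₁ ⊗[K] C₂)) ω.2.2).comp
              (hP ω.1)) →
          CompatibleA P.toProAlgData E.toProAlgData (Ω ∪ Ω')))
    -- Q = A(D, C₁), a pro-algebra with universal pro-family hQ:
    {J : Type} [Preorder J] [IsDirected J (· ≤ ·)] (Q : ProAlg K J)
    (hQ : ∀ j : J, D →ₐ[K] C₁ ⊗[K] (Q.obj j))
    (hhQ : ∀ {j j' : J} (h : j ≤ j'), hQ j =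
      (Algebra.TensorProduct.map (AlgHom.id K C₁) (Q.tr h)).comp (hQ j'))
    (hQuniv : ∀ (J' : Type) [Preorder J'] [IsDirected J' (· ≤ ·)]
        (E : ProAlg K J') (e : ∀ j : J', D →ₐ[K] C₁ ⊗[K] (E.obj j)),
      (∀ {j j' : J'} (h : j ≤ j'), e j =
        (Algebra.TensorProduct.map (AlgHom.id K C₁) (E.tr h)).comp (e j')) →
      ∃ Ω, RepresentedA Q.toProAlgData E.toProAlgData Ω ∧
        (∀ ω ∈ Ω, e ω.2.1 =
          (Algebra.TensorProduct.map (AlgHom.id K C₁) ω.2.2).comp (hQ ω.1)) ∧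
        (∀ Ω', RepresentedA Q.toProAlgData E.toProAlgData Ω' →
          (∀ ω ∈ Ω', e ω.2.1 =
            (Algebra.TensorProduct.map (AlgHom.id K C₁) ω.2.2).comp (hQ ω.1)) →
          CompatibleA Q.toProAlgData E.toProAlgData (Ω ∪ Ω'))) :
    -- the canonical pro-morphism Ω : P → Q is an isomorphism of pro-algebras:
    ∃ Ω : Set (Σ (i : I) (j : J), ((P.obj i : Type) →ₐ[K] (Q.obj j : Type))),
      RepresentedA P.toProAlgData Q.toProAlgData Ω ∧
      -- Ω is the canonical pro-morphism induced by the family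
      -- B → (C₁ ⊗ C₂) ⊗ Q_j obtained from h₂ and hQ:
      (∀ ω ∈ Ω,
        (Algebra.TensorProduct.map
            (Algebra.TensorProduct.comm K C₂ C₁).toAlgHom
            (AlgHom.id K (Q.obj ω.2.1))).comp
          (((Algebra.TensorProduct.assoc K K K C₂ C₁ (Q.obj ω.2.1)).symm.toAlgHom).comp
            ((Algebra.TensorProduct.map (AlgHom.id K C₂) (hQ ω.2.1)).comp h₂)) =
        (Algebra.TensorProduct.map (AlgHom.id K (C₁ ⊗[K] C₂)) ω.2.2).comp
          (hP ω.1)) ∧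
      -- Ω admits a two-sided inverse pro-morphism Ψ:
      ∃ Ψ : Set (Σ (j : J) (i : I), ((Q.obj j : Type) →ₐ[K] (P.obj i : Type))),
        RepresentedA Q.toProAlgData P.toProAlgData Ψ ∧
        CompatibleA P.toProAlgData P.toProAlgData
          (compSet P.toProAlgData Q.toProAlgData P.toProAlgData Ω Ψ ∪
            idSet P.toProAlgData) ∧
        CompatibleA Q.toProAlgData Q.toProAlgData
          (compSet Q.toProAlgData P.toProAlgData Q.toProAlgData Ψ Ω ∪
            idSet Q.toProAlgData) := by
  -- compatibility of the canonical family `e₁ j = Λ ∘ (id ⊗ hQ j) ∘ h₂`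
  have he₁ : ∀ (j j' : J) (h : j ≤ j'),
      (map (Algebra.TensorProduct.comm K C₂ C₁).toAlgHom
          (AlgHom.id K (Q.obj j))).comp
        ((Algebra.TensorProduct.assoc K K K C₂ C₁ (Q.obj j)).symm.toAlgHom.comp
          ((map (AlgHom.id K C₂) (hQ j)).comp h₂))
      = (map (AlgHom.id K (C₁ ⊗[K] C₂)) (Q.tr h)).comp
        ((map (Algebra.TensorProduct.comm K C₂ C₁).toAlgHom
            (AlgHom.id K (Q.obj j'))).comp
          ((Algebra.TensorProduct.assoc K K K C₂ C₁ (Q.obj j')).symm.toAlgHom.comp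
            ((map (AlgHom.id K C₂) (hQ j')).comp h₂))) := by
    intro j j' h
    rw [lam_nat' (Q.tr h) ((map (AlgHom.id K C₂) (hQ j')).comp h₂),
      mapid_comp' (map (AlgHom.id K C₁) (Q.tr h)) (hQ j') h₂, ← hhQ h]
  obtain ⟨Ω, hΩrep, hΩprop0, hΩuniq⟩ := hPuniv J Q
    (fun j => (map (Algebra.TensorProduct.comm K C₂ C₁).toAlgHom
        (AlgHom.id K (Q.obj j))).comp
      ((Algebra.TensorProduct.assoc K K K C₂ C₁ (Q.obj j)).symm.toAlgHom.comp
        ((map (AlgHom.id K C₂) (hQ j)).comp h₂)))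
    (fun {j j'} h => he₁ j j' h)
  -- the adjoint family f i : D →ₐ C₁ ⊗ P_i
  have hex : ∀ i : I, ∃! fh : D →ₐ[K] C₁ ⊗[K] (P.obj i : Type),
      (Algebra.TensorProduct.assoc K K K C₂ C₁ (P.obj i)).toAlgHom.comp
        ((map (Algebra.TensorProduct.comm K C₁ C₂).toAlgHom
            (AlgHom.id K (P.obj i))).comp (hP i))
      = (map (AlgHom.id K C₂) fh).comp h₂ :=
    fun i => huniv₂ _ _
  choose f hf0 hfuniq0 using hex
  have hf : ∀ i : I,
      (Algebra.TensorProduct.assoc K K K C₂ C₁ (P.obj i)).toAlgHom.comp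
        ((map (Algebra.TensorProduct.comm K C₁ C₂).toAlgHom
            (AlgHom.id K (P.obj i))).comp (hP i))
      = (map (AlgHom.id K C₂) (f i)).comp h₂ := fun i => hf0 i
  have hfuniq : ∀ (i : I) (y : D →ₐ[K] C₁ ⊗[K] (P.obj i : Type)),
      (Algebra.TensorProduct.assoc K K K C₂ C₁ (P.obj i)).toAlgHom.comp
        ((map (Algebra.TensorProduct.comm K C₁ C₂).toAlgHom
            (AlgHom.id K (P.obj i))).comp (hP i))
      = (map (AlgHom.id K C₂) y).comp h₂ → y = f i := fun i y hy => hfuniq0 i y hy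
  have hfc : ∀ {i i' : I} (h : i ≤ i'),
      f i = (map (AlgHom.id K C₁) (P.tr h)).comp (f i') := by
    intro i i' h
    refine ((hfuniq i) _ ?_).symm
    rw [← mapid_comp' (map (AlgHom.id K C₁) (P.tr h)) (f i') h₂, ← hf i',
      lam'_nat' (P.tr h) (hP i'), ← hhP h]
  obtain ⟨Ψ, hΨrep, hΨprop0, hΨuniq⟩ := hQuniv I P f (fun {i i'} h => hfc h)
  -- every element of `compSet Ω Ψ` satisfies the universal equation of `hP`
  have hPc : ∀ θ ∈ compSet P.toProAlgData Q.toProAlgData P.toProAlgData Ω Ψ,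
      hP θ.2.1 = (map (AlgHom.id K (C₁ ⊗[K] C₂)) θ.2.2).comp (hP θ.1) := by
    rintro θ ⟨i, j, j', hj, i', F, g, hF, hg, rfl⟩
    have hFprop : (map (Algebra.TensorProduct.comm K C₂ C₁).toAlgHom
          (AlgHom.id K (Q.obj j'))).comp
        ((Algebra.TensorProduct.assoc K K K C₂ C₁ (Q.obj j')).symm.toAlgHom.comp
          ((map (AlgHom.id K C₂) (hQ j')).comp h₂))
        = (map (AlgHom.id K (C₁ ⊗[K] C₂)) F).comp (hP i) := hΩprop0 ⟨i, j', F⟩ hF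
    have hgprop : f i' = (map (AlgHom.id K C₁) g).comp (hQ j) :=
      hΨprop0 ⟨j, i', g⟩ hg
    have start := (lam_lam' (hP i')).symm
    rw [start, hf i', hgprop,
      ← mapid_comp' (map (AlgHom.id K C₁) g) (hQ j) h₂,
      ← lam_nat' g ((map (AlgHom.id K C₂) (hQ j)).comp h₂),
      he₁ j j' hj, hFprop, mapid_comp' (Q.tr hj) F (hP i),
      mapid_comp' g ((Q.tr hj).comp F) (hP i)]
  -- every element of `compSet Ψ Ω` satisfies the universal equation of `hQ`
  have hQc : ∀ θ ∈ compSet Q.toProAlgData P.toProAlgData Q.toProAlgData Ψ Ω,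
      hQ θ.2.1 = (map (AlgHom.id K C₁) θ.2.2).comp (hQ θ.1) := by
    rintro θ ⟨j, i, i', hi, l, g, F, hg, hF, rfl⟩
    have hFprop : (map (Algebra.TensorProduct.comm K C₂ C₁).toAlgHom
          (AlgHom.id K (Q.obj l))).comp
        ((Algebra.TensorProduct.assoc K K K C₂ C₁ (Q.obj l)).symm.toAlgHom.comp
          ((map (AlgHom.id K C₂) (hQ l)).comp h₂))
        = (map (AlgHom.id K (C₁ ⊗[K] C₂)) F).comp (hP i) := hΩprop0 ⟨i, l, F⟩ hF
    have hgprop : f i' = (map (AlgHom.id K C₁) g).comp (hQ j) :=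
      hΨprop0 ⟨j, i', g⟩ hg
    obtain ⟨u, hu0, huuniq0⟩ := huniv₂ (C₁ ⊗[K] (Q.obj l : Type))
      ((map (AlgHom.id K C₂) (hQ l)).comp h₂)
    have huuniq : ∀ y : D →ₐ[K] C₁ ⊗[K] (Q.obj l : Type),
        (map (AlgHom.id K C₂) (hQ l)).comp h₂
          = (map (AlgHom.id K C₂) y).comp h₂ → y = u := fun y hy => huuniq0 y hy
    have h1 : hQ l = u := huuniq (hQ l) rfl
    have s1 : (map (AlgHom.id K C₂)
          ((map (AlgHom.id K C₁) g).comp (hQ j))).comp h₂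
        = (Algebra.TensorProduct.assoc K K K C₂ C₁ (P.obj i')).toAlgHom.comp
          ((map (Algebra.TensorProduct.comm K C₁ C₂).toAlgHom
              (AlgHom.id K (P.obj i'))).comp (hP i')) := by
      rw [← hgprop]; exact (hf i').symm
    have s2 : (map (AlgHom.id K C₂)
          ((map (AlgHom.id K C₁) ((P.tr hi).comp g)).comp (hQ j))).comp h₂
        = (Algebra.TensorProduct.assoc K K K C₂ C₁ (P.obj i)).toAlgHom.comp
          ((map (Algebra.TensorProduct.comm K C₁ C₂).toAlgHom
              (AlgHom.id K (P.obj i))).comp (hP i)) := by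
      rw [← mapid_comp (P.tr hi) g, AlgHom.comp_assoc,
        ← mapid_comp (map (AlgHom.id K C₁) (P.tr hi))
          ((map (AlgHom.id K C₁) g).comp (hQ j)),
        AlgHom.comp_assoc, s1, lam'_nat' (P.tr hi) (hP i'), ← hhP hi]
    have s3 : (map (AlgHom.id K C₂)
          ((map (AlgHom.id K C₁) (F.comp ((P.tr hi).comp g))).comp
            (hQ j))).comp h₂
        = (map (AlgHom.id K C₂) (hQ l)).comp h₂ := by
      rw [← mapid_comp F ((P.tr hi).comp g), AlgHom.comp_assoc,
        ← mapid_comp (map (AlgHom.id K C₁) F)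
          ((map (AlgHom.id K C₁) ((P.tr hi).comp g)).comp (hQ j)),
        AlgHom.comp_assoc, s2, lam'_nat' F (hP i), ← hFprop,
        lam'_lam ((map (AlgHom.id K C₂) (hQ l)).comp h₂)]
    have h2 : (map (AlgHom.id K C₁) (F.comp ((P.tr hi).comp g))).comp (hQ j)
        = u := huuniq _ s3.symm
    rw [h1]; exact h2.symm
  -- glue everything using the uniqueness clauses
  obtain ⟨Ω₀P, hΩ₀Prep, hΩ₀Pprop, hΩ₀Puniq⟩ := hPuniv I P hP (fun {i i'} h => hhP h)
  obtain ⟨Ω₀Q, hΩ₀Qrep, hΩ₀Qprop, hΩ₀Quniq⟩ := hQuniv J Q hQ (fun {j j'} h => hhQ h)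
  have hidP : ∀ ω ∈ idSet P.toProAlgData,
      hP ω.2.1 = (map (AlgHom.id K (C₁ ⊗[K] C₂)) ω.2.2).comp (hP ω.1) := by
    rintro ω ⟨i, i', h, rfl⟩; exact hhP h
  have hidQ : ∀ ω ∈ idSet Q.toProAlgData,
      hQ ω.2.1 = (map (AlgHom.id K C₁) ω.2.2).comp (hQ ω.1) := by
    rintro ω ⟨j, j', h, rfl⟩; exact hhQ h
  have cP1 := hΩ₀Puniq _ (compSet_rep P Q P Ω Ψ hΩrep hΨrep) hPc
  have cP2 := hΩ₀Puniq _ (idSet_rep P) hidP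
  have cQ1 := hΩ₀Quniq _ (compSet_rep Q P Q Ψ Ω hΨrep hΩrep) hQc
  have cQ2 := hΩ₀Quniq _ (idSet_rep Q) hidQ
  exact ⟨Ω, hΩrep, fun ω hω => hΩprop0 ω hω, Ψ, hΨrep,
    glue P P Ω₀P _ _ hΩ₀Prep.1 cP1 cP2,
    glue Q Q Ω₀Q _ _ hΩ₀Qrep.1 cQ1 cQ2⟩


end
end

section
/- Let B = (B, (u_{kl})) be a matrix pseudogroup Hopf algebra with n×n matrix of generators, and let C = K[x₁,…,x_m] be the polynomial algebra. For each p ≥ 1 let A_p be the universal algebra on generators a_{p,k,l,i₁,…,i_m} (1 ≤ k,l ≤ n, i_j ≥ 0, Σ i_j ≤ p) such that u_{kl} ↦ Σ_{i₁+⋯+i_m ≤ p} x₁^{i₁}⋯x_m^{i_m} ⊗ a_{p,k,l,i₁,…,i_m} defines an algebra morphism h_p : B → C ⊗ A_p. Then for p ≤ p', the assignment a_{p',k,l,i₁,…,i_m} ↦ a_{p,k,l,i₁,…,i_m} if Σ_j i_j ≤ p and ↦ 0 otherwise, defines an algebra morphism A^{p'}_p : A_{p'} → A_p, and these maps satisfy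 A^p_p = id and A^{p''}_p = A^{p'}_p ∘ A^{p''}_{p'} for p ≤ p' ≤ p''. -/
open TensorProduct

/-- The finite set of multi-indices `i : Fin m → ℕ` with `∑ j, i j ≤ p`. -/
noncomputable def multiIdx (m p : ℕ) : Finset (Fin m → ℕ) :=
  (Fintype.piFinset fun _ : Fin m => Finset.range (p + 1)).filter
    (fun i => ∑ j, i j ≤ p)

/-- The monomial `x₁^{i₁} ⋯ x_m^{i_m}` in `K[x₁,…,x_m]`. -/
noncomputable def mono (K : Type) [Field K] {m : ℕ} (i : Fin m → ℕ) :
    MvPolynomial (Fin m) K :=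
  ∏ j, MvPolynomial.X j ^ i j

lemma mem_multiIdx {m p : ℕ} {i : Fin m → ℕ} :
    i ∈ multiIdx m p ↔ ∑ j, i j ≤ p := by
  unfold multiIdx
  simp only [Finset.mem_filter, Fintype.mem_piFinset, Finset.mem_range,
    Nat.lt_succ_iff, and_iff_right_iff_imp]
  intro hs j
  exact le_trans (Finset.single_le_sum (fun _ _ => Nat.zero_le _)
    (Finset.mem_univ j)) hs

lemma mono_zero (K : Type) [Field K] {m : ℕ} : mono K (0 : Fin m → ℕ) = 1 := by
  simp [mono]

universe u

section TransitionAux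

variable {K : Type} [Field K] {n m : ℕ} {Acar : Type u} [Ring Acar] [Algebra K Acar]

/-- The morphism from a free algebra hitting a chosen family of values. -/
noncomputable def dMap (v : Fin n → Fin n → (Fin m → ℕ) → Acar) :
    FreeAlgebra K (Fin n × Fin n × (Fin m → ℕ)) →ₐ[K] Acar :=
  FreeAlgebra.lift K fun t => v t.1 t.2.1 t.2.2

instance smallDRange (v : Fin n → Fin n → (Fin m → ℕ) → Acar) :
    Small.{0} ↥((dMap (K := K) v).range) :=
  small_of_surjective (dMap (K := K) v).rangeRestrict_surjective

/-- A `Type 0` model of the subalgebra generated by the chosen values. -/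
noncomputable def shE (v : Fin n → Fin n → (Fin m → ℕ) → Acar) : Type :=
  Shrink.{0} ↥((dMap (K := K) v).range)

noncomputable instance (v : Fin n → Fin n → (Fin m → ℕ) → Acar) :
    Ring (shE (K := K) v) :=
  inferInstanceAs (Ring (Shrink _))

noncomputable instance (v : Fin n → Fin n → (Fin m → ℕ) → Acar) :
    Algebra K (shE (K := K) v) :=
  inferInstanceAs (Algebra K (Shrink _))

noncomputable def eqvE (v : Fin n → Fin n → (Fin m → ℕ) → Acar) :
    shE (K := K) v ≃ₐ[K] ↥((dMap (K := K) v).range) :=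
  Shrink.algEquiv K _

noncomputable def iotaE (v : Fin n → Fin n → (Fin m → ℕ) → Acar) :
    shE (K := K) v →ₐ[K] Acar :=
  ((dMap (K := K) v).range.val).comp (eqvE v).toAlgHom

lemma iotaE_inj (v : Fin n → Fin n → (Fin m → ℕ) → Acar) :
    Function.Injective (iotaE (K := K) v) :=
  Subtype.val_injective.comp (eqvE (K := K) v).injective

lemma mem_dMap_range (v : Fin n → Fin n → (Fin m → ℕ) → Acar)
    (k : Fin n) (l : Fin n) (i : Fin m → ℕ) : v k l i ∈ (dMap (K := K) v).range :=
  ⟨FreeAlgebra.ι K (k, l, i), by simp [dMap]⟩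

noncomputable def eltE (v : Fin n → Fin n → (Fin m → ℕ) → Acar)
    (k : Fin n) (l : Fin n) (i : Fin m → ℕ) : shE (K := K) v :=
  (eqvE v).symm ⟨v k l i, mem_dMap_range v k l i⟩

lemma iotaE_eltE (v : Fin n → Fin n → (Fin m → ℕ) → Acar)
    (k : Fin n) (l : Fin n) (i : Fin m → ℕ) :
    iotaE (K := K) v (eltE v k l i) = v k l i := by
  simp [iotaE, eltE]

lemma eltE_zero (v : Fin n → Fin n → (Fin m → ℕ) → Acar)
    (k : Fin n) (l : Fin n) (i : Fin m → ℕ) (hz : v k l i = 0) :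
    eltE (K := K) v k l i = 0 := by
  have h0 : (⟨v k l i, mem_dMap_range v k l i⟩ : ↥((dMap (K := K) v).range)) = 0 :=
    Subtype.ext hz
  rw [eltE, h0, map_zero]

/-- The induced map on tensor products with the polynomial algebra. -/
noncomputable def phiE (v : Fin n → Fin n → (Fin m → ℕ) → Acar) :
    MvPolynomial (Fin m) K ⊗[K] shE (K := K) v →ₐ[K]
      MvPolynomial (Fin m) K ⊗[K] Acar :=
  Algebra.TensorProduct.map (AlgHom.id K (MvPolynomial (Fin m) K)) (iotaE v)

lemma phiE_tmul (v : Fin n → Fin n → (Fin m → ℕ) → Acar)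
    (x : MvPolynomial (Fin m) K) (y : shE (K := K) v) :
    phiE (K := K) v (x ⊗ₜ[K] y) = x ⊗ₜ[K] iotaE v y := by
  simp [phiE]

lemma phiE_inj (v : Fin n → Fin n → (Fin m → ℕ) → Acar) :
    Function.Injective (phiE (K := K) v) := by
  have h1 : (phiE (K := K) v).toLinearMap =
      LinearMap.lTensor (MvPolynomial (Fin m) K) (iotaE (K := K) v).toLinearMap :=
    TensorProduct.ext' fun x y => by simp [phiE]
  intro x y hxy
  refine Module.Flat.lTensor_preserves_injective_linearMap
    (M := MvPolynomial (Fin m) K) (iotaE (K := K) v).toLinearMap (iotaE_inj v) ?_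
  rw [← h1]
  exact hxy

variable {B : Type} [Ring B] [Algebra K B]

/-- Factoring a morphism `B → C ⊗ Acar` through `C ⊗ (small model)`. -/
noncomputable def psiE (v : Fin n → Fin n → (Fin m → ℕ) → Acar)
    (f : B →ₐ[K] MvPolynomial (Fin m) K ⊗[K] Acar)
    (hf : ∀ b, f b ∈ (phiE (K := K) v).range) :
    B →ₐ[K] MvPolynomial (Fin m) K ⊗[K] shE (K := K) v :=
  ((AlgEquiv.ofInjective (phiE (K := K) v) (phiE_inj v)).symm.toAlgHom).comp
    (f.codRestrict (phiE (K := K) v).range hf)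

lemma phiE_psiE (v : Fin n → Fin n → (Fin m → ℕ) → Acar)
    (f : B →ₐ[K] MvPolynomial (Fin m) K ⊗[K] Acar)
    (hf : ∀ b, f b ∈ (phiE (K := K) v).range) (b : B) :
    phiE (K := K) v (psiE v f hf b) = f b := by
  have h2 : ∀ z : ((phiE (K := K) v).range),
      phiE (K := K) v ((AlgEquiv.ofInjective (phiE (K := K) v) (phiE_inj v)).symm z)
        = ↑z := by
    intro z
    rw [← AlgEquiv.ofInjective_apply (phiE (K := K) v) (phiE_inj v),
      AlgEquiv.apply_symm_apply]
  exact h2 ⟨f b, hf b⟩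

end TransitionAux

/-- Transport an identity algebra morphism along an equality of indices. -/
noncomputable def diagCast {K : Type} [Field K] (A : ℕ → AlgCat.{u} K)
    {p p' : ℕ} (hq : p' = p) : A p' →ₐ[K] A p := by
  subst hq; exact AlgHom.id K (A p')

lemma diagCast_rfl {K : Type} [Field K] (A : ℕ → AlgCat.{u} K) (p : ℕ) :
    diagCast A (rfl : p = p) = AlgHom.id K (A p) := rfl

/-- Transport an algebra morphism into `A 0` along `p = 0`. -/
noncomputable def zeroCast {K : Type} [Field K] (A : ℕ → AlgCat.{u} K)
    {p p' : ℕ} (hp : p = 0) (f : A p' →ₐ[K] A 0) : A p' →ₐ[K] A p := by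
  subst hp; exact f

set_option maxHeartbeats 1000000 in
set_option synthInstance.maxHeartbeats 400000 in
/-- for a matrix pseudogroup `(B,(u_{kl}))` and the universal
algebras `A_p` of the example, the assignments
`a_{p',k,l,i} ↦ a_{p,k,l,i}` (if `|i| ≤ p`) and `↦ 0` (otherwise) define
algebra morphisms `A^{p'}_p : A_{p'} → A_p` for `p ≤ p'`, and these transition
morphisms satisfy `A^p_p = id` and `A^{p''}_p = A^{p'}_p ∘ A^{p''}_{p'}`. -/
theorem stmt_11 {K : Type} [Field K] (B : Type) [Ring B] [Algebra K B]
    (n m : ℕ) (u : Fin n → Fin n → B)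
    -- pseudogroup structure on B:
    (hgen : Algebra.adjoin K {b : B | ∃ k l, b = u k l} = ⊤)
    (Δ : B →ₐ[K] B ⊗[K] B)
    (hΔu : ∀ k l, Δ (u k l) = ∑ r : Fin n, u k r ⊗ₜ[K] u r l)
    (T : B →ₗ[K] B)
    (hTmul : ∀ x y : B, T (x * y) = T y * T x) (hTone : T 1 = 1)
    (hTT : ∀ x : B, T (T x) = x)
    (hTu₁ : ∀ k l, ∑ r : Fin n, T (u k r) * u r l = if k = l then 1 else 0)
    (hTu₂ : ∀ k l, ∑ r : Fin n, u k r * T (u r l) = if k = l then 1 else 0)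
    -- the universal algebras A_p with generators a_{p,k,l,i} and morphisms h_p:
    (A : ℕ → AlgCat K)
    (a : ∀ p : ℕ, Fin n → Fin n → (Fin m → ℕ) → A p)
    (h : ∀ p : ℕ, B →ₐ[K] (MvPolynomial (Fin m) K) ⊗[K] A p)
    (hh : ∀ p, 1 ≤ p → ∀ k l, h p (u k l) =
      ∑ i ∈ multiIdx m p, mono K i ⊗ₜ[K] a p k l i)
    (huniv : ∀ p, 1 ≤ p →
      ∀ (E : Type) [Ring E] [Algebra K E]
        (g : B →ₐ[K] (MvPolynomial (Fin m) K) ⊗[K] E)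
        (e : Fin n → Fin n → (Fin m → ℕ) → E),
        (∀ k l, g (u k l) = ∑ i ∈ multiIdx m p, mono K i ⊗ₜ[K] e k l i) →
        ∃! α : A p →ₐ[K] E,
          ∀ k l, ∀ i ∈ multiIdx m p, α (a p k l i) = e k l i) :
    ∃ tr : ∀ p p' : ℕ, p ≤ p' → (A p' →ₐ[K] A p),
      (∀ p p' (hpp' : p ≤ p'), 1 ≤ p → ∀ k l, ∀ i ∈ multiIdx m p',
        tr p p' hpp' (a p' k l i) =
          if (∑ j, i j) ≤ p then a p k l i else 0) ∧
      (∀ p, 1 ≤ p → tr p p le_rfl = AlgHom.id K (A p)) ∧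
      (∀ p p' p'' (h₁ : p ≤ p') (h₂ : p' ≤ p''), 1 ≤ p →
        tr p p'' (le_trans h₁ h₂) = (tr p p' h₁).comp (tr p' p'' h₂)) := by
  classical
  -- the values of the transition maps on generators
  have hsum : ∀ p p', p ≤ p' → 1 ≤ p → ∀ k l, h p (u k l) =
      ∑ i ∈ multiIdx m p', mono K i ⊗ₜ[K]
        (if (∑ j, i j) ≤ p then a p k l i else 0) := by
    intro p p' hpp' hp k l
    rw [hh p hp k l]
    have hsub : multiIdx m p ⊆ multiIdx m p' := fun i hi =>
      mem_multiIdx.mpr (le_trans (mem_multiIdx.mp hi) hpp')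
    rw [← Finset.sum_subset hsub (by
      intro i _ hni
      rw [if_neg (fun hle => hni (mem_multiIdx.mpr hle)), TensorProduct.tmul_zero])]
    refine Finset.sum_congr rfl fun i hi => ?_
    rw [if_pos (mem_multiIdx.mp hi)]
  -- membership of the values of `h p` in the image of the small model
  have hmem : ∀ p, 1 ≤ p → ∀ b : B, h p b ∈
      (phiE (K := K) (fun k l i => if (∑ j, i j) ≤ p then a p k l i else 0)).range := by
    intro p hp b
    have hb : b ∈ Algebra.adjoin K {b : B | ∃ k l, b = u k l} := by
      rw [hgen]; exact Algebra.mem_top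
    induction hb using Algebra.adjoin_induction with
    | mem x hx =>
        obtain ⟨k, l, rfl⟩ := hx
        rw [hsum p p le_rfl hp k l]
        refine Subalgebra.sum_mem _ fun i hi => ?_
        refine ⟨mono K i ⊗ₜ[K] eltE _ k l i, ?_⟩
        show phiE (K := K) (fun k l i => if (∑ j, i j) ≤ p then a p k l i else 0) (mono K i ⊗ₜ[K] eltE _ k l i) = _
        rw [phiE_tmul, iotaE_eltE]
    | algebraMap r =>
        rw [AlgHom.commutes]
        exact Subalgebra.algebraMap_mem _ r
    | add x y hx hy ihx ihy =>
        rw [map_add]; exact add_mem ihx ihy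
    | mul x y hx hy ihx ihy =>
        rw [map_mul]; exact mul_mem ihx ihy
  -- the factored morphism has the required expansion for every `p' ≥ p`
  have spec : ∀ p p' (hpp' : p ≤ p') (hp : 1 ≤ p), ∀ k l,
      psiE (fun k l i => if (∑ j, i j) ≤ p then a p k l i else 0) (h p)
        (hmem p hp) (u k l) =
      ∑ i ∈ multiIdx m p', mono K i ⊗ₜ[K]
        eltE (fun k l i => if (∑ j, i j) ≤ p then a p k l i else 0) k l i := by
    intro p p' hpp' hp k l
    apply phiE_inj
    rw [phiE_psiE, hsum p p' hpp' hp k l, map_sum]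
    refine Finset.sum_congr rfl fun i hi => ?_
    rw [phiE_tmul, iotaE_eltE]
  -- the universal property applied to the small model
  have key : ∀ p p' (hpp' : p ≤ p') (hp : 1 ≤ p),
      ∃! β : A p' →ₐ[K]
          shE (fun k l i => if (∑ j, i j) ≤ p then a p k l i else 0),
        ∀ k l, ∀ i ∈ multiIdx m p', β (a p' k l i) =
          eltE (fun k l i => if (∑ j, i j) ≤ p then a p k l i else 0) k l i :=
    fun p p' hpp' hp =>
      huniv p' (hp.trans hpp')
        (shE (fun k l i => if (∑ j, i j) ≤ p then a p k l i else 0))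
        (psiE _ (h p) (hmem p hp))
        (fun k l i => eltE _ k l i)
        (spec p p' hpp' hp)
  -- fallback morphism into `A 0` (its properties are never needed)
  have Z : ∀ p', 1 ≤ p' → (A p' →ₐ[K] A 0) := by
    intro p' hp'
    set C := MvPolynomial (Fin m) K with hC
    -- `h 0` has small range since `B` lives in `Type 0`
    haveI : Small.{0} ↥(h 0).range :=
      small_of_surjective (h 0).rangeRestrict_surjective
    letI : Ring (Shrink ↥(h 0).range) := inferInstanceAs (Ring (Shrink _))
    letI : Algebra K (Shrink ↥(h 0).range) :=
      inferInstanceAs (Algebra K (Shrink _))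
    let eqR : Shrink ↥(h 0).range ≃ₐ[K] ↥(h 0).range := Shrink.algEquiv K _
    let ψ₀ : B →ₐ[K] Shrink ↥(h 0).range :=
      (eqR.symm.toAlgHom).comp (h 0).rangeRestrict
    let g₀ : B →ₐ[K] C ⊗[K] Shrink ↥(h 0).range :=
      (Algebra.TensorProduct.includeRight).comp ψ₀
    have hg : ∀ k l, g₀ (u k l) = ∑ i ∈ multiIdx m p',
        mono K i ⊗ₜ[K] (if i = 0 then ψ₀ (u k l) else 0) := by
      intro k l
      have h0mem : (0 : Fin m → ℕ) ∈ multiIdx m p' :=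
        mem_multiIdx.mpr (by simp)
      rw [Finset.sum_eq_single_of_mem 0 h0mem
        (fun i _ hne => by rw [if_neg hne, TensorProduct.tmul_zero])]
      rw [if_pos rfl, mono_zero]
      rfl
    let α := (huniv p' hp' (Shrink ↥(h 0).range) g₀
      (fun k l i => if i = 0 then ψ₀ (u k l) else 0) hg).choose
    -- evaluation at `0` on the polynomial factor
    have hcomm1 : ∀ (x : C) (y : (A 0 : Type _)),
        Commute (((Algebra.ofId K (A 0)).comp
          (MvPolynomial.aeval (0 : Fin m → K))) x) y := by
      intro x y
      simpa [Algebra.ofId_apply] using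
        Algebra.commute_algebraMap_left ((MvPolynomial.aeval (0 : Fin m → K)) x) y
    let φ₁ : C ⊗[K] (A 0 : Type _) →ₐ[K] A 0 :=
      Algebra.TensorProduct.lift
        ((Algebra.ofId K (A 0)).comp (MvPolynomial.aeval (0 : Fin m → K)))
        (AlgHom.id K (A 0)) hcomm1
    exact (φ₁.comp ((h 0).range.val.comp eqR.toAlgHom)).comp α
  -- package the transition morphisms opaquely, with proofs as arguments
  obtain ⟨TR, hTRval, hTRcomp⟩ :
      ∃ TR : ∀ p p' : ℕ, p ≤ p' → 1 ≤ p → (A p' →ₐ[K] A p),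
        (∀ p p' (hpp' : p ≤ p') (hp : 1 ≤ p) k l, ∀ i ∈ multiIdx m p',
          TR p p' hpp' hp (a p' k l i) =
            if (∑ j, i j) ≤ p then a p k l i else 0) ∧
        (∀ p p' p'' (h₁ : p ≤ p') (h₂ : p' ≤ p'') (hp : 1 ≤ p)
          (hp' : 1 ≤ p') (hq : p ≤ p''),
          TR p p'' hq hp = (TR p p' h₁ hp).comp (TR p' p'' h₂ hp')) := by
    refine ⟨fun p p' hpp' hp =>
      (iotaE (fun k l i => if (∑ j, i j) ≤ p then a p k l i else 0)).comp
        (key p p' hpp' hp).choose, ?_, ?_⟩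
    · intro p p' hpp' hp k l i hi
      beta_reduce
      rw [AlgHom.comp_apply, (key p p' hpp' hp).choose_spec.1 k l i hi,
        iotaE_eltE]
    · intro p p' p'' h₁ h₂ hp hp' hq
      beta_reduce
      have hβ : (key p p'' hq hp).choose =
          ((key p p' h₁ hp).choose).comp
            ((iotaE (fun k l i => if (∑ j, i j) ≤ p' then a p' k l i else 0)).comp
              (key p' p'' h₂ hp').choose) := by
        refine (key p p'' hq hp).unique (key p p'' hq hp).choose_spec.1 ?_
        intro k l i hi
        rw [AlgHom.comp_apply, AlgHom.comp_apply,
          (key p' p'' h₂ hp').choose_spec.1 k l i hi, iotaE_eltE]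
        by_cases hle : (∑ j, i j) ≤ p'
        · rw [if_pos hle]
          exact (key p p' h₁ hp).choose_spec.1 k l i (mem_multiIdx.mpr hle)
        · rw [if_neg hle, map_zero]
          exact (eltE_zero _ k l i
            (if_neg (fun hle' => hle (le_trans hle' h₁)))).symm
      rw [hβ, ← AlgHom.comp_assoc]
  -- total fallback morphisms into `A 0`
  have Ztot : ∀ p' : ℕ, (A p' →ₐ[K] A 0) := fun p' =>
    if h5 : 1 ≤ p' then Z p' h5 else diagCast A (by omega)
  -- assemble the transition morphisms
  refine ⟨fun p p' hpp' =>
    if heq : p' = p then diagCast A heq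
    else if hp : 1 ≤ p then TR p p' hpp' hp
    else zeroCast A (by omega) (Ztot p'), ?_, ?_, ?_⟩
  · -- values on generators
    intro p p' hpp' hp k l i hi
    beta_reduce
    by_cases heq : p' = p
    · subst heq
      rw [dif_pos rfl, diagCast_rfl, AlgHom.id_apply,
        if_pos (mem_multiIdx.mp hi)]
    · rw [dif_neg heq, dif_pos hp]
      exact hTRval p p' hpp' hp k l i hi
  · -- identity
    intro p hp
    beta_reduce
    rw [dif_pos rfl, diagCast_rfl]
  · -- composition
    intro p p' p'' h₁ h₂ hp
    have hp' : 1 ≤ p' := hp.trans h₁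
    beta_reduce
    by_cases e1 : p' = p
    · subst e1
      by_cases e2 : p'' = p'
      · subst e2
        simp only [dif_pos rfl, diagCast_rfl, dite_true, AlgHom.id_comp]
        try rfl
      · simp only [dif_neg e2, dif_pos hp, dif_pos rfl, diagCast_rfl,
          dite_true, AlgHom.id_comp]
        try rfl
    · by_cases e2 : p'' = p'
      · subst e2
        simp only [dif_neg e1, dif_pos hp, dif_pos rfl, diagCast_rfl,
          dite_true, AlgHom.comp_id]
        try rfl
      · have e3 : ¬ p'' = p := by omega
        simp only [dif_neg e3, dif_neg e1, dif_neg e2, dif_pos hp, dif_pos hp']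
        exact hTRcomp p p' p'' h₁ h₂ hp hp' (le_trans h₁ h₂)
end

section
/- With notation as in the pseudogroup example: for each p ≥ 1, the assignment a_{2p,k,l,i₁,…,i_m} ↦ Σ_{r=1}^{n} Σ_{t_j+s_j=i_j} a_{p,k,r,t₁,…,t_m} ⊗ a_{p,r,l,s₁,…,s_m} defines an algebra morphism Δ̂_p : A_{2p} → A_p ⊗ A_p. -/
open TensorProduct

/-- For a multi-index `i`, the finite set of splittings `t` with `t ≤ i`
componentwise, `|t| ≤ p` and `|i - t| ≤ p`. -/
noncomputable def splittings {m : ℕ} (p : ℕ) (i : Fin m → ℕ) :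
    Finset (Fin m → ℕ) :=
  (Fintype.piFinset fun j : Fin m => Finset.range (i j + 1)).filter
    (fun t => (∑ j, t j) ≤ p ∧ (∑ j, (i j - t j)) ≤ p)

lemma mem_splittings {m p : ℕ} {i t : Fin m → ℕ} :
    t ∈ splittings p i ↔ (∀ j, t j ≤ i j) ∧ (∑ j, t j) ≤ p ∧ (∑ j, (i j - t j)) ≤ p := by
  simp only [splittings, Finset.mem_filter, Fintype.mem_piFinset,
    Finset.mem_range, Nat.lt_succ_iff, and_assoc]

lemma mono_add {K : Type} [Field K] {m : ℕ} (t s : Fin m → ℕ) :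
    mono K (fun j => t j + s j) = mono K t * mono K s := by
  simp [mono, pow_add, Finset.prod_mul_distrib]

set_option maxHeartbeats 1000000 in
set_option synthInstance.maxHeartbeats 200000 in
/-- the assignment
`a_{2p,k,l,i} ↦ Σ_r Σ_{t+s=i} a_{p,k,r,t} ⊗ a_{p,r,l,s}` defines an algebra
morphism `Δ̂_p : A_{2p} → A_p ⊗ A_p`. -/
theorem stmt_12 {K : Type} [Field K] (B : Type) [Ring B] [Algebra K B]
    (n m : ℕ) (u : Fin n → Fin n → B)
    -- pseudogroup structure on B:
    (hgen : Algebra.adjoin K {b : B | ∃ k l, b = u k l} = ⊤)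
    (Δ : B →ₐ[K] B ⊗[K] B)
    (hΔu : ∀ k l, Δ (u k l) = ∑ r : Fin n, u k r ⊗ₜ[K] u r l)
    (T : B →ₗ[K] B)
    (hTmul : ∀ x y : B, T (x * y) = T y * T x) (hTone : T 1 = 1)
    (hTT : ∀ x : B, T (T x) = x)
    (hTu₁ : ∀ k l, ∑ r : Fin n, T (u k r) * u r l = if k = l then 1 else 0)
    (hTu₂ : ∀ k l, ∑ r : Fin n, u k r * T (u r l) = if k = l then 1 else 0)
    -- the universal algebras A_p with generators a_{p,k,l,i} and morphisms h_p:
    (A : ℕ → AlgCat K)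
    (a : ∀ p : ℕ, Fin n → Fin n → (Fin m → ℕ) → A p)
    (h : ∀ p : ℕ, B →ₐ[K] (MvPolynomial (Fin m) K) ⊗[K] A p)
    (hh : ∀ p, 1 ≤ p → ∀ k l, h p (u k l) =
      ∑ i ∈ multiIdx m p, mono K i ⊗ₜ[K] a p k l i)
    (huniv : ∀ p, 1 ≤ p →
      ∀ (E : Type) [Ring E] [Algebra K E]
        (g : B →ₐ[K] (MvPolynomial (Fin m) K) ⊗[K] E)
        (e : Fin n → Fin n → (Fin m → ℕ) → E),
        (∀ k l, g (u k l) = ∑ i ∈ multiIdx m p, mono K i ⊗ₜ[K] e k l i) →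
        ∃! α : A p →ₐ[K] E,
          ∀ k l, ∀ i ∈ multiIdx m p, α (a p k l i) = e k l i) :
    ∀ p : ℕ, 1 ≤ p →
      ∃ Δhat : A (2 * p) →ₐ[K] (A p) ⊗[K] (A p),
        ∀ k l, ∀ i ∈ multiIdx m (2 * p),
          Δhat (a (2 * p) k l i) =
            ∑ r : Fin n, ∑ t ∈ splittings p i,
              a p k r t ⊗ₜ[K] a p r l (fun j => i j - t j) := by
  intro p hp
  classical
  set C := MvPolynomial (Fin m) K with hC
  -- the prospective images of the generators
  let e : Fin n → Fin n → (Fin m → ℕ) → (↑(A p) ⊗[K] ↑(A p)) := fun k l i =>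
    ∑ r : Fin n, ∑ t ∈ splittings p i, a p k r t ⊗ₜ[K] a p r l (fun j => i j - t j)
  -- the composite morphism B → C ⊗ (A_p ⊗ A_p)
  let ψ : (C ⊗[K] ↑(A p)) ⊗[K] (C ⊗[K] ↑(A p)) →ₐ[K] C ⊗[K] (↑(A p) ⊗[K] ↑(A p)) :=
    (Algebra.TensorProduct.map (Algebra.TensorProduct.lmul' K) (AlgHom.id K _)).comp
      (Algebra.TensorProduct.tensorTensorTensorComm K K K K C (↑(A p)) C (↑(A p))).toAlgHom
  let g : B →ₐ[K] C ⊗[K] (↑(A p) ⊗[K] ↑(A p)) :=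
    ψ.comp ((Algebra.TensorProduct.map (h p) (h p)).comp Δ)
  have hψ : ∀ (x y : C) (b c : ↑(A p)),
      ψ ((x ⊗ₜ[K] b) ⊗ₜ[K] (y ⊗ₜ[K] c)) = (x * y) ⊗ₜ[K] (b ⊗ₜ[K] c) := by
    intro x y b c
    simp [ψ, Algebra.TensorProduct.tensorTensorTensorComm_tmul,
      Algebra.TensorProduct.lmul'_apply_tmul]
  have hg : ∀ k l, g (u k l) = ∑ i ∈ multiIdx m (2 * p), mono K i ⊗ₜ[K] e k l i := by
    intro k l
    have h1 : g (u k l) = ∑ r : Fin n, ∑ t ∈ multiIdx m p, ∑ s ∈ multiIdx m p,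
        (mono K t * mono K s) ⊗ₜ[K] (a p k r t ⊗ₜ[K] a p r l s) := by
      simp only [g, AlgHom.comp_apply, hΔu, map_sum, Algebra.TensorProduct.map_tmul,
        hh p hp]
      refine Finset.sum_congr rfl fun r _ => ?_
      rw [sum_tmul, map_sum]
      refine Finset.sum_congr rfl fun t _ => ?_
      rw [tmul_sum, map_sum]
      exact Finset.sum_congr rfl fun s _ => hψ _ _ _ _
    have h2 : ∀ i : Fin m → ℕ, mono K i ⊗ₜ[K] e k l i
        = ∑ r : Fin n, ∑ t ∈ splittings p i,
            mono K i ⊗ₜ[K] (a p k r t ⊗ₜ[K] a p r l (fun j => i j - t j)) := by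
      intro i
      simp only [e, tmul_sum]
    have h3 : ∀ r : Fin n, (∑ t ∈ multiIdx m p, ∑ s ∈ multiIdx m p,
        (mono K t * mono K s) ⊗ₜ[K] (a p k r t ⊗ₜ[K] a p r l s))
        = ∑ i ∈ multiIdx m (2 * p), ∑ t ∈ splittings p i,
            mono K i ⊗ₜ[K] (a p k r t ⊗ₜ[K] a p r l (fun j => i j - t j)) := by
      intro r
      rw [← Finset.sum_product', Finset.sum_sigma']
      refine Finset.sum_nbij' (i := fun q => (⟨fun j => q.1 j + q.2 j, q.1⟩ :
          (_ : Fin m → ℕ) × (Fin m → ℕ)))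
        (j := fun q => (q.2, fun j => q.1 j - q.2 j)) ?_ ?_ ?_ ?_ ?_
      · rintro ⟨t, s⟩ hq
        rw [Finset.mem_product, mem_multiIdx, mem_multiIdx] at hq
        obtain ⟨ht, hs⟩ := hq
        rw [Finset.mem_sigma]
        constructor
        · rw [mem_multiIdx, Finset.sum_add_distrib]; omega
        · rw [mem_splittings]
          refine ⟨fun j => Nat.le_add_right _ _, ht, ?_⟩
          simpa using hs
      · rintro ⟨i, t⟩ hq
        rw [Finset.mem_sigma, mem_multiIdx, mem_splittings] at hq
        obtain ⟨-, -, ht, hts⟩ := hq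
        rw [Finset.mem_product, mem_multiIdx, mem_multiIdx]
        exact ⟨ht, hts⟩
      · rintro ⟨t, s⟩ hq
        simp
      · rintro ⟨i, t⟩ hq
        rw [Finset.mem_sigma, mem_splittings] at hq
        have hit : (fun j => t j + (i j - t j)) = i :=
          funext fun j => Nat.add_sub_cancel' (hq.2.1 j)
        simpa using congrArg (fun x => (⟨x, t⟩ : (_ : Fin m → ℕ) × (Fin m → ℕ))) hit
      · rintro ⟨t, s⟩ hq
        simp only
        rw [mono_add]
        congr 1
        simp
    rw [h1]
    simp only [h2, h3]
    exact Finset.sum_comm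
  -- a small subalgebra of A_p ⊗ A_p containing all the prospective images
  let F : ((Fin n × Fin n × (Fin m → ℕ)) × (Fin n × Fin n × (Fin m → ℕ))) →
      (↑(A p) ⊗[K] ↑(A p)) := fun q =>
    a p q.1.1 q.1.2.1 q.1.2.2 ⊗ₜ[K] a p q.2.1 q.2.2.1 q.2.2.2
  let S : Subalgebra K (↑(A p) ⊗[K] ↑(A p)) := Algebra.adjoin K (Set.range F)
  have heS : ∀ k l i, e k l i ∈ S := fun k l i =>
    Subalgebra.sum_mem _ fun r _ => Subalgebra.sum_mem _ fun t _ =>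
      Algebra.subset_adjoin ⟨((k, r, t), (r, l, fun j => i j - t j)), rfl⟩
  haveI hsmall : Small.{0} ↥S := by
    have hSr : S = (FreeAlgebra.lift K F).range :=
      Algebra.adjoin_range_eq_range_freeAlgebra_lift (R := K) (f := F)
    rw [hSr]
    exact small_of_surjective
      (f := fun x : FreeAlgebra K _ =>
        (⟨FreeAlgebra.lift K F x, ⟨x, rfl⟩⟩ : ↥(FreeAlgebra.lift K F).range))
      (by rintro ⟨y, x, rfl⟩; exact ⟨x, rfl⟩)
  let eqE : Shrink.{0} ↥S ≃ₐ[K] ↥S := (Shrink.algEquiv K ↥S)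
  -- the inclusion C ⊗ S → C ⊗ (A_p ⊗ A_p) is injective
  let φ : C ⊗[K] ↥S →ₐ[K] C ⊗[K] (↑(A p) ⊗[K] ↑(A p)) :=
    Algebra.TensorProduct.map (AlgHom.id K C) S.val
  have hφl : φ.toLinearMap = LinearMap.lTensor C S.val.toLinearMap :=
    TensorProduct.ext' fun x y => rfl
  have hφinj : Function.Injective φ := by
    have h1 : Function.Injective (LinearMap.lTensor C S.val.toLinearMap) :=
      Module.Flat.lTensor_preserves_injective_linearMap _ Subtype.val_injective
    intro x y hxy
    apply h1
    rw [← hφl]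
    exact hxy
  -- g factors through C ⊗ S
  have hrange : ∀ x : B, g x ∈ φ.range := by
    intro x
    have hx : x ∈ Algebra.adjoin K {b : B | ∃ k l, b = u k l} := by
      rw [hgen]; trivial
    induction hx using Algebra.adjoin_induction with
    | mem b hb =>
        obtain ⟨k, l, rfl⟩ := hb
        rw [hg]
        exact Subalgebra.sum_mem _ fun i _ =>
          ⟨mono K i ⊗ₜ[K] (⟨e k l i, heS k l i⟩ : ↥S), rfl⟩
    | algebraMap r => rw [AlgHom.commutes]; exact Subalgebra.algebraMap_mem _ _
    | add x y hx hy ihx ihy => rw [map_add]; exact add_mem ihx ihy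
    | mul x y hx hy ihx ihy => rw [map_mul]; exact mul_mem ihx ihy
  let ρ : (C ⊗[K] ↥S) ≃ₐ[K] ↥φ.range := AlgEquiv.ofInjective φ hφinj
  let g2 : B →ₐ[K] C ⊗[K] ↥S :=
    (ρ.symm.toAlgHom).comp (g.codRestrict φ.range hrange)
  have hg2 : ∀ x, φ (g2 x) = g x := by
    intro x
    show φ (ρ.symm ⟨g x, hrange x⟩) = g x
    calc φ (ρ.symm ⟨g x, hrange x⟩)
        = ((ρ (ρ.symm ⟨g x, hrange x⟩) : ↥φ.range) : C ⊗[K] (↑(A p) ⊗[K] ↑(A p))) := by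
          rw [AlgEquiv.ofInjective_apply]
      _ = g x := by rw [AlgEquiv.apply_symm_apply]
  -- transfer to the small model
  let e' : Fin n → Fin n → (Fin m → ℕ) → Shrink.{0} ↥S := fun k l i =>
    eqE.symm ⟨e k l i, heS k l i⟩
  let κ : (C ⊗[K] ↥S) →ₐ[K] C ⊗[K] Shrink.{0} ↥S :=
    Algebra.TensorProduct.map (AlgHom.id K C) eqE.symm.toAlgHom
  let g3 : B →ₐ[K] C ⊗[K] Shrink.{0} ↥S := κ.comp g2
  have hg3 : ∀ k l, g3 (u k l) = ∑ i ∈ multiIdx m (2 * p), mono K i ⊗ₜ[K] e' k l i := by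
    intro k l
    have h4 : g2 (u k l)
        = ∑ i ∈ multiIdx m (2 * p), mono K i ⊗ₜ[K] (⟨e k l i, heS k l i⟩ : ↥S) := by
      apply hφinj
      rw [hg2, hg, map_sum]
      exact Finset.sum_congr rfl fun i _ => by
        rw [Algebra.TensorProduct.map_tmul]; rfl
    show κ (g2 (u k l)) = _
    rw [h4, map_sum]
    exact Finset.sum_congr rfl fun i _ => by
      rw [Algebra.TensorProduct.map_tmul]; rfl
  obtain ⟨α, hα, -⟩ := huniv (2 * p) (by omega) (Shrink.{0} ↥S) g3 e' hg3
  refine ⟨(S.val.comp eqE.toAlgHom).comp α, fun k l i hi => ?_⟩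
  have hv := hα k l i hi
  simp only [AlgHom.comp_apply, hv]
  show S.val (eqE (eqE.symm ⟨e k l i, heS k l i⟩)) = _
  rw [AlgEquiv.apply_symm_apply]
  rfl
end

section
/- Let H be a Hopf K-algebra and let V, W be H-comodule algebras with coactions ρ : V → V ⊗ H and ϱ : W → W ⊗ H, with W generated by a set Q and with a finite linearly independent subset δ_w ⊆ V for each w ∈ Q. Then there exists an algebra A and an algebra morphism h : W → V ⊗ A such that: (i) (id_V ⊗ F)(ρ ⊗ id_A)h = (h ⊗ id_H)ϱ, where F is the flip A ⊗ H → H ⊗ A; (ii) for every w ∈ Q, h(w) lies in span{v ⊗ a : v ∈ δ_w}; and (iii) (A, h) is universal among pairs satisfying (i) and (ii). -/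
open TensorProduct

section Toolkit

variable {K : Type} [Field K]

/-- Coordinate equivalence `M ⊗ N ≃ (ι →₀ N)` from a basis of `M`. -/
noncomputable def tcoordEquiv {M : Type} [AddCommGroup M] [Module K M]
    {ι : Type} [DecidableEq ι] (B : Module.Basis ι K M) (N : Type) [AddCommGroup N] [Module K N] :
    M ⊗[K] N ≃ₗ[K] (ι →₀ N) :=
  (TensorProduct.congr B.repr (LinearEquiv.refl K N)).trans
    (TensorProduct.finsuppScalarLeft K N ι)

lemma tcoordEquiv_tmul {M : Type} [AddCommGroup M] [Module K M]
    {ι : Type} [DecidableEq ι] (B : Module.Basis ι K M) {N : Type} [AddCommGroup N] [Module K N]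
    (m : M) (n : N) (i : ι) :
    tcoordEquiv B N (m ⊗ₜ[K] n) i = B.repr m i • n := by
  simp [tcoordEquiv, TensorProduct.congr_tmul,
    TensorProduct.finsuppScalarLeft_apply_tmul_apply]

lemma tcoord_lTensor {M : Type} [AddCommGroup M] [Module K M]
    {ι : Type} [DecidableEq ι] (B : Module.Basis ι K M) {N N' : Type} [AddCommGroup N] [Module K N]
    [AddCommGroup N'] [Module K N'] (f : N →ₗ[K] N') (x : M ⊗[K] N) (i : ι) :
    tcoordEquiv B N' (LinearMap.lTensor M f x) i = f (tcoordEquiv B N x i) := by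
  induction x using TensorProduct.induction_on with
  | zero => simp
  | tmul m n => simp [tcoordEquiv_tmul]
  | add a b ha hb => simp [map_add, Finsupp.add_apply, ha, hb]

/-- Joint injectivity of `lTensor` of a jointly injective family. -/
lemma lTensor_joint_inj {N : Type} [AddCommGroup N] [Module K N]
    {ι' : Type} {Uu : ι' → Type} [∀ j, AddCommGroup (Uu j)] [∀ j, Module K (Uu j)]
    (f : ∀ j, N →ₗ[K] Uu j) (hf : ∀ n, (∀ j, f j n = 0) → n = 0)
    (M : Type) [AddCommGroup M] [Module K M] (x : M ⊗[K] N)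
    (hx : ∀ j, LinearMap.lTensor M (f j) x = 0) : x = 0 := by
  classical
  set B := Module.Basis.ofVectorSpace K M
  apply (tcoordEquiv B N).injective
  rw [map_zero]
  ext i
  simp only [Finsupp.coe_zero, Pi.zero_apply]
  refine hf _ fun j => ?_
  rw [← tcoord_lTensor B (f j) x i, hx j, map_zero]
  simp

lemma rTensor_joint_inj {N : Type} [AddCommGroup N] [Module K N]
    {ι' : Type} {Uu : ι' → Type} [∀ j, AddCommGroup (Uu j)] [∀ j, Module K (Uu j)]
    (f : ∀ j, N →ₗ[K] Uu j) (hf : ∀ n, (∀ j, f j n = 0) → n = 0)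
    (M : Type) [AddCommGroup M] [Module K M] (x : N ⊗[K] M)
    (hx : ∀ j, LinearMap.rTensor M (f j) x = 0) : x = 0 := by
  have key : ∀ j, LinearMap.lTensor M (f j) (TensorProduct.comm K N M x) = 0 := by
    intro j
    have nat : ∀ y : N ⊗[K] M,
        LinearMap.lTensor M (f j) (TensorProduct.comm K N M y) =
          TensorProduct.comm K (Uu j) M (LinearMap.rTensor M (f j) y) := by
      intro y
      induction y using TensorProduct.induction_on with
      | zero => simp
      | tmul n m => simp
      | add a b ha hb => simp [map_add, ha, hb]
    rw [nat, hx j, map_zero]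
  have h0 := lTensor_joint_inj f hf M _ key
  exact (TensorProduct.comm K N M).injective (by simpa using h0)

end Toolkit

section Coeffs

variable {K : Type} [Field K]
variable {V : Type} [AddCommGroup V] [Module K V]
variable {U : Type} [AddCommGroup U] [Module K U]

/-- Every element of the span of `{v ⊗ a | v ∈ s}` is a sum `∑ v ⊗ c v`. -/
lemma exists_coeffs (s : Finset V) (x : V ⊗[K] U)
    (hx : x ∈ Submodule.span K {y : V ⊗[K] U | ∃ v ∈ s, ∃ a : U, y = v ⊗ₜ[K] a}) :
    ∃ c : ↥s → U, x = ∑ v : ↥s, (v : V) ⊗ₜ[K] c v := by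
  classical
  set L : (↥s → U) →ₗ[K] V ⊗[K] U :=
    ∑ v : ↥s, (TensorProduct.mk K V U (v : V)).comp (LinearMap.proj v) with hL
  have hgen : {y : V ⊗[K] U | ∃ v ∈ s, ∃ a : U, y = v ⊗ₜ[K] a} ⊆
      ↑(LinearMap.range L) := by
    rintro y ⟨v, hv, a, rfl⟩
    refine ⟨Pi.single (⟨v, hv⟩ : ↥s) a, ?_⟩
    rw [hL]
    simp only [LinearMap.sum_apply, LinearMap.comp_apply, LinearMap.proj_apply]
    rw [Finset.sum_eq_single (⟨v, hv⟩ : ↥s)]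
    · simp
    · intro b _ hb
      rw [Pi.single_eq_of_ne hb]
      simp
    · intro hmem; exact absurd (Finset.mem_univ _) hmem
  have : x ∈ LinearMap.range L :=
    Submodule.span_le.mpr hgen hx
  obtain ⟨c, hc⟩ := this
  refine ⟨c, ?_⟩
  rw [← hc, hL]
  simp [TensorProduct.mk_apply]

/-- Coefficients w.r.t. a linearly independent finset are unique (zero form). -/
lemma coeffs_eq_zero (s : Finset V)
    (hs : LinearIndependent K (fun v : ↥s => (v : V)))
    (c : ↥s → U) (hc : ∑ v : ↥s, (v : V) ⊗ₜ[K] c v = 0) : ∀ v, c v = 0 := by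
  classical
  have hs' : LinearIndepOn K id (↑s : Set V) := by
    exact hs
  set B := Module.Basis.extend hs' with hB
  intro v₀
  have hmem : (v₀ : V) ∈ hs'.extend (Set.subset_univ _) :=
    hs'.subset_extend _ (by simpa using v₀.2)
  set i₀ : ↥(hs'.extend (Set.subset_univ (↑s : Set V))) := ⟨(v₀ : V), hmem⟩ with hi₀
  have := congrArg (fun z => tcoordEquiv B U z i₀) hc
  simp only [map_zero, map_sum, Finsupp.coe_zero, Pi.zero_apply, Finsupp.finset_sum_apply] at this
  rw [Finset.sum_eq_single v₀] at this
  · rw [tcoordEquiv_tmul] at this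
    have hrepr : B.repr (v₀ : V) i₀ = 1 := by
      have : (v₀ : V) = B i₀ := (Module.Basis.extend_apply_self hs' i₀).symm
      rw [this, B.repr_self, Finsupp.single_eq_same]
    rwa [hrepr, one_smul] at this
  · intro b _ hb
    rw [tcoordEquiv_tmul]
    have hrepr : B.repr (b : V) i₀ = 0 := by
      have hbmem : (b : V) ∈ hs'.extend (Set.subset_univ _) :=
        hs'.subset_extend _ (by simpa using b.2)
      have : (b : V) = B ⟨(b : V), hbmem⟩ := by
        rw [hB]; exact (Module.Basis.extend_apply_self hs' ⟨(b : V), hbmem⟩).symm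
      rw [this, B.repr_self]
      rw [Finsupp.single_apply]
      rw [if_neg]
      intro h
      apply hb
      apply Subtype.ext
      simpa [hi₀] using congrArg Subtype.val h
    rw [hrepr, zero_smul]
  · intro hmem; exact absurd (Finset.mem_univ _) hmem

end Coeffs
section AlgTools

variable {K : Type} [Field K]

/-- `map id f` agrees with `lTensor`. -/
lemma mapId_toLinearMap {V U U' : Type} [Ring V] [Algebra K V]
    [Ring U] [Algebra K U] [Ring U'] [Algebra K U'] (f : U →ₐ[K] U') :
    ⇑(Algebra.TensorProduct.map (AlgHom.id K V) f) =
      ⇑(LinearMap.lTensor V f.toLinearMap) := by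
  have : (Algebra.TensorProduct.map (AlgHom.id K V) f).toLinearMap =
      LinearMap.lTensor V f.toLinearMap := by
    apply TensorProduct.ext'
    intro v u
    simp
  exact congrArg DFunLike.coe this

/-- `map g id` agrees with `rTensor`. -/
lemma mapIdR_toLinearMap {H C C' : Type} [Ring H] [Algebra K H]
    [Ring C] [Algebra K C] [Ring C'] [Algebra K C'] (g : C →ₐ[K] C') :
    ⇑(Algebra.TensorProduct.map g (AlgHom.id K H)) =
      ⇑(LinearMap.rTensor H g.toLinearMap) := by
  have : (Algebra.TensorProduct.map g (AlgHom.id K H)).toLinearMap =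
      LinearMap.rTensor H g.toLinearMap := by
    apply TensorProduct.ext'
    intro c h
    simp
  exact congrArg DFunLike.coe this

/-- Joint injectivity for `map id (f j)` given a jointly injective family of algebra maps. -/
lemma joint_inj_mapId {V A : Type} [Ring V] [Algebra K V] [Ring A] [Algebra K A]
    {ι' : Type} {Uu : ι' → Type} [∀ j, Ring (Uu j)] [∀ j, Algebra K (Uu j)]
    (f : ∀ j, A →ₐ[K] Uu j) (hf : ∀ a b : A, (∀ j, f j a = f j b) → a = b)
    (x y : V ⊗[K] A)
    (hxy : ∀ j, Algebra.TensorProduct.map (AlgHom.id K V) (f j) x =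
      Algebra.TensorProduct.map (AlgHom.id K V) (f j) y) : x = y := by
  have hf0 : ∀ a : A, (∀ j, (f j).toLinearMap a = 0) → a = 0 := by
    intro a ha
    exact hf a 0 fun j => by simpa using ha j
  have h0 : ∀ j, LinearMap.lTensor V (f j).toLinearMap (x - y) = 0 := by
    intro j
    rw [map_sub, sub_eq_zero]
    rw [← congrFun (mapId_toLinearMap (f j)) x, ← congrFun (mapId_toLinearMap (f j)) y]
    exact hxy j
  have := lTensor_joint_inj (fun j => (f j).toLinearMap) hf0 V (x - y) h0
  exact sub_eq_zero.mp this

/-- Joint injectivity one tensor level higher: `map (map id (f j)) id` on `(V ⊗ A) ⊗ H`. -/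
lemma joint_inj_mapMapId {V A H : Type} [Ring V] [Algebra K V] [Ring A] [Algebra K A]
    [Ring H] [Algebra K H]
    {ι' : Type} {Uu : ι' → Type} [∀ j, Ring (Uu j)] [∀ j, Algebra K (Uu j)]
    (f : ∀ j, A →ₐ[K] Uu j) (hf : ∀ a b : A, (∀ j, f j a = f j b) → a = b)
    (x y : (V ⊗[K] A) ⊗[K] H)
    (hxy : ∀ j, Algebra.TensorProduct.map
        (Algebra.TensorProduct.map (AlgHom.id K V) (f j)) (AlgHom.id K H) x =
      Algebra.TensorProduct.map
        (Algebra.TensorProduct.map (AlgHom.id K V) (f j)) (AlgHom.id K H) y) : x = y := by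
  have hg0 : ∀ z : V ⊗[K] A,
      (∀ j, (Algebra.TensorProduct.map (AlgHom.id K V) (f j)).toLinearMap z = 0) → z = 0 := by
    intro z hz
    refine joint_inj_mapId f hf z 0 fun j => by rw [map_zero]; exact hz j
  have h0 : ∀ j, LinearMap.rTensor H
      (Algebra.TensorProduct.map (AlgHom.id K V) (f j)).toLinearMap (x - y) = 0 := by
    intro j
    rw [map_sub, sub_eq_zero]
    rw [← congrFun (mapIdR_toLinearMap (Algebra.TensorProduct.map (AlgHom.id K V) (f j))) x,
      ← congrFun (mapIdR_toLinearMap (Algebra.TensorProduct.map (AlgHom.id K V) (f j))) y]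
    exact hxy j
  have := rTensor_joint_inj
    (fun j => (Algebra.TensorProduct.map (AlgHom.id K V) (f j)).toLinearMap) hg0 H (x - y) h0
  exact sub_eq_zero.mp this

end AlgTools



section

variable (K : Type) [Field K]

/-- The rearrangement `(V ⊗ H) ⊗ U ≅ (V ⊗ U) ⊗ H`, i.e. `id_V ⊗ F` applied
after regrouping, as an algebra morphism. -/
noncomputable def midSwap (V H U : Type) [Ring V] [Algebra K V]
    [Ring H] [Algebra K H] [Ring U] [Algebra K U] :
    (V ⊗[K] H) ⊗[K] U →ₐ[K] (V ⊗[K] U) ⊗[K] H :=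
  ((Algebra.TensorProduct.assoc K K K V U H).symm.toAlgHom).comp
    ((Algebra.TensorProduct.map (AlgHom.id K V)
        (Algebra.TensorProduct.comm K H U).toAlgHom).comp
      (Algebra.TensorProduct.assoc K K K V H U).toAlgHom)

/-- `φ : W → V ⊗ U` is a family of `H`-comodule morphisms from `W` to `V`
parameterized by `U`:  `(id_V ⊗ F)(ρ ⊗ id_U)φ = (φ ⊗ id_H)ϱ`. -/
def IsComodFamily (H V W U : Type) [Ring H] [Algebra K H]
    [Ring V] [Algebra K V] [Ring W] [Algebra K W] [Ring U] [Algebra K U]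
    (ρ : V →ₐ[K] V ⊗[K] H) (ϱ : W →ₐ[K] W ⊗[K] H)
    (φ : W →ₐ[K] V ⊗[K] U) : Prop :=
  (midSwap K V H U).comp
      ((Algebra.TensorProduct.map ρ (AlgHom.id K U)).comp φ) =
    (Algebra.TensorProduct.map φ (AlgHom.id K H)).comp ϱ

section Constr

variable (V W : Type) [Ring V] [Algebra K V] [Ring W] [Algebra K W]
variable (Q : Set W) (δ : Q → Finset V)

/-- Index type of generators of the free algebra. -/
abbrev st14T : Type := Σ w : Q, ↥(δ w)

/-- The standard element `∑_{v ∈ δ w} v ⊗ c (w, v)`. -/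
noncomputable def st14std (U : Type) [Ring U] [Algebra K U]
    (c : st14T V W Q δ → U) (w : Q) : V ⊗[K] U :=
  ∑ v : ↥(δ w), (v : V) ⊗ₜ[K] c ⟨w, v⟩

variable (H : Type) [Ring H] [Algebra K H]
variable (ρ : V →ₐ[K] V ⊗[K] H) (ϱ : W →ₐ[K] W ⊗[K] H)

/-- Admissible relations on the free algebra: those arising as the kernel relation of the
coefficient map of some comodule family with the prescribed span condition. -/
def st14Adm (p : FreeAlgebra K (st14T V W Q δ) → FreeAlgebra K (st14T V W Q δ) → Prop) :
    Prop :=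
  ∃ (U : AlgCat K) (φ : W →ₐ[K] V ⊗[K] U) (cc : st14T V W Q δ → U),
    IsComodFamily K H V W U ρ ϱ φ ∧ (∀ w : Q, φ w = st14std K V W Q δ U cc w) ∧
    ∀ x y, p x y ↔ FreeAlgebra.lift K cc x = FreeAlgebra.lift K cc y

end Constr

section MidSwapLemmas

variable {V H : Type} [Ring V] [Algebra K V] [Ring H] [Algebra K H]

lemma midSwap_tmul {U : Type} [Ring U] [Algebra K U] (v : V) (hh : H) (u : U) :
    midSwap K V H U ((v ⊗ₜ[K] hh) ⊗ₜ[K] u) = (v ⊗ₜ[K] u) ⊗ₜ[K] hh := by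
  simp [midSwap, Algebra.TensorProduct.assoc_tmul, Algebra.TensorProduct.assoc_symm_tmul,
    Algebra.TensorProduct.comm_tmul]

lemma midSwap_nat {U U' : Type} [Ring U] [Algebra K U] [Ring U'] [Algebra K U']
    (f : U →ₐ[K] U') (x : (V ⊗[K] H) ⊗[K] U) :
    Algebra.TensorProduct.map (Algebra.TensorProduct.map (AlgHom.id K V) f) (AlgHom.id K H)
        (midSwap K V H U x) =
      midSwap K V H U' (Algebra.TensorProduct.map (AlgHom.id K (V ⊗[K] H)) f x) := by
  induction x using TensorProduct.induction_on with
  | zero => simp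
  | add a b ha hb => simp only [map_add, ha, hb]
  | tmul a u =>
    induction a using TensorProduct.induction_on with
    | zero => simp [TensorProduct.zero_tmul]
    | add a b ha hb => simp only [TensorProduct.add_tmul, map_add, ha, hb]
    | tmul v hh => simp [midSwap_tmul]

lemma map_rho_nat {U U' : Type} [Ring U] [Algebra K U] [Ring U'] [Algebra K U']
    (ρ : V →ₐ[K] V ⊗[K] H) (f : U →ₐ[K] U') (y : V ⊗[K] U) :
    Algebra.TensorProduct.map (AlgHom.id K (V ⊗[K] H)) f
        (Algebra.TensorProduct.map ρ (AlgHom.id K U) y) =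
      Algebra.TensorProduct.map ρ (AlgHom.id K U')
        (Algebra.TensorProduct.map (AlgHom.id K V) f y) := by
  induction y using TensorProduct.induction_on with
  | zero => simp
  | add a b ha hb => simp only [map_add, ha, hb]
  | tmul v u => simp

lemma map_phi_nat {W U U' : Type} [Ring W] [Algebra K W] [Ring U] [Algebra K U]
    [Ring U'] [Algebra K U'] (φ : W →ₐ[K] V ⊗[K] U) (f : U →ₐ[K] U')
    (z : W ⊗[K] H) :
    Algebra.TensorProduct.map (Algebra.TensorProduct.map (AlgHom.id K V) f) (AlgHom.id K H)
        (Algebra.TensorProduct.map φ (AlgHom.id K H) z) =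
      Algebra.TensorProduct.map
        ((Algebra.TensorProduct.map (AlgHom.id K V) f).comp φ) (AlgHom.id K H) z := by
  induction z using TensorProduct.induction_on with
  | zero => simp
  | add a b ha hb => simp only [map_add, ha, hb]
  | tmul w hh => simp

/-- Pushforward of the comodule-family equation along `f : U →ₐ U'`. -/
lemma isComodFamily_pushforward {W U U' : Type} [Ring W] [Algebra K W]
    [Ring U] [Algebra K U] [Ring U'] [Algebra K U']
    (ρ : V →ₐ[K] V ⊗[K] H) (ϱ : W →ₐ[K] W ⊗[K] H)
    (f : U →ₐ[K] U') (φ : W →ₐ[K] V ⊗[K] U)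
    (hφ : IsComodFamily K H V W U ρ ϱ φ) :
    IsComodFamily K H V W U' ρ ϱ ((Algebra.TensorProduct.map (AlgHom.id K V) f).comp φ) := by
  unfold IsComodFamily at hφ ⊢
  apply AlgHom.ext
  intro w
  have hpt := congrArg
    (Algebra.TensorProduct.map (Algebra.TensorProduct.map (AlgHom.id K V) f) (AlgHom.id K H))
    (congrFun (congrArg DFunLike.coe hφ) w)
  simp only [AlgHom.comp_apply] at hpt ⊢
  rw [midSwap_nat, map_rho_nat] at hpt
  rw [map_phi_nat] at hpt
  exact hpt

end MidSwapLemmas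

section Constr2

variable (V W : Type) [Ring V] [Algebra K V] [Ring W] [Algebra K W]
variable (Q : Set W) (δ : Q → Finset V)
variable (H : Type) [Ring H] [Algebra K H]
variable (ρ : V →ₐ[K] V ⊗[K] H) (ϱ : W →ₐ[K] W ⊗[K] H)

/-- The (small) index type of admissible relations. -/
abbrev st14J : Type := {p // st14Adm K V W Q δ H ρ ϱ p}

noncomputable def st14U (j : st14J K V W Q δ H ρ ϱ) : AlgCat K := j.2.choose

noncomputable def st14φ (j : st14J K V W Q δ H ρ ϱ) :
    W →ₐ[K] V ⊗[K] (st14U K V W Q δ H ρ ϱ j) := j.2.choose_spec.choose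

noncomputable def st14cc (j : st14J K V W Q δ H ρ ϱ) :
    st14T V W Q δ → (st14U K V W Q δ H ρ ϱ j) := j.2.choose_spec.choose_spec.choose

lemma st14spec (j : st14J K V W Q δ H ρ ϱ) :
    IsComodFamily K H V W (st14U K V W Q δ H ρ ϱ j) ρ ϱ (st14φ K V W Q δ H ρ ϱ j) ∧
    (∀ w : Q, st14φ K V W Q δ H ρ ϱ j w =
      st14std K V W Q δ (st14U K V W Q δ H ρ ϱ j) (st14cc K V W Q δ H ρ ϱ j) w) ∧
    (∀ x y, j.1 x y ↔ FreeAlgebra.lift K (st14cc K V W Q δ H ρ ϱ j) x =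
      FreeAlgebra.lift K (st14cc K V W Q δ H ρ ϱ j) y) :=
  j.2.choose_spec.choose_spec.choose_spec

/-- The universal relation. -/
def st14rel (x y : FreeAlgebra K (st14T V W Q δ)) : Prop :=
  ∀ j : st14J K V W Q δ H ρ ϱ, FreeAlgebra.lift K (st14cc K V W Q δ H ρ ϱ j) x =
    FreeAlgebra.lift K (st14cc K V W Q δ H ρ ϱ j) y

/-- The universal algebra. -/
abbrev st14A : Type := RingQuot (st14rel K V W Q δ H ρ ϱ)

noncomputable def st14mk :
    FreeAlgebra K (st14T V W Q δ) →ₐ[K] st14A K V W Q δ H ρ ϱ :=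
  RingQuot.mkAlgHom K _

noncomputable def st14lam (j : st14J K V W Q δ H ρ ϱ) :
    st14A K V W Q δ H ρ ϱ →ₐ[K] st14U K V W Q δ H ρ ϱ j :=
  RingQuot.liftAlgHom K
    ⟨FreeAlgebra.lift K (st14cc K V W Q δ H ρ ϱ j), fun x y hxy => hxy j⟩

lemma st14lam_mk (j : st14J K V W Q δ H ρ ϱ) (x : FreeAlgebra K (st14T V W Q δ)) :
    st14lam K V W Q δ H ρ ϱ j (st14mk K V W Q δ H ρ ϱ x) =
      FreeAlgebra.lift K (st14cc K V W Q δ H ρ ϱ j) x := by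
  simp [st14lam, st14mk, RingQuot.liftAlgHom_mkAlgHom_apply]

lemma st14joint : ∀ a b : st14A K V W Q δ H ρ ϱ,
    (∀ j, st14lam K V W Q δ H ρ ϱ j a = st14lam K V W Q δ H ρ ϱ j b) → a = b := by
  intro a b hab
  obtain ⟨x, rfl⟩ := RingQuot.mkAlgHom_surjective K _ a
  obtain ⟨y, rfl⟩ := RingQuot.mkAlgHom_surjective K _ b
  refine RingQuot.mkAlgHom_rel K fun j => ?_
  have hx := st14lam_mk K V W Q δ H ρ ϱ j x
  have hy := st14lam_mk K V W Q δ H ρ ϱ j y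
  rw [st14mk] at hx hy
  rw [← hx, ← hy]
  exact hab j

noncomputable def st14ccA : st14T V W Q δ → st14A K V W Q δ H ρ ϱ :=
  fun t => st14mk K V W Q δ H ρ ϱ (FreeAlgebra.ι K t)

/-- The joint embedding of `V ⊗ A` into the product. -/
noncomputable def st14Θ :
    V ⊗[K] st14A K V W Q δ H ρ ϱ →ₐ[K]
      ∀ j : st14J K V W Q δ H ρ ϱ, V ⊗[K] st14U K V W Q δ H ρ ϱ j :=
  Pi.algHom K _ fun j => Algebra.TensorProduct.map (AlgHom.id K V) (st14lam K V W Q δ H ρ ϱ j)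

lemma st14Θ_inj : Function.Injective (st14Θ K V W Q δ H ρ ϱ) := by
  intro x y hxy
  refine joint_inj_mapId (st14lam K V W Q δ H ρ ϱ) (st14joint K V W Q δ H ρ ϱ) x y fun j => ?_
  simpa [st14Θ] using congrFun hxy j

/-- The product of the chosen families. -/
noncomputable def st14ψ :
    W →ₐ[K] ∀ j : st14J K V W Q δ H ρ ϱ, V ⊗[K] st14U K V W Q δ H ρ ϱ j :=
  Pi.algHom K _ fun j => st14φ K V W Q δ H ρ ϱ j

end Constr2

section Constr3

variable (V W : Type) [Ring V] [Algebra K V] [Ring W] [Algebra K W]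
variable (Q : Set W) (δ : Q → Finset V)
variable (H : Type) [Ring H] [Algebra K H]
variable (ρ : V →ₐ[K] V ⊗[K] H) (ϱ : W →ₐ[K] W ⊗[K] H)

lemma st14key (j : st14J K V W Q δ H ρ ϱ) (w : Q) :
    Algebra.TensorProduct.map (AlgHom.id K V) (st14lam K V W Q δ H ρ ϱ j)
        (st14std K V W Q δ (st14A K V W Q δ H ρ ϱ) (st14ccA K V W Q δ H ρ ϱ) w) =
      st14φ K V W Q δ H ρ ϱ j w := by
  rw [(st14spec K V W Q δ H ρ ϱ j).2.1 w]
  unfold st14std st14ccA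
  rw [map_sum]
  refine Finset.sum_congr rfl fun v _ => ?_
  rw [Algebra.TensorProduct.map_tmul, st14lam_mk, FreeAlgebra.lift_ι_apply, AlgHom.coe_id,
    id_eq]

lemma st14ψ_eq (w : Q) :
    st14ψ K V W Q δ H ρ ϱ (w : W) =
      st14Θ K V W Q δ H ρ ϱ
        (st14std K V W Q δ (st14A K V W Q δ H ρ ϱ) (st14ccA K V W Q δ H ρ ϱ) w) := by
  funext j
  simp only [st14ψ, st14Θ, Pi.algHom_apply]
  rw [st14key]

lemma st14ψ_mem_range (hQ : Algebra.adjoin K Q = ⊤) (w : W) :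
    st14ψ K V W Q δ H ρ ϱ w ∈ (st14Θ K V W Q δ H ρ ϱ).range := by
  have hle : Algebra.adjoin K Q ≤
      Subalgebra.comap (st14ψ K V W Q δ H ρ ϱ) (st14Θ K V W Q δ H ρ ϱ).range := by
    refine Algebra.adjoin_le fun w hw => ?_
    show st14ψ K V W Q δ H ρ ϱ w ∈ (st14Θ K V W Q δ H ρ ϱ).range
    rw [show w = ((⟨w, hw⟩ : Q) : W) from rfl, st14ψ_eq]
    exact ⟨_, rfl⟩
  have : w ∈ Algebra.adjoin K Q := by rw [hQ]; trivial
  exact hle this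

noncomputable def st14h (hQ : Algebra.adjoin K Q = ⊤) :
    W →ₐ[K] V ⊗[K] st14A K V W Q δ H ρ ϱ :=
  ((AlgEquiv.ofInjective (st14Θ K V W Q δ H ρ ϱ) (st14Θ_inj K V W Q δ H ρ ϱ)).symm.toAlgHom).comp
    ((st14ψ K V W Q δ H ρ ϱ).codRestrict (st14Θ K V W Q δ H ρ ϱ).range
      (st14ψ_mem_range K V W Q δ H ρ ϱ hQ))

lemma st14Θ_h (hQ : Algebra.adjoin K Q = ⊤) (x : W) :
    st14Θ K V W Q δ H ρ ϱ (st14h K V W Q δ H ρ ϱ hQ x) = st14ψ K V W Q δ H ρ ϱ x := by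
  set e := AlgEquiv.ofInjective (st14Θ K V W Q δ H ρ ϱ) (st14Θ_inj K V W Q δ H ρ ϱ) with he
  have key : ∀ z : (st14Θ K V W Q δ H ρ ϱ).range, st14Θ K V W Q δ H ρ ϱ (e.symm z) = ↑z := by
    intro z
    have h1 : (↑(e (e.symm z)) : ∀ j : st14J K V W Q δ H ρ ϱ, V ⊗[K] st14U K V W Q δ H ρ ϱ j) = ↑z := by
      rw [AlgEquiv.apply_symm_apply]
    rw [← h1, he, AlgEquiv.ofInjective_apply]
  show st14Θ K V W Q δ H ρ ϱ (e.symm _) = _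
  rw [key]
  rfl

lemma st14h_std (hQ : Algebra.adjoin K Q = ⊤) (w : Q) :
    st14h K V W Q δ H ρ ϱ hQ (w : W) =
      st14std K V W Q δ (st14A K V W Q δ H ρ ϱ) (st14ccA K V W Q δ H ρ ϱ) w := by
  apply st14Θ_inj K V W Q δ H ρ ϱ
  rw [st14Θ_h, st14ψ_eq]

lemma st14lam_h (hQ : Algebra.adjoin K Q = ⊤) (j : st14J K V W Q δ H ρ ϱ) :
    (Algebra.TensorProduct.map (AlgHom.id K V) (st14lam K V W Q δ H ρ ϱ j)).comp
        (st14h K V W Q δ H ρ ϱ hQ) = st14φ K V W Q δ H ρ ϱ j := by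
  refine AlgHom.ext_of_adjoin_eq_top hQ fun w hw => ?_
  show Algebra.TensorProduct.map (AlgHom.id K V) (st14lam K V W Q δ H ρ ϱ j)
    (st14h K V W Q δ H ρ ϱ hQ w) = st14φ K V W Q δ H ρ ϱ j w
  rw [show w = ((⟨w, hw⟩ : Q) : W) from rfl, st14h_std, st14key]

lemma st14h_fam (hQ : Algebra.adjoin K Q = ⊤) :
    IsComodFamily K H V W (st14A K V W Q δ H ρ ϱ) ρ ϱ (st14h K V W Q δ H ρ ϱ hQ) := by
  unfold IsComodFamily
  apply AlgHom.ext
  intro w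
  simp only [AlgHom.comp_apply]
  refine joint_inj_mapMapId (st14lam K V W Q δ H ρ ϱ) (st14joint K V W Q δ H ρ ϱ) _ _
    fun j => ?_
  have hlh := fun x : W => DFunLike.congr_fun (st14lam_h K V W Q δ H ρ ϱ hQ j) x
  simp only [AlgHom.comp_apply] at hlh
  have e1 : Algebra.TensorProduct.map
      (Algebra.TensorProduct.map (AlgHom.id K V) (st14lam K V W Q δ H ρ ϱ j)) (AlgHom.id K H)
        (midSwap K V H _ (Algebra.TensorProduct.map ρ (AlgHom.id K _)
          (st14h K V W Q δ H ρ ϱ hQ w))) =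
      midSwap K V H _ (Algebra.TensorProduct.map ρ (AlgHom.id K _)
        (st14φ K V W Q δ H ρ ϱ j w)) := by
    rw [midSwap_nat, map_rho_nat, hlh]
  rw [e1]
  have e2 := DFunLike.congr_fun ((st14spec K V W Q δ H ρ ϱ j).1) w
  simp only [AlgHom.comp_apply] at e2
  rw [e2]
  rw [map_phi_nat]
  have e3 : (Algebra.TensorProduct.map (AlgHom.id K V) (st14lam K V W Q δ H ρ ϱ j)).comp
      (st14h K V W Q δ H ρ ϱ hQ) = st14φ K V W Q δ H ρ ϱ j :=
    st14lam_h K V W Q δ H ρ ϱ hQ j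
  rw [e3]

end Constr3

/-- existence of the universal parameterizing algebra for
families of `H`-comodule morphisms with prescribed span conditions on the
generators. -/
theorem stmt_14 (H : Type) [Ring H] [HopfAlgebra K H]
    (V W : Type) [Ring V] [Algebra K V] [Ring W] [Algebra K W]
    (ρ : V →ₐ[K] V ⊗[K] H) (ϱ : W →ₐ[K] W ⊗[K] H)
    -- ρ is a comodule (coaction) structure on V:
    (hρ₁ : (Algebra.TensorProduct.assoc K K K V H H).toAlgHom.comp
        ((Algebra.TensorProduct.map ρ (AlgHom.id K H)).comp ρ) =
      (Algebra.TensorProduct.map (AlgHom.id K V)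
        (Bialgebra.comulAlgHom K H)).comp ρ)
    (hρ₂ : (Algebra.TensorProduct.rid K K V).toAlgHom.comp
        ((Algebra.TensorProduct.map (AlgHom.id K V)
          (Bialgebra.counitAlgHom K H)).comp ρ) = AlgHom.id K V)
    -- ϱ is a comodule (coaction) structure on W:
    (hϱ₁ : (Algebra.TensorProduct.assoc K K K W H H).toAlgHom.comp
        ((Algebra.TensorProduct.map ϱ (AlgHom.id K H)).comp ϱ) =
      (Algebra.TensorProduct.map (AlgHom.id K W)
        (Bialgebra.comulAlgHom K H)).comp ϱ)
    (hϱ₂ : (Algebra.TensorProduct.rid K K W).toAlgHom.comp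
        ((Algebra.TensorProduct.map (AlgHom.id K W)
          (Bialgebra.counitAlgHom K H)).comp ϱ) = AlgHom.id K W)
    -- generators of W and the prescribed linearly independent subsets of V:
    (Q : Set W) (hQ : Algebra.adjoin K Q = ⊤)
    (δ : Q → Finset V)
    (hδ : ∀ w : Q, LinearIndependent K (fun v : (δ w : Finset V) => (v : V))) :
    ∃ (A : AlgCat K) (h : W →ₐ[K] V ⊗[K] A),
      -- (i) h is a family of H-comodule morphisms
      IsComodFamily K H V W A ρ ϱ h ∧
      -- (ii) span condition on generators
      (∀ w : Q, h w ∈ Submodule.span K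
        {x : V ⊗[K] A | ∃ v ∈ δ w, ∃ a : A, x = v ⊗ₜ[K] a}) ∧
      -- (iii) universality among pairs satisfying (i) and (ii)
      (∀ (U : Type) [Ring U] [Algebra K U] (φ : W →ₐ[K] V ⊗[K] U),
        IsComodFamily K H V W U ρ ϱ φ →
        (∀ w : Q, φ w ∈ Submodule.span K
          {x : V ⊗[K] U | ∃ v ∈ δ w, ∃ a : U, x = v ⊗ₜ[K] a}) →
        ∃! α : A →ₐ[K] U,
          φ = (Algebra.TensorProduct.map (AlgHom.id K V) α).comp h) := by
  classical
  refine ⟨AlgCat.of K (st14A K V W Q δ H ρ ϱ), st14h K V W Q δ H ρ ϱ hQ,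
    st14h_fam K V W Q δ H ρ ϱ hQ, ?_, ?_⟩
  · -- (ii) span condition
    intro w
    rw [st14h_std K V W Q δ H ρ ϱ hQ w]
    unfold st14std
    refine Submodule.sum_mem _ fun v _ => Submodule.subset_span ?_
    exact ⟨(v : V), v.2, st14ccA K V W Q δ H ρ ϱ ⟨w, v⟩, rfl⟩
  · -- (iii) universality
    intro U _ _ φ hfam hspan
    choose cw hcw using fun w : Q => exists_coeffs (δ w) (φ w) (hspan w)
    have hφstd : ∀ w : Q, φ w = st14std K V W Q δ U (fun t => cw t.1 t.2) w := by
      intro w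
      rw [hcw w]
      rfl
    have hadm : st14Adm K V W Q δ H ρ ϱ
        (fun x y => FreeAlgebra.lift K (fun t : st14T V W Q δ => cw t.1 t.2) x =
          FreeAlgebra.lift K (fun t : st14T V W Q δ => cw t.1 t.2) y) :=
      ⟨AlgCat.of K U, φ, fun t => cw t.1 t.2, hfam, hφstd, fun x y => Iff.rfl⟩
    set j₀ : st14J K V W Q δ H ρ ϱ := ⟨_, hadm⟩ with hj₀
    have hrel : ∀ ⦃x y⦄, st14rel K V W Q δ H ρ ϱ x y →
        FreeAlgebra.lift K (fun t : st14T V W Q δ => cw t.1 t.2) x =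
          FreeAlgebra.lift K (fun t : st14T V W Q δ => cw t.1 t.2) y := by
      intro x y hxy
      exact ((st14spec K V W Q δ H ρ ϱ j₀).2.2 x y).mpr (hxy j₀)
    set α : st14A K V W Q δ H ρ ϱ →ₐ[K] U :=
      RingQuot.liftAlgHom K ⟨FreeAlgebra.lift K (fun t : st14T V W Q δ => cw t.1 t.2), hrel⟩
      with hαdef
    have hαccA : ∀ t : st14T V W Q δ, α (st14ccA K V W Q δ H ρ ϱ t) = cw t.1 t.2 := by
      intro t
      show α (RingQuot.mkAlgHom K (st14rel K V W Q δ H ρ ϱ) (FreeAlgebra.ι K t)) = cw t.1 t.2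
      rw [hαdef, RingQuot.liftAlgHom_mkAlgHom_apply, FreeAlgebra.lift_ι_apply]
    have hfact : φ =
        (Algebra.TensorProduct.map (AlgHom.id K V) α).comp (st14h K V W Q δ H ρ ϱ hQ) := by
      refine AlgHom.ext_of_adjoin_eq_top hQ fun w hw => ?_
      show φ w = Algebra.TensorProduct.map (AlgHom.id K V) α (st14h K V W Q δ H ρ ϱ hQ w)
      rw [show w = ((⟨w, hw⟩ : Q) : W) from rfl, st14h_std K V W Q δ H ρ ϱ hQ,
        hφstd ⟨w, hw⟩]
      unfold st14std st14ccA
      rw [map_sum]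
      refine Finset.sum_congr rfl fun v _ => ?_
      rw [Algebra.TensorProduct.map_tmul, AlgHom.coe_id, id_eq]
      congr 1
      exact (hαccA ⟨⟨w, hw⟩, v⟩).symm
    refine ⟨α, hfact, ?_⟩
    intro α' hα'
    have hgen : ∀ t : st14T V W Q δ, α' (st14ccA K V W Q δ H ρ ϱ t) = cw t.1 t.2 := by
      rintro ⟨w, v⟩
      have h1 := DFunLike.congr_fun hα' (w : W)
      rw [AlgHom.comp_apply, st14h_std K V W Q δ H ρ ϱ hQ w, hφstd w] at h1
      unfold st14std at h1
      rw [map_sum] at h1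
      have h2 : ∑ v' : ↥(δ w), (v' : V) ⊗ₜ[K]
          (α' (st14ccA K V W Q δ H ρ ϱ ⟨w, v'⟩) - cw w v') = 0 := by
        simp only [TensorProduct.tmul_sub]
        rw [Finset.sum_sub_distrib, sub_eq_zero]
        refine Eq.trans ?_ h1.symm
        refine Finset.sum_congr rfl fun v' _ => ?_
        rw [Algebra.TensorProduct.map_tmul, AlgHom.coe_id, id_eq]
      have h3 := coeffs_eq_zero (δ w) (hδ w) _ h2 v
      exact sub_eq_zero.mp h3
    refine RingQuot.ringQuot_ext' K _ _ ?_
    refine FreeAlgebra.hom_ext ?_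
    funext t
    show α' (RingQuot.mkAlgHom K (st14rel K V W Q δ H ρ ϱ) (FreeAlgebra.ι K t)) =
      α (RingQuot.mkAlgHom K (st14rel K V W Q δ H ρ ϱ) (FreeAlgebra.ι K t))
    have := hgen t
    rw [show RingQuot.mkAlgHom K (st14rel K V W Q δ H ρ ϱ) (FreeAlgebra.ι K t) =
      st14ccA K V W Q δ H ρ ϱ t from rfl]
    rw [hgen t, hαccA t]


end
end

section
/- Let H₁, H₂ be Hopf K-algebras with comultiplications Δ₁, Δ₂. Then there exists a commutative K-algebra A together with an algebra morphism h : H₁ → H₂ ⊗ A satisfying (Δ₂ ⊗ id_A)h = (id_{H₂⊗H₂} ⊗ μ_A)(id_{H₂} ⊗ F ⊗ id_A)(h ⊗ h)Δ₁ (where μ_A is multiplication of A and F the flip A ⊗ H₂ → H₂ ⊗ A), such that if additionally H₂ is finite dimensional, then for every commutative algebra R and every algebra morphism ψ : H₁ → H₂ ⊗ R satisfying the analogous identity, there is a unique algebra morphism ψ̂ : A → R with ψ = (id ⊗ ψ̂)h. -/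
set_option linter.unusedSectionVars false
set_option linter.unusedVariables false
set_option maxHeartbeats 1000000
set_option synthInstance.maxHeartbeats 400000


open TensorProduct

/-- A bundled commutative algebra over `K`. -/
structure CommAlg (K : Type) [Field K] : Type 1 where
  carrier : Type
  [isCommRing : CommRing carrier]
  [isAlgebra : Algebra K carrier]

attribute [instance] CommAlg.isCommRing CommAlg.isAlgebra

instance (K : Type) [Field K] : CoeSort (CommAlg K) Type :=
  ⟨CommAlg.carrier⟩

section

variable (K : Type) [Field K]

/-- `ψ : H₁ → H₂ ⊗ R` is a family of Hopf-algebra morphisms: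
`(Δ₂ ⊗ id_R)ψ = (id ⊗ μ_R)(id ⊗ F ⊗ id)(ψ ⊗ ψ)Δ₁`. -/
def IsHopfFamily (H₁ H₂ R : Type) [Ring H₁] [HopfAlgebra K H₁]
    [Ring H₂] [HopfAlgebra K H₂] [CommRing R] [Algebra K R]
    (ψ : H₁ →ₐ[K] H₂ ⊗[K] R) : Prop :=
  (Algebra.TensorProduct.map (Bialgebra.comulAlgHom K H₂) (AlgHom.id K R)).comp ψ =
    (Algebra.TensorProduct.map (AlgHom.id K (H₂ ⊗[K] H₂))
        (Algebra.TensorProduct.lmul' K (S := R))).comp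
      ((Algebra.TensorProduct.tensorTensorTensorComm K K K K H₂ R H₂ R).toAlgHom.comp
        ((Algebra.TensorProduct.map ψ ψ).comp (Bialgebra.comulAlgHom K H₁)))

section Coord
variable {K : Type} [Field K] {W : Type} [AddCommGroup W] [Module K W]
  {ι : Type} [Fintype ι] [DecidableEq ι] (b : Module.Basis ι K W)
  {M : Type} [AddCommGroup M] [Module K M]

noncomputable def coordT (i : ι) : W ⊗[K] M →ₗ[K] M :=
  (TensorProduct.lid K M).toLinearMap ∘ₗ ((b.coord i).rTensor M)

@[simp] lemma coordT_tmul (i : ι) (w : W) (m : M) :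
    coordT b i (w ⊗ₜ[K] m) = b.repr w i • m := by
  simp [coordT]

lemma sum_tmul_coordT (t : W ⊗[K] M) : ∑ i, b i ⊗ₜ[K] coordT b i t = t := by
  induction t using TensorProduct.induction_on with
  | zero => simp
  | tmul w m =>
      simp only [coordT_tmul]
      have : ∀ i, b i ⊗ₜ[K] (b.repr w i • m) = (b.repr w i • b i) ⊗ₜ[K] m := by
        intro i; rw [TensorProduct.smul_tmul, TensorProduct.tmul_smul]
      simp_rw [this, ← TensorProduct.sum_tmul, Module.Basis.sum_repr]
  | add x y hx hy =>
      simp only [map_add, TensorProduct.tmul_add, Finset.sum_add_distrib, hx, hy]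

lemma coordT_ext {s t : W ⊗[K] M} (h : ∀ i, coordT b i s = coordT b i t) : s = t := by
  rw [← sum_tmul_coordT b s, ← sum_tmul_coordT b t]
  simp_rw [h]

lemma coordT_sum_tmul (r : ι → M) (i : ι) :
    coordT b i (∑ i', b i' ⊗ₜ[K] r i') = r i := by
  rw [map_sum]
  simp only [coordT_tmul, Module.Basis.repr_self]
  rw [Finset.sum_eq_single i]
  · simp
  · intro j _ hj
    simp [Finsupp.single_apply, hj]
  · intro h; exact absurd (Finset.mem_univ i) h

end Coord

section Main
variable (K : Type) [Field K] (H₁ H₂ : Type) [Ring H₁] [HopfAlgebra K H₁]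
  [Ring H₂] [HopfAlgebra K H₂] [FiniteDimensional K H₂]

noncomputable def bas : Module.Basis (Fin (Module.finrank K H₂)) K H₂ := Module.finBasis K H₂

noncomputable def bas2 :
    Module.Basis (Fin (Module.finrank K H₂) × Fin (Module.finrank K H₂)) K (H₂ ⊗[K] H₂) :=
  (bas K H₂).tensorProduct (bas K H₂)

variable {R : Type} [CommRing R] [Algebra K R]

/-- coordinates of a family -/
noncomputable def psiC (ψ : H₁ →ₐ[K] H₂ ⊗[K] R) (i : Fin (Module.finrank K H₂)) :
    H₁ →ₗ[K] R :=
  (coordT (bas K H₂) i) ∘ₗ ψ.toLinearMap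

lemma psiC_apply (ψ : H₁ →ₐ[K] H₂ ⊗[K] R) (i) (x : H₁) :
    psiC K H₁ H₂ ψ i x = coordT (bas K H₂) i (ψ x) := rfl

lemma sum_tmul_psiC (ψ : H₁ →ₐ[K] H₂ ⊗[K] R) (x : H₁) :
    ∑ i, bas K H₂ i ⊗ₜ[K] psiC K H₁ H₂ ψ i x = ψ x :=
  sum_tmul_coordT _ _

noncomputable def lam (ψ : H₁ →ₐ[K] H₂ ⊗[K] R) (j k : Fin (Module.finrank K H₂)) :
    H₁ ⊗[K] H₁ →ₗ[K] R :=
  TensorProduct.lift ((LinearMap.mul K R).compl₁₂ (psiC K H₁ H₂ ψ j) (psiC K H₁ H₂ ψ k))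

@[simp] lemma lam_tmul (ψ : H₁ →ₐ[K] H₂ ⊗[K] R) (j k) (u v : H₁) :
    lam K H₁ H₂ ψ j k (u ⊗ₜ[K] v) = psiC K H₁ H₂ ψ j u * psiC K H₁ H₂ ψ k v := rfl

lemma coord_RHS (ψ : H₁ →ₐ[K] H₂ ⊗[K] R) (j k) (t : H₁ ⊗[K] H₁) :
    coordT (bas2 K H₂) (j, k)
      ((Algebra.TensorProduct.map (AlgHom.id K (H₂ ⊗[K] H₂))
          (Algebra.TensorProduct.lmul' K (S := R)))
        ((Algebra.TensorProduct.tensorTensorTensorComm K K K K H₂ R H₂ R).toAlgHom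
          ((Algebra.TensorProduct.map ψ ψ) t))) = lam K H₁ H₂ ψ j k t := by
  induction t using TensorProduct.induction_on with
  | zero => simp
  | add x y hx hy => simp only [map_add, hx, hy]
  | tmul u v =>
      have harg :
          ((Algebra.TensorProduct.map (AlgHom.id K (H₂ ⊗[K] H₂))
              (Algebra.TensorProduct.lmul' K (S := R)))
            ((Algebra.TensorProduct.tensorTensorTensorComm K K K K H₂ R H₂ R).toAlgHom
              ((Algebra.TensorProduct.map ψ ψ) (u ⊗ₜ[K] v)))) =
          ∑ p : Fin (Module.finrank K H₂) × Fin (Module.finrank K H₂),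
            bas2 K H₂ p ⊗ₜ[K] (psiC K H₁ H₂ ψ p.1 u * psiC K H₁ H₂ ψ p.2 v) := by
        rw [Algebra.TensorProduct.map_tmul]
        conv_lhs => rw [← sum_tmul_psiC K H₁ H₂ ψ u, ← sum_tmul_psiC K H₁ H₂ ψ v]
        rw [TensorProduct.sum_tmul]
        simp only [TensorProduct.tmul_sum, map_sum]
        simp only [AlgEquiv.toAlgHom_eq_coe, AlgHom.coe_coe, AlgEquiv.coe_toAlgHom,
          Algebra.TensorProduct.tensorTensorTensorComm_tmul,
          Algebra.TensorProduct.map_tmul, AlgHom.coe_id, id_eq,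
          Algebra.TensorProduct.lmul'_apply_tmul]
        conv_rhs => rw [Fintype.sum_prod_type]
        simp [bas2, Module.Basis.tensorProduct_apply']
      rw [harg, coordT_sum_tmul (bas2 K H₂)
        (fun p => psiC K H₁ H₂ ψ p.1 u * psiC K H₁ H₂ ψ p.2 v) (j, k), lam_tmul]

lemma coord_LHS (ψ : H₁ →ₐ[K] H₂ ⊗[K] R) (j k) (x : H₁) :
    coordT (bas2 K H₂) (j, k)
      ((Algebra.TensorProduct.map (Bialgebra.comulAlgHom K H₂) (AlgHom.id K R)) (ψ x)) =
    ∑ i, (bas2 K H₂).repr (Coalgebra.comul (bas K H₂ i)) (j, k) • psiC K H₁ H₂ ψ i x := by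
  conv_lhs => rw [← sum_tmul_psiC K H₁ H₂ ψ x]
  rw [map_sum, map_sum]
  simp [Algebra.TensorProduct.map_tmul, Bialgebra.comulAlgHom_apply]

lemma isHopfFamily_iff (ψ : H₁ →ₐ[K] H₂ ⊗[K] R) :
    IsHopfFamily K H₁ H₂ R ψ ↔ ∀ (x : H₁) (j k),
      (∑ i, (bas2 K H₂).repr (Coalgebra.comul (bas K H₂ i)) (j, k) • psiC K H₁ H₂ ψ i x)
        = lam K H₁ H₂ ψ j k (Coalgebra.comul x) := by
  constructor
  · intro h x j k
    have := congrArg (fun f : H₁ →ₐ[K] (H₂ ⊗[K] H₂) ⊗[K] R =>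
      coordT (bas2 K H₂) (j, k) (f x)) h
    simp only [AlgHom.coe_comp, Function.comp_apply] at this
    rw [coord_LHS] at this
    rw [this, Bialgebra.comulAlgHom_apply, coord_RHS]
  · intro h
    apply AlgHom.ext
    intro x
    apply coordT_ext (bas2 K H₂)
    rintro ⟨j, k⟩
    simp only [AlgHom.coe_comp, Function.comp_apply]
    rw [coord_LHS, coord_RHS, Bialgebra.comulAlgHom_apply]
    exact h x j k

end Main

section Main2
variable (K : Type) [Field K] (H₁ H₂ : Type) [Ring H₁] [HopfAlgebra K H₁]
  [Ring H₂] [HopfAlgebra K H₂] [FiniteDimensional K H₂]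

abbrev PolyV : Type := MvPolynomial (H₁ × Fin (Module.finrank K H₂)) K

noncomputable def evalA {R : Type} [CommRing R] [Algebra K R] (ψ : H₁ →ₐ[K] H₂ ⊗[K] R) :
    PolyV K H₁ H₂ →ₐ[K] R :=
  MvPolynomial.aeval (fun p => psiC K H₁ H₂ ψ p.2 p.1)

@[simp] lemma evalA_X {R : Type} [CommRing R] [Algebra K R] (ψ : H₁ →ₐ[K] H₂ ⊗[K] R)
    (x : H₁) (i) : evalA K H₁ H₂ ψ (MvPolynomial.X (x, i)) = psiC K H₁ H₂ ψ i x := by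
  simp [evalA]

def univIdeal : Ideal (PolyV K H₁ H₂) where
  carrier := {p | ∀ (R : Type) [CommRing R] [Algebra K R] (ψ : H₁ →ₐ[K] H₂ ⊗[K] R),
    IsHopfFamily K H₁ H₂ R ψ → evalA K H₁ H₂ ψ p = 0}
  add_mem' := by
    intro p q hp hq R _ _ ψ hψ
    rw [map_add, hp R ψ hψ, hq R ψ hψ, add_zero]
  zero_mem' := by intro R _ _ ψ hψ; rw [map_zero]
  smul_mem' := by
    intro c p hp R _ _ ψ hψ
    rw [smul_eq_mul, map_mul, hp R ψ hψ, mul_zero]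

abbrev UnivAlg : Type := PolyV K H₁ H₂ ⧸ univIdeal K H₁ H₂

noncomputable def gen (x : H₁) (i : Fin (Module.finrank K H₂)) : UnivAlg K H₁ H₂ :=
  Ideal.Quotient.mkₐ K (univIdeal K H₁ H₂) (MvPolynomial.X (x, i))

lemma mk_eq_of_forall {p q : PolyV K H₁ H₂}
    (h : ∀ (R : Type) [CommRing R] [Algebra K R] (ψ : H₁ →ₐ[K] H₂ ⊗[K] R),
      IsHopfFamily K H₁ H₂ R ψ → evalA K H₁ H₂ ψ p = evalA K H₁ H₂ ψ q) :
    Ideal.Quotient.mkₐ K (univIdeal K H₁ H₂) p = Ideal.Quotient.mkₐ K (univIdeal K H₁ H₂) q := by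
  rw [Ideal.Quotient.mkₐ_eq_mk, Ideal.Quotient.eq]
  show ∀ (R : Type) [CommRing R] [Algebra K R] (ψ : H₁ →ₐ[K] H₂ ⊗[K] R),
      IsHopfFamily K H₁ H₂ R ψ → evalA K H₁ H₂ ψ (p - q) = 0
  intro R _ _ ψ hψ
  rw [map_sub, h R ψ hψ, sub_self]

lemma gen_add (x y : H₁) (i) :
    gen K H₁ H₂ (x + y) i = gen K H₁ H₂ x i + gen K H₁ H₂ y i := by
  rw [gen, gen, gen, ← map_add]
  apply mk_eq_of_forall
  intro R _ _ ψ hψ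
  simp

lemma gen_smul (c : K) (x : H₁) (i) : gen K H₁ H₂ (c • x) i = c • gen K H₁ H₂ x i := by
  rw [gen, gen, ← map_smul]
  apply mk_eq_of_forall
  intro R _ _ ψ hψ
  simp

lemma gen_zero (i) : gen K H₁ H₂ 0 i = 0 := by
  have := gen_smul K H₁ H₂ 0 0 i
  simpa using this

lemma psiC_one {R : Type} [CommRing R] [Algebra K R] (ψ : H₁ →ₐ[K] H₂ ⊗[K] R) (i) :
    psiC K H₁ H₂ ψ i 1 = algebraMap K R ((bas K H₂).repr 1 i) := by
  rw [psiC_apply, map_one, Algebra.TensorProduct.one_def, coordT_tmul,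
    Algebra.algebraMap_eq_smul_one]

lemma gen_one (i) :
    gen K H₁ H₂ 1 i = algebraMap K (UnivAlg K H₁ H₂) ((bas K H₂).repr 1 i) := by
  rw [gen, show (algebraMap K (UnivAlg K H₁ H₂)) ((bas K H₂).repr 1 i) =
      Ideal.Quotient.mkₐ K (univIdeal K H₁ H₂) (MvPolynomial.C ((bas K H₂).repr 1 i)) by
    rw [← MvPolynomial.algebraMap_eq, AlgHom.commutes]]
  apply mk_eq_of_forall
  intro R _ _ ψ hψ
  rw [evalA_X, psiC_one, ← MvPolynomial.algebraMap_eq, AlgHom.commutes]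

lemma psiC_mul {R : Type} [CommRing R] [Algebra K R] (ψ : H₁ →ₐ[K] H₂ ⊗[K] R) (i) (x y : H₁) :
    psiC K H₁ H₂ ψ i (x * y) =
      ∑ j, ∑ k, (bas K H₂).repr (bas K H₂ j * bas K H₂ k) i •
        (psiC K H₁ H₂ ψ j x * psiC K H₁ H₂ ψ k y) := by
  rw [psiC_apply, map_mul]
  conv_lhs => rw [← sum_tmul_psiC K H₁ H₂ ψ x, ← sum_tmul_psiC K H₁ H₂ ψ y]
  rw [Finset.sum_mul_sum]
  simp only [Algebra.TensorProduct.tmul_mul_tmul]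
  rw [map_sum]
  simp only [map_sum, coordT_tmul]

lemma gen_mul (x y : H₁) (i) :
    gen K H₁ H₂ (x * y) i =
      ∑ j, ∑ k, (bas K H₂).repr (bas K H₂ j * bas K H₂ k) i •
        (gen K H₁ H₂ x j * gen K H₁ H₂ y k) := by
  have : (∑ j, ∑ k, (bas K H₂).repr (bas K H₂ j * bas K H₂ k) i •
        (gen K H₁ H₂ x j * gen K H₁ H₂ y k)) =
      Ideal.Quotient.mkₐ K (univIdeal K H₁ H₂)
        (∑ j, ∑ k, (bas K H₂).repr (bas K H₂ j * bas K H₂ k) i •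
          (MvPolynomial.X (x, j) * MvPolynomial.X (y, k))) := by
    rw [map_sum]
    refine Finset.sum_congr rfl fun j _ => ?_
    rw [map_sum]
    refine Finset.sum_congr rfl fun k _ => ?_
    rw [map_smul, map_mul (Ideal.Quotient.mkₐ K (univIdeal K H₁ H₂)), gen, gen]
  rw [this, gen]
  apply mk_eq_of_forall
  intro R _ _ ψ hψ
  rw [evalA_X, psiC_mul]
  rw [map_sum]
  refine Finset.sum_congr rfl fun j _ => ?_
  rw [map_sum]
  refine Finset.sum_congr rfl fun k _ => ?_
  rw [map_smul, map_mul (evalA K H₁ H₂ ψ), evalA_X, evalA_X]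

noncomputable def repS (x : H₁) : Finset (H₁ × H₁) :=
  (TensorProduct.exists_finset (Coalgebra.comul (R := K) x)).choose

lemma repS_spec (x : H₁) :
    Coalgebra.comul (R := K) x = ∑ p ∈ repS K H₁ x, p.1 ⊗ₜ[K] p.2 :=
  (TensorProduct.exists_finset (Coalgebra.comul (R := K) x)).choose_spec

lemma lam_comul {R : Type} [CommRing R] [Algebra K R] (ψ : H₁ →ₐ[K] H₂ ⊗[K] R) (j k) (x : H₁) :
    lam K H₁ H₂ ψ j k (Coalgebra.comul x) =
      ∑ p ∈ repS K H₁ x, psiC K H₁ H₂ ψ j p.1 * psiC K H₁ H₂ ψ k p.2 := by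
  rw [repS_spec, map_sum]
  simp only [lam_tmul]

lemma gen_hopf (x : H₁) (j k) :
    (∑ i, (bas2 K H₂).repr (Coalgebra.comul (bas K H₂ i)) (j, k) • gen K H₁ H₂ x i) =
      ∑ p ∈ repS K H₁ x, gen K H₁ H₂ p.1 j * gen K H₁ H₂ p.2 k := by
  have hL : (∑ i, (bas2 K H₂).repr (Coalgebra.comul (bas K H₂ i)) (j, k) • gen K H₁ H₂ x i) =
      Ideal.Quotient.mkₐ K (univIdeal K H₁ H₂)
        (∑ i, (bas2 K H₂).repr (Coalgebra.comul (bas K H₂ i)) (j, k) • MvPolynomial.X (x, i)) := by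
    rw [map_sum]
    exact Finset.sum_congr rfl fun i _ => by rw [map_smul, gen]
  have hR : (∑ p ∈ repS K H₁ x, gen K H₁ H₂ p.1 j * gen K H₁ H₂ p.2 k) =
      Ideal.Quotient.mkₐ K (univIdeal K H₁ H₂)
        (∑ p ∈ repS K H₁ x, MvPolynomial.X (p.1, j) * MvPolynomial.X (p.2, k)) := by
    rw [map_sum]
    exact Finset.sum_congr rfl fun p _ => by rw [map_mul (Ideal.Quotient.mkₐ K (univIdeal K H₁ H₂)), gen, gen]
  rw [hL, hR]
  apply mk_eq_of_forall
  intro R _ _ ψ hψ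
  rw [map_sum, map_sum]
  simp only [map_smul, evalA_X, map_mul (evalA K H₁ H₂ ψ)]
  have := (isHopfFamily_iff K H₁ H₂ ψ).1 hψ x j k
  rw [this, lam_comul]

end Main2

section Main3
variable (K : Type) [Field K] (H₁ H₂ : Type) [Ring H₁] [HopfAlgebra K H₁]
  [Ring H₂] [HopfAlgebra K H₂] [FiniteDimensional K H₂]

noncomputable def hSum (x : H₁) : H₂ ⊗[K] UnivAlg K H₁ H₂ :=
  ∑ i, bas K H₂ i ⊗ₜ[K] gen K H₁ H₂ x i

lemma coordT_hSum (x : H₁) (i) : coordT (bas K H₂) i (hSum K H₁ H₂ x) = gen K H₁ H₂ x i :=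
  coordT_sum_tmul _ _ _

lemma hSum_one : hSum K H₁ H₂ 1 = 1 := by
  apply coordT_ext (bas K H₂)
  intro i
  rw [coordT_hSum, gen_one, Algebra.TensorProduct.one_def, coordT_tmul,
    Algebra.algebraMap_eq_smul_one]


end Main3

section Main3
variable (K : Type) [Field K] (H₁ H₂ : Type) [Ring H₁] [HopfAlgebra K H₁]
  [Ring H₂] [HopfAlgebra K H₂] [FiniteDimensional K H₂]

lemma coordT_mul_sum {R : Type} [CommRing R] [Algebra K R]
    (r s : Fin (Module.finrank K H₂) → R) (i) :
    coordT (bas K H₂) i ((∑ j, bas K H₂ j ⊗ₜ[K] r j) * (∑ k, bas K H₂ k ⊗ₜ[K] s k)) =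
      ∑ j, ∑ k, (bas K H₂).repr (bas K H₂ j * bas K H₂ k) i • (r j * s k) := by
  rw [Finset.sum_mul_sum]
  simp only [Algebra.TensorProduct.tmul_mul_tmul, map_sum, coordT_tmul]

lemma hSum_mul (x y : H₁) : hSum K H₁ H₂ (x * y) = hSum K H₁ H₂ x * hSum K H₁ H₂ y := by
  apply coordT_ext (bas K H₂)
  intro i
  rw [coordT_hSum, gen_mul, hSum, hSum]
  exact (coordT_mul_sum K H₂ (fun j => gen K H₁ H₂ x j) (fun k => gen K H₁ H₂ y k) i).symm

lemma hSum_add (x y : H₁) : hSum K H₁ H₂ (x + y) = hSum K H₁ H₂ x + hSum K H₁ H₂ y := by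
  apply coordT_ext (bas K H₂)
  intro i
  rw [map_add, coordT_hSum, coordT_hSum, coordT_hSum, gen_add]

lemma hSum_zero : hSum K H₁ H₂ 0 = 0 := by
  apply coordT_ext (bas K H₂)
  intro i
  rw [map_zero, coordT_hSum, gen_zero]

lemma hSum_algebraMap (c : K) :
    hSum K H₁ H₂ (algebraMap K H₁ c) =
      @algebraMap K (H₂ ⊗[K] UnivAlg K H₁ H₂) _ _ Algebra.TensorProduct.instAlgebra c := by
  apply coordT_ext (bas K H₂)
  intro i
  rw [coordT_hSum, Algebra.algebraMap_eq_smul_one (A := H₁), gen_smul, gen_one,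
    Algebra.algebraMap_eq_smul_one (A := H₂ ⊗[K] UnivAlg K H₁ H₂), map_smul,
    Algebra.TensorProduct.one_def, coordT_tmul, Algebra.algebraMap_eq_smul_one, smul_comm]

noncomputable def hHom : H₁ →ₐ[K] H₂ ⊗[K] UnivAlg K H₁ H₂ where
  toFun := hSum K H₁ H₂
  map_one' := hSum_one K H₁ H₂
  map_mul' := hSum_mul K H₁ H₂
  map_zero' := hSum_zero K H₁ H₂
  map_add' := hSum_add K H₁ H₂
  commutes' := hSum_algebraMap K H₁ H₂

lemma hHom_apply (x : H₁) : hHom K H₁ H₂ x = ∑ i, bas K H₂ i ⊗ₜ[K] gen K H₁ H₂ x i := rfl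

lemma psiC_hHom (i) (x : H₁) : psiC K H₁ H₂ (hHom K H₁ H₂) i x = gen K H₁ H₂ x i := by
  rw [psiC_apply, hHom_apply]
  exact coordT_sum_tmul _ _ _

lemma hHom_isHopfFamily : IsHopfFamily K H₁ H₂ (UnivAlg K H₁ H₂) (hHom K H₁ H₂) := by
  rw [isHopfFamily_iff]
  intro x j k
  rw [lam_comul]
  simp only [psiC_hHom]
  exact gen_hopf K H₁ H₂ x j k

variable {R : Type} [CommRing R] [Algebra K R]

noncomputable def psiHat (ψ : H₁ →ₐ[K] H₂ ⊗[K] R) (hψ : IsHopfFamily K H₁ H₂ R ψ) :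
    UnivAlg K H₁ H₂ →ₐ[K] R :=
  Ideal.Quotient.liftₐ (univIdeal K H₁ H₂) (evalA K H₁ H₂ ψ) (fun p hp => hp R ψ hψ)

lemma psiHat_mk (ψ : H₁ →ₐ[K] H₂ ⊗[K] R) (hψ : IsHopfFamily K H₁ H₂ R ψ)
    (p : PolyV K H₁ H₂) :
    psiHat K H₁ H₂ ψ hψ (Ideal.Quotient.mkₐ K (univIdeal K H₁ H₂) p) = evalA K H₁ H₂ ψ p := by
  have := AlgHom.congr_fun (Ideal.Quotient.liftₐ_comp (univIdeal K H₁ H₂)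
    (evalA K H₁ H₂ ψ) (fun p hp => hp R ψ hψ)) p
  simpa [psiHat] using this

lemma psiHat_gen (ψ : H₁ →ₐ[K] H₂ ⊗[K] R) (hψ : IsHopfFamily K H₁ H₂ R ψ) (x : H₁) (i) :
    psiHat K H₁ H₂ ψ hψ (gen K H₁ H₂ x i) = psiC K H₁ H₂ ψ i x := by
  rw [gen, psiHat_mk, evalA_X]

lemma psiHat_factor (ψ : H₁ →ₐ[K] H₂ ⊗[K] R) (hψ : IsHopfFamily K H₁ H₂ R ψ) :
    ψ = (Algebra.TensorProduct.map (AlgHom.id K H₂) (psiHat K H₁ H₂ ψ hψ)).comp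
      (hHom K H₁ H₂) := by
  apply AlgHom.ext
  intro x
  rw [AlgHom.coe_comp, Function.comp_apply, hHom_apply, map_sum]
  simp only [Algebra.TensorProduct.map_tmul, AlgHom.coe_id, id_eq, psiHat_gen]
  exact (sum_tmul_psiC K H₁ H₂ ψ x).symm

lemma psiHat_unique (ψ : H₁ →ₐ[K] H₂ ⊗[K] R) (hψ : IsHopfFamily K H₁ H₂ R ψ)
    (χ : UnivAlg K H₁ H₂ →ₐ[K] R)
    (hχ : ψ = (Algebra.TensorProduct.map (AlgHom.id K H₂) χ).comp (hHom K H₁ H₂)) :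
    χ = psiHat K H₁ H₂ ψ hψ := by
  have hgen : ∀ (x : H₁) (i), χ (gen K H₁ H₂ x i) = psiC K H₁ H₂ ψ i x := by
    intro x i
    have hx : ψ x = ∑ i', bas K H₂ i' ⊗ₜ[K] χ (gen K H₁ H₂ x i') := by
      rw [hχ, AlgHom.coe_comp, Function.comp_apply, hHom_apply, map_sum]
      simp only [Algebra.TensorProduct.map_tmul, AlgHom.coe_id, id_eq]
    rw [psiC_apply, hx, coordT_sum_tmul]
  apply Ideal.Quotient.algHom_ext
  apply MvPolynomial.algHom_ext
  rintro ⟨x, i⟩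
  rw [AlgHom.comp_apply, AlgHom.comp_apply]
  show χ (gen K H₁ H₂ x i) = psiHat K H₁ H₂ ψ hψ (gen K H₁ H₂ x i)
  rw [hgen, psiHat_gen]

end Main3

section Triv
variable (K : Type) [Field K] (H₁ H₂ : Type) [Ring H₁] [HopfAlgebra K H₁]
  [Ring H₂] [HopfAlgebra K H₂]

noncomputable def trivFam : H₁ →ₐ[K] H₂ ⊗[K] K :=
  (Algebra.ofId K (H₂ ⊗[K] K)).comp (Bialgebra.counitAlgHom K H₁)

lemma trivFam_apply (y : H₁) :
    trivFam K H₁ H₂ y = algebraMap K (H₂ ⊗[K] K) (Coalgebra.counit (R := K) y) := rfl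

lemma counit_repS (x : H₁) :
    ∑ p ∈ repS K H₁ x, Coalgebra.counit (R := K) p.1 * Coalgebra.counit (R := K) p.2
      = Coalgebra.counit (R := K) x := by
  have h := Coalgebra.rTensor_counit_comul (R := K) x
  rw [repS_spec K H₁ x, map_sum] at h
  have h2 := congrArg (TensorProduct.lid K H₁) h
  rw [map_sum] at h2
  simp only [LinearMap.rTensor_tmul, TensorProduct.lid_tmul, one_smul] at h2
  have h3 := congrArg (Coalgebra.counit (R := K)) h2
  rw [map_sum] at h3
  simp only [map_smul, smul_eq_mul] at h3
  exact h3

lemma trivFam_isHopfFamily : IsHopfFamily K H₁ H₂ K (trivFam K H₁ H₂) := by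
  apply AlgHom.ext
  intro x
  simp only [AlgHom.coe_comp, Function.comp_apply, Bialgebra.comulAlgHom_apply]
  rw [trivFam_apply, AlgHom.commutes]
  rw [repS_spec K H₁ x]
  simp only [map_sum]
  simp only [Algebra.TensorProduct.map_tmul, trivFam_apply]
  simp only [AlgEquiv.toAlgHom_eq_coe, AlgHom.coe_coe, AlgEquiv.coe_toAlgHom]
  simp only [Algebra.TensorProduct.algebraMap_apply,
    Algebra.TensorProduct.tensorTensorTensorComm_tmul,
    Algebra.TensorProduct.map_tmul, AlgHom.coe_id, id_eq,
    Algebra.TensorProduct.lmul'_apply_tmul, mul_one]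
  simp only [Algebra.algebraMap_eq_smul_one, Algebra.TensorProduct.one_def]
  simp only [smul_tmul', tmul_smul, smul_smul]
  simp only [← smul_tmul']
  rw [← Finset.sum_smul]
  congr 1
  rw [← counit_repS K H₁ x]
  exact Finset.sum_congr rfl fun p _ => mul_comm _ _
end Triv


/-- existence of a commutative algebra `A` with a family
`h : H₁ → H₂ ⊗ A` of Hopf-algebra morphisms which is universal whenever `H₂`
is finite dimensional. -/
theorem stmt_15 (H₁ H₂ : Type) [Ring H₁] [HopfAlgebra K H₁]
    [Ring H₂] [HopfAlgebra K H₂] :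
    ∃ (A : CommAlg K) (h : H₁ →ₐ[K] H₂ ⊗[K] A),
      IsHopfFamily K H₁ H₂ A h ∧
      (FiniteDimensional K H₂ →
        ∀ (R : Type) [CommRing R] [Algebra K R] (ψ : H₁ →ₐ[K] H₂ ⊗[K] R),
          IsHopfFamily K H₁ H₂ R ψ →
          ∃! ψHat : (A : Type) →ₐ[K] R,
            ψ = (Algebra.TensorProduct.map (AlgHom.id K H₂) ψHat).comp h) := by
  by_cases hfd : FiniteDimensional K H₂
  · exact ⟨{ carrier := UnivAlg K H₁ H₂ }, hHom K H₁ H₂, hHom_isHopfFamily K H₁ H₂,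
      fun _ R _ _ ψ hψ => ⟨psiHat K H₁ H₂ ψ hψ, psiHat_factor K H₁ H₂ ψ hψ,
        fun χ hχ => psiHat_unique K H₁ H₂ ψ hψ χ hχ⟩⟩
  · exact ⟨{ carrier := K }, trivFam K H₁ H₂, trivFam_isHopfFamily K H₁ H₂,
      fun h => absurd h hfd⟩

end
end

section
/- Let H₁, H₂ be Hopf K-algebras with H₂ finite dimensional, and let (A, h) be the universal family of Hopf-algebra morphisms from H₁ to H₂ (A commutative). Then the map sending an algebra morphism p : A → K to (id ⊗ p)h (composed with C ⊗ K ≅ C) is a bijection between the set of algebra morphisms A → K and the set of Hopf-algebra morphisms H₁ → H₂ (i.e., algebra morphisms that are also coalgebra morphisms). -/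
open TensorProduct

section

variable (K : Type) [Field K]

/-- `f : H₁ → H₂` is a bialgebra (Hopf-algebra) morphism: an algebra morphism
which respects the comultiplications. -/
def IsBialgHom (H₁ H₂ : Type) [Ring H₁] [HopfAlgebra K H₁]
    [Ring H₂] [HopfAlgebra K H₂] (f : H₁ →ₐ[K] H₂) : Prop :=
  (Bialgebra.comulAlgHom K H₂).comp f =
    (Algebra.TensorProduct.map f f).comp (Bialgebra.comulAlgHom K H₁)

variable {H₁ H₂ : Type} [Ring H₁] [HopfAlgebra K H₁] [Ring H₂] [HopfAlgebra K H₂]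
variable {A R : Type} [CommRing A] [Algebra K A] [CommRing R] [Algebra K R]

-- P1
lemma aux_P1 (φ : A →ₐ[K] R) (t : H₂ ⊗[K] A) :
    (Algebra.TensorProduct.map (Bialgebra.comulAlgHom K H₂) (AlgHom.id K R))
      ((Algebra.TensorProduct.map (AlgHom.id K H₂) φ) t) =
    (Algebra.TensorProduct.map (AlgHom.id K (H₂ ⊗[K] H₂)) φ)
      ((Algebra.TensorProduct.map (Bialgebra.comulAlgHom K H₂) (AlgHom.id K A)) t) := by
  induction t using TensorProduct.induction_on with
  | zero => simp
  | tmul x y => simp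
  | add x y hx hy => simp [hx, hy]

-- bilinear core of P2
lemma aux_P2core (φ : A →ₐ[K] R) (a b : H₂ ⊗[K] A) :
    (Algebra.TensorProduct.map (AlgHom.id K (H₂ ⊗[K] H₂)) (Algebra.TensorProduct.lmul' K (S := R)))
      ((Algebra.TensorProduct.tensorTensorTensorComm K K K K H₂ R H₂ R)
        ((Algebra.TensorProduct.map (AlgHom.id K H₂) φ) a ⊗ₜ
         (Algebra.TensorProduct.map (AlgHom.id K H₂) φ) b)) =
    (Algebra.TensorProduct.map (AlgHom.id K (H₂ ⊗[K] H₂)) φ)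
      ((Algebra.TensorProduct.map (AlgHom.id K (H₂ ⊗[K] H₂)) (Algebra.TensorProduct.lmul' K (S := A)))
        ((Algebra.TensorProduct.tensorTensorTensorComm K K K K H₂ A H₂ A) (a ⊗ₜ b))) := by
  induction a using TensorProduct.induction_on with
  | zero => simp
  | tmul x y =>
    induction b using TensorProduct.induction_on with
    | zero => simp
    | tmul z w => simp [Algebra.TensorProduct.tensorTensorTensorComm_tmul]
    | add u v hu hv => simp only [map_add, tmul_add]; rw [hu, hv]
  | add u v hu hv => simp only [map_add, add_tmul]; rw [hu, hv]

lemma aux_P2 (ψ : H₁ →ₐ[K] H₂ ⊗[K] A) (φ : A →ₐ[K] R) (c : H₁ ⊗[K] H₁) :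
    (Algebra.TensorProduct.map (AlgHom.id K (H₂ ⊗[K] H₂)) (Algebra.TensorProduct.lmul' K (S := R)))
      ((Algebra.TensorProduct.tensorTensorTensorComm K K K K H₂ R H₂ R)
        ((Algebra.TensorProduct.map ((Algebra.TensorProduct.map (AlgHom.id K H₂) φ).comp ψ)
            ((Algebra.TensorProduct.map (AlgHom.id K H₂) φ).comp ψ)) c)) =
    (Algebra.TensorProduct.map (AlgHom.id K (H₂ ⊗[K] H₂)) φ)
      ((Algebra.TensorProduct.map (AlgHom.id K (H₂ ⊗[K] H₂)) (Algebra.TensorProduct.lmul' K (S := A)))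
        ((Algebra.TensorProduct.tensorTensorTensorComm K K K K H₂ A H₂ A)
          ((Algebra.TensorProduct.map ψ ψ) c))) := by
  induction c using TensorProduct.induction_on with
  | zero => simp
  | tmul x y =>
    simpa using aux_P2core K φ (ψ x) (ψ y)
  | add u v hu hv => simp only [map_add]; rw [hu, hv]

lemma family_comp (ψ : H₁ →ₐ[K] H₂ ⊗[K] A) (hψ : IsHopfFamily K H₁ H₂ A ψ) (φ : A →ₐ[K] R) :
    IsHopfFamily K H₁ H₂ R ((Algebra.TensorProduct.map (AlgHom.id K H₂) φ).comp ψ) := by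
  have hψ' := fun x => congrArg (fun g : H₁ →ₐ[K] (H₂ ⊗[K] H₂) ⊗[K] A => g x) hψ
  simp only [AlgHom.comp_apply, AlgEquiv.toAlgHom_eq_coe, AlgHom.coe_coe, AlgEquiv.coe_toAlgHom] at hψ'
  refine AlgHom.ext fun x => ?_
  simp only [AlgHom.comp_apply, AlgEquiv.toAlgHom_eq_coe, AlgHom.coe_coe, AlgEquiv.coe_toAlgHom]
  rw [aux_P1, hψ' x, aux_P2]

-- core of the K case
lemma aux_Q (f : H₁ →ₐ[K] H₂) (c : H₁ ⊗[K] H₁) :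
    (Algebra.TensorProduct.map (AlgHom.id K (H₂ ⊗[K] H₂)) (Algebra.TensorProduct.lmul' K (S := K)))
      ((Algebra.TensorProduct.tensorTensorTensorComm K K K K H₂ K H₂ K)
        ((Algebra.TensorProduct.map
            ((Algebra.TensorProduct.rid K K H₂).symm.toAlgHom.comp f)
            ((Algebra.TensorProduct.rid K K H₂).symm.toAlgHom.comp f)) c)) =
    ((Algebra.TensorProduct.map f f) c) ⊗ₜ[K] (1 : K) := by
  induction c using TensorProduct.induction_on with
  | zero => simp
  | tmul x y => simp [Algebra.TensorProduct.rid_symm_apply,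
      Algebra.TensorProduct.tensorTensorTensorComm_tmul]
  | add u v hu hv => simp only [map_add, add_tmul]; rw [hu, hv]

lemma isHopfFamily_rid_symm_iff (f : H₁ →ₐ[K] H₂) :
    IsHopfFamily K H₁ H₂ K ((Algebra.TensorProduct.rid K K H₂).symm.toAlgHom.comp f) ↔
      IsBialgHom K H₁ H₂ f := by
  unfold IsHopfFamily IsBialgHom
  constructor
  · intro hf
    have hf' := fun x => congrArg (fun g : H₁ →ₐ[K] (H₂ ⊗[K] H₂) ⊗[K] K => g x) hf
    simp only [AlgHom.comp_apply, AlgEquiv.toAlgHom_eq_coe, AlgHom.coe_coe, AlgEquiv.coe_toAlgHom] at hf'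
    refine AlgHom.ext fun x => ?_
    have := hf' x
    have hQ := aux_Q K f ((Bialgebra.comulAlgHom K H₁) x)
    rw [hQ] at this
    simp only [Algebra.TensorProduct.rid_symm_apply, Algebra.TensorProduct.map_tmul,
      AlgHom.coe_id, id_eq] at this
    have h2 := congrArg (Algebra.TensorProduct.rid K K (H₂ ⊗[K] H₂)) this
    simpa [Algebra.TensorProduct.rid_tmul] using h2
  · intro hf
    have hf' := fun x => congrArg (fun g : H₁ →ₐ[K] (H₂ ⊗[K] H₂) => g x) hf
    simp only [AlgHom.comp_apply] at hf'
    refine AlgHom.ext fun x => ?_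
    simp only [AlgHom.comp_apply, AlgEquiv.toAlgHom_eq_coe, AlgHom.coe_coe, AlgEquiv.coe_toAlgHom]
    have hQ := aux_Q K f ((Bialgebra.comulAlgHom K H₁) x)
    rw [hQ]
    simp [Algebra.TensorProduct.rid_symm_apply, hf' x]


lemma rid_symm_rid_comp (ψ : H₁ →ₐ[K] H₂ ⊗[K] K) :
    (Algebra.TensorProduct.rid K K H₂).symm.toAlgHom.comp
      ((Algebra.TensorProduct.rid K K H₂).toAlgHom.comp ψ) = ψ :=
  AlgHom.ext fun x => by simp


/-- `p ↦ (id ⊗ p)h` is a bijection between algebra morphisms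
`A → K` and Hopf-algebra morphisms `H₁ → H₂`, for the universal family
`(A, h)` of Hopf-algebra morphisms from `H₁` to `H₂`. -/
theorem stmt_16 (H₁ H₂ : Type) [Ring H₁] [HopfAlgebra K H₁]
    [Ring H₂] [HopfAlgebra K H₂] [FiniteDimensional K H₂]
    (A : Type) [CommRing A] [Algebra K A] (h : H₁ →ₐ[K] H₂ ⊗[K] A)
    (hfam : IsHopfFamily K H₁ H₂ A h)
    (huniv : ∀ (R : Type) [CommRing R] [Algebra K R] (ψ : H₁ →ₐ[K] H₂ ⊗[K] R),
      IsHopfFamily K H₁ H₂ R ψ →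
      ∃! ψHat : A →ₐ[K] R,
        ψ = (Algebra.TensorProduct.map (AlgHom.id K H₂) ψHat).comp h) :
    -- the map p ↦ (id ⊗ p)h lands in Hopf-algebra morphisms ...
    (∀ p : A →ₐ[K] K,
      IsBialgHom K H₁ H₂ ((Algebra.TensorProduct.rid K K H₂).toAlgHom.comp
        ((Algebra.TensorProduct.map (AlgHom.id K H₂) p).comp h))) ∧
    -- ... and is a bijection onto them:
    (∀ f : H₁ →ₐ[K] H₂, IsBialgHom K H₁ H₂ f →
      ∃! p : A →ₐ[K] K,
        (Algebra.TensorProduct.rid K K H₂).toAlgHom.comp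
          ((Algebra.TensorProduct.map (AlgHom.id K H₂) p).comp h) = f) := by
  constructor
  · intro p
    have hfam' := family_comp K h hfam p
    rw [← isHopfFamily_rid_symm_iff, rid_symm_rid_comp]
    exact hfam'
  · intro f hf
    have hψ : IsHopfFamily K H₁ H₂ K
        ((Algebra.TensorProduct.rid K K H₂).symm.toAlgHom.comp f) :=
      (isHopfFamily_rid_symm_iff K f).mpr hf
    obtain ⟨q, hq, huq⟩ := huniv K _ hψ
    refine ⟨q, ?_, ?_⟩
    · refine AlgHom.ext fun x => ?_
      have := congrArg (fun g : H₁ →ₐ[K] H₂ ⊗[K] K =>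
        (Algebra.TensorProduct.rid K K H₂) (g x)) hq
      simpa using this.symm
    · intro p hp
      refine huq p (AlgHom.ext fun x => ?_)
      have := congrArg (fun g : H₁ →ₐ[K] H₂ =>
        (Algebra.TensorProduct.rid K K H₂).symm (g x)) hp
      simpa using this.symm


end
end
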